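/- arXiv:math/0407405 — 8 statements merged into one kernel-verified Lean document; each statement's English description precedes it below -/
import Mathlib

section
/- Let X be a Polish space and let A ⊆ X be an Fσ set that is not a Gδ set. Then there exists a countable set A* ⊆ X with A ∩ A* = ∅ such that there is no set C ⊆ X which is both Fσ and Gδ with A ⊆ C and C ∩ A* = ∅. -/
open Set TopologicalSpace

/-- A set is Fσ iff it is a countable union of closed sets. -/
def IsFSigma {X : Type*} [TopologicalSpace X] (A : Set X) : Prop :=
  ∃ F : ℕ → Set X, (∀ n, IsClosed (F n)) ∧ A = ⋃ n, F n

/-- preimage of a Gδ set under a continuous map is Gδ. -/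
lemma isGδ_preimage {X Y : Type*} [TopologicalSpace X] [TopologicalSpace Y]
    {f : X → Y} (hf : Continuous f) {s : Set Y} (hs : IsGδ s) : IsGδ (f ⁻¹' s) := by
  obtain ⟨T, hTo, hTc, rfl⟩ := hs
  rw [sInter_eq_biInter, preimage_iInter₂]
  exact IsGδ.biInter_of_isOpen hTc fun t ht => (hTo t ht).preimage hf

/-- Locality lemma: if every point of an open set `W` has an open neighborhood `U`
with `S ∩ U` Gδ, then `S ∩ W` is Gδ. -/
lemma loc_isGδ {X : Type*} [TopologicalSpace X] [PolishSpace X]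
    (S W : Set X) (hW : IsOpen W)
    (h : ∀ x ∈ W, ∃ U : Set X, IsOpen U ∧ x ∈ U ∧ IsGδ (S ∩ U)) :
    IsGδ (S ∩ W) := by
  letI := upgradeIsCompletelyMetrizable X
  choose! U hUo hxU hG using h
  obtain ⟨T, hTc, hTU⟩ := isOpen_iUnion_countable (ι := W)
    (fun x : W => U x ∩ W) (fun x => (hUo x x.2).inter hW)
  have hcover : W ⊆ ⋃ i ∈ T, (U i ∩ W) := by
    rw [hTU]
    intro x hx
    exact mem_iUnion.2 ⟨⟨x, hx⟩, hxU x hx, hx⟩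
  have hkey : S ∩ W = W ∩ ⋂ i ∈ T, ((U (i : X) ∩ W)ᶜ ∪ (S ∩ U (i : X))) := by
    ext x
    constructor
    · rintro ⟨hxS, hxW⟩
      refine ⟨hxW, ?_⟩
      simp only [mem_iInter]
      intro i _
      by_cases hx : x ∈ U (i : X) ∩ W
      · exact Or.inr ⟨hxS, hx.1⟩
      · exact Or.inl hx
    · rintro ⟨hxW, hx⟩
      obtain ⟨i, hiT, hxi⟩ := mem_iUnion₂.1 (hcover hxW)
      simp only [mem_iInter] at hx
      rcases hx i hiT with h1 | h2
      · exact absurd hxi h1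
      · exact ⟨h2.1, hxW⟩
  rw [hkey]
  refine hW.isGδ.inter (IsGδ.biInter hTc fun i _ => ?_)
  exact (((hUo i i.2).inter hW).isClosed_compl.isGδ).union (hG i i.2)

/-- density of a set in a closed subspace, expressed via the subtype. -/
lemma dense_preimage_val {X : Type*} [TopologicalSpace X] {K S : Set X}
    (h : K ⊆ closure (S ∩ K)) : Dense (Subtype.val ⁻¹' S : Set K) := by
  rw [dense_iff_inter_open]
  rintro V hV ⟨x, hxV⟩
  obtain ⟨U, hU, rfl⟩ := isOpen_induced_iff.1 hV
  have hx : (x : X) ∈ closure (S ∩ K) := h x.2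
  obtain ⟨y, hyU, hyS, hyK⟩ := mem_closure_iff.1 hx U hU hxV
  exact ⟨⟨y, hyK⟩, hyU, hyS⟩

theorem stmt3 {X : Type*} [TopologicalSpace X] [PolishSpace X]
    (A : Set X) (hA : IsFSigma A) (hA' : ¬ IsGδ A) :
    ∃ Astar : Set X, Astar.Countable ∧ A ∩ Astar = ∅ ∧
      ¬ ∃ C : Set X, IsFSigma C ∧ IsGδ C ∧ A ⊆ C ∧ C ∩ Astar = ∅ := by
  letI := upgradeIsCompletelyMetrizable X
  -- the union of all open sets on which A is Gδ
  set U₀ : Set X := ⋃₀ {U : Set X | IsOpen U ∧ IsGδ (A ∩ U)} with hU₀def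
  have hU₀open : IsOpen U₀ := isOpen_sUnion fun U hU => hU.1
  have hmemU₀ : ∀ x : X, x ∈ U₀ ↔ ∃ U : Set X, IsOpen U ∧ x ∈ U ∧ IsGδ (A ∩ U) := by
    intro x
    constructor
    · rintro ⟨U, ⟨hUo, hUG⟩, hxU⟩
      exact ⟨U, hUo, hxU, hUG⟩
    · rintro ⟨U, hUo, hxU, hUG⟩
      exact ⟨U, ⟨hUo, hUG⟩, hxU⟩
  set K : Set X := U₀ᶜ with hKdef
  have hKclosed : IsClosed K := hU₀open.isClosed_compl
  -- A ∩ (V ∩ U₀) is Gδ for any open V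
  have hlocal : ∀ V : Set X, IsOpen V → IsGδ (A ∩ (V ∩ U₀)) := by
    intro V hV
    refine loc_isGδ A (V ∩ U₀) (hV.inter hU₀open) ?_
    rintro x ⟨hxV, hxU₀⟩
    obtain ⟨U, hUo, hxU, hUG⟩ := (hmemU₀ x).1 hxU₀
    exact ⟨U, hUo, hxU, hUG⟩
  -- K is nonempty
  have hKne : K.Nonempty := by
    rcases K.eq_empty_or_nonempty with hK | hK
    · exfalso
      apply hA'
      have hU₀univ : U₀ = univ := by
        rw [← compl_empty, ← hK, hKdef, compl_compl]
      have := hlocal univ isOpen_univ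
      rwa [univ_inter, hU₀univ, inter_univ] at this
    · exact hK
  -- A ∩ K is dense in K
  have hd1 : K ⊆ closure (A ∩ K) := by
    intro x hx
    rw [mem_closure_iff]
    intro U hU hxU
    by_contra hcon
    rw [not_nonempty_iff_eq_empty] at hcon
    have hAU : A ∩ U ⊆ U₀ := by
      rintro y ⟨hyA, hyU⟩
      by_contra hyK
      exact absurd (show y ∈ U ∩ (A ∩ K) from ⟨hyU, hyA, hyK⟩) (by rw [hcon]; exact id)
    have hAUeq : A ∩ U = A ∩ (U ∩ U₀) := by
      ext y
      constructor
      · rintro ⟨h1, h2⟩; exact ⟨h1, h2, hAU ⟨h1, h2⟩⟩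
      · rintro ⟨h1, h2, _⟩; exact ⟨h1, h2⟩
    have : IsGδ (A ∩ U) := hAUeq ▸ hlocal U hU
    exact hx ((hmemU₀ x).2 ⟨U, hU, hxU, this⟩)
  -- K \ A is dense in K
  have hd2 : K ⊆ closure (K \ A) := by
    intro x hx
    rw [mem_closure_iff]
    intro U hU hxU
    by_contra hcon
    rw [not_nonempty_iff_eq_empty] at hcon
    have hUK : U ∩ K ⊆ A := by
      rintro y ⟨hyU, hyK⟩
      by_contra hyA
      exact absurd (show y ∈ U ∩ (K \ A) from ⟨hyU, hyK, hyA⟩) (by rw [hcon]; exact id)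
    have hAUeq : A ∩ U = (A ∩ (U ∩ U₀)) ∪ (U ∩ K) := by
      ext y
      constructor
      · rintro ⟨hyA, hyU⟩
        by_cases hy : y ∈ U₀
        · exact Or.inl ⟨hyA, hyU, hy⟩
        · exact Or.inr ⟨hyU, hy⟩
      · rintro (⟨h1, h2, _⟩ | h)
        · exact ⟨h1, h2⟩
        · exact ⟨hUK h, h.1⟩
    have : IsGδ (A ∩ U) := by
      rw [hAUeq]
      exact (hlocal U hU).union (hU.isGδ.inter hKclosed.isGδ)
    exact hx ((hmemU₀ x).2 ⟨U, hU, hxU, this⟩)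
  -- choose a countable dense subset of K \ A
  obtain ⟨t, htc, htd⟩ := TopologicalSpace.exists_countable_dense (K \ A : Set X)
  refine ⟨Subtype.val '' t, htc.image _, ?_, ?_⟩
  · -- A ∩ Astar = ∅
    rw [eq_empty_iff_forall_notMem]
    rintro x ⟨hxA, ⟨y, hyt, rfl⟩⟩
    exact y.2.2 hxA
  · -- no separating Δ⁰₂ set
    rintro ⟨C, hCF, hCG, hAC, hCA⟩
    -- Astar ⊆ K \ A, and closure Astar ⊇ K
    have hAstarsub : Subtype.val '' t ⊆ K \ A := by
      rintro x ⟨y, _, rfl⟩; exact y.2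
    have hKsub : K ⊆ closure (Subtype.val '' t) := by
      have h1 : K \ A ⊆ closure (Subtype.val '' t) := by
        intro y hy
        have : (⟨y, hy⟩ : (K \ A : Set X)) ∈ closure t := htd _
        have := image_closure_subset_closure_image
          (f := (Subtype.val : (K \ A : Set X) → X)) continuous_subtype_val
          ⟨⟨y, hy⟩, this, rfl⟩
        exact this
      calc K ⊆ closure (K \ A) := hd2
        _ ⊆ closure (closure (Subtype.val '' t)) := closure_mono h1
        _ = closure (Subtype.val '' t) := closure_closure
    -- pass to the closed subspace K, a nonempty Polish (hence Baire) space
    haveI : CompleteSpace K := hKclosed.completeSpace_coe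
    have hCc : IsGδ Cᶜ := by
      obtain ⟨F, hFcl, rfl⟩ := hCF
      rw [compl_iUnion]
      exact IsGδ.iInter_of_isOpen fun n => (hFcl n).isOpen_compl
    have d₁ : Dense (Subtype.val ⁻¹' C : Set K) := by
      apply dense_preimage_val
      intro x hx
      exact closure_mono (inter_subset_inter_left K hAC) (hd1 hx)
    have d₂ : Dense (Subtype.val ⁻¹' Cᶜ : Set K) := by
      apply dense_preimage_val
      intro x hx
      refine closure_mono ?_ (hKsub hx)
      rintro y hy
      refine ⟨?_, (hAstarsub hy).1⟩
      intro hyC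
      exact absurd (show y ∈ C ∩ Subtype.val '' t from ⟨hyC, hy⟩)
        (by rw [hCA]; exact id)
    have g₁ : IsGδ (Subtype.val ⁻¹' C : Set K) := isGδ_preimage continuous_subtype_val hCG
    have g₂ : IsGδ (Subtype.val ⁻¹' Cᶜ : Set K) := isGδ_preimage continuous_subtype_val hCc
    haveI : Nonempty K := hKne.to_subtype
    obtain ⟨z, hz₁, hz₂⟩ := (d₁.inter_of_Gδ g₁ g₂ d₂).nonempty
    exact hz₂ hz₁
end

section
/- Let n ≥ 1 and let Q ⊆ 2^ω be Π⁰_n-complete, i.e., Q ∈ Π⁰_n(2^ω) and for every B ∈ Π⁰_n(2^ω) there exists a continuous f : 2^ω → 2^ω with f⁻¹(Q) = B. In the product space (2^ω)^ω define Q₀ = {(x_k)_{k<ω} : ∃k even with x_k ∈ Q and x_m ∉ Q for all m < k} and Q₁ = {(x_k)_{k<ω} : ∃k odd with x_k ∈ Q and x_m ∉ Q for all m < k}. Then Q₀ and Q₁ are disjoint sets in Σ⁰_{n+1}((2^ω)^ω) and there is no set C in Δ⁰_{n+1}((2^ω)^ω) with Q₀ ⊆ C and C ∩ Q₁ = ∅.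 -/
/-- The Borel hierarchy: `SigmaZero α A` means `A` is in the Borel class Σ⁰_α.
Σ⁰₁ is the collection of open sets; for α > 1, Σ⁰_α consists of countable unions
⋃ k, A k where each A k is the complement of a Σ⁰_{β k} set for some 1 ≤ β k < α. -/
inductive SigmaZero {X : Type*} [TopologicalSpace X] : Ordinal.{0} → Set X → Prop
  | isOpen {A : Set X} (h : IsOpen A) : SigmaZero 1 A
  | iUnion {α : Ordinal.{0}} (hα : 1 < α) (A : ℕ → Set X) (β : ℕ → Ordinal.{0})
      (hβ1 : ∀ k, 1 ≤ β k) (hβ : ∀ k, β k < α)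
      (h : ∀ k, SigmaZero (β k) (A k)ᶜ) : SigmaZero α (⋃ k, A k)

/-- `A` is Π⁰_α iff its complement is Σ⁰_α. -/
def PiZero {X : Type*} [TopologicalSpace X] (α : Ordinal.{0}) (A : Set X) : Prop :=
  SigmaZero α Aᶜ

/-- `A` is Δ⁰_α iff it is both Σ⁰_α and Π⁰_α. -/
def DeltaZero {X : Type*} [TopologicalSpace X] (α : Ordinal.{0}) (A : Set X) : Prop :=
  SigmaZero α A ∧ PiZero α A

variable {X Y : Type*} [TopologicalSpace X] [TopologicalSpace Y]

theorem SigmaZero.one_le {α : Ordinal} {A : Set X} (h : SigmaZero α A) : 1 ≤ α := by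
  cases h with
  | isOpen h => exact le_refl _
  | iUnion hα A β hβ1 hβ h => exact le_of_lt hα

theorem SigmaZero.isOpen_of_one {A : Set X} (h : SigmaZero 1 A) : IsOpen A := by
  generalize hα : (1 : Ordinal) = α at h
  cases h with
  | isOpen h => exact h
  | iUnion hα' A β hβ1 hβ h => exact absurd (hα ▸ hα') (lt_irrefl _)

theorem SigmaZero.preimage {α : Ordinal} {A : Set Y} (h : SigmaZero α A)
    {f : X → Y} (hf : Continuous f) : SigmaZero α (f ⁻¹' A) := by
  induction h with
  | isOpen h => exact .isOpen (h.preimage hf)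
  | iUnion hα A β hβ1 hβ h ih =>
      rw [Set.preimage_iUnion]
      exact .iUnion hα _ β hβ1 hβ (fun k => by
        rw [← Set.preimage_compl]; exact ih k)

/-- In a space where every open set is Fσ, the classes are monotone. -/
theorem SigmaZero.mono
    (hX : ∀ U : Set X, IsOpen U → ∃ F : ℕ → Set X, (∀ k, IsClosed (F k)) ∧ U = ⋃ k, F k)
    {α α' : Ordinal} {A : Set X} (h : SigmaZero α A) (hle : α ≤ α') : SigmaZero α' A := by
  rcases eq_or_lt_of_le hle with rfl | hlt
  · exact h
  have h1 : 1 < α' := lt_of_le_of_lt h.one_le hlt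
  cases h with
  | isOpen h =>
      obtain ⟨F, hF, rfl⟩ := hX _ h
      exact .iUnion h1 F (fun _ => 1) (fun _ => le_refl _) (fun _ => h1)
        (fun k => .isOpen (hF k).isOpen_compl)
  | iUnion hα A β hβ1 hβ h =>
      exact .iUnion h1 A β hβ1 (fun k => lt_trans (hβ k) hlt) h

theorem fsigma_of_pseudoMetrizable [TopologicalSpace.PseudoMetrizableSpace X] :
    ∀ U : Set X, IsOpen U → ∃ F : ℕ → Set X, (∀ k, IsClosed (F k)) ∧ U = ⋃ k, F k := by
  letI := TopologicalSpace.pseudoMetrizableSpacePseudoMetric X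
  intro U hU
  have hgd : IsGδ Uᶜ := (isClosed_compl_iff.mpr hU).isGδ
  obtain ⟨T, hTopen, hTc, hTeq⟩ := hgd
  rcases T.eq_empty_or_nonempty with rfl | hne
  · refine ⟨fun _ => ∅, fun _ => isClosed_empty, ?_⟩
    simp at hTeq
    simp [hTeq]
  · obtain ⟨f, hf⟩ := hTc.exists_eq_range hne
    refine ⟨fun k => (f k)ᶜ, fun k => ?_, ?_⟩
    · exact (hTopen _ (by rw [hf]; exact Set.mem_range_self k)).isClosed_compl
    · rw [← compl_compl U, hTeq, hf, Set.sInter_range, Set.compl_iInter]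

theorem sigmaZero_dest {α : Ordinal} {S : Set X} (h1 : 1 < α) (hS : SigmaZero α S) :
    ∃ (C : ℕ → Set X) (β : ℕ → Ordinal),
      (∀ j, 1 ≤ β j) ∧ (∀ j, β j < α) ∧ (∀ j, SigmaZero (β j) (C j)ᶜ) ∧ S = ⋃ j, C j := by
  cases hS with
  | isOpen h => exact absurd h1 (lt_irrefl _)
  | iUnion hα C β hβ1 hβ hC => exact ⟨C, β, hβ1, hβ, hC, rfl⟩

theorem SigmaZero.iUnion_closed {α : Ordinal} {A : ℕ → Set X}
    (h : ∀ k, SigmaZero α (A k)) : SigmaZero α (⋃ k, A k) := by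
  rcases eq_or_lt_of_le (h 0).one_le with rfl | h1
  · exact .isOpen (isOpen_iUnion fun k => (h k).isOpen_of_one)
  · have hdat : ∀ k, ∃ (B : ℕ → Set X) (β : ℕ → Ordinal),
        (∀ j, 1 ≤ β j) ∧ (∀ j, β j < α) ∧ (∀ j, SigmaZero (β j) (B j)ᶜ) ∧ A k = ⋃ j, B j := by
      intro k
      exact sigmaZero_dest h1 (h k)
    choose B β hβ1 hβ hB hABeq using hdat
    have : (⋃ k, A k) = ⋃ c : ℕ, B (Nat.pairEquiv.symm c).1 (Nat.pairEquiv.symm c).2 := by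
      rw [Nat.pairEquiv.symm.surjective.iUnion_comp
        (g := fun p : ℕ × ℕ => B p.1 p.2), Set.iUnion_prod' (fun p : ℕ × ℕ => B p.1 p.2)]
      simp only [← hABeq]
    rw [this]
    exact .iUnion h1 _ _ (fun c => hβ1 _ _) (fun c => hβ _ _) (fun c => hB _ _)

theorem SigmaZero.union {α : Ordinal} {A B : Set X}
    (hA : SigmaZero α A) (hB : SigmaZero α B) : SigmaZero α (A ∪ B) := by
  have : A ∪ B = ⋃ k : ℕ, (if k = 0 then A else B) := by
    ext x; simp [Set.mem_iUnion]
    constructor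
    · rintro (h | h)
      · exact ⟨0, by simpa⟩
      · exact ⟨1, by simpa⟩
    · rintro ⟨k, hk⟩
      by_cases h : k = 0
      · left; simpa [h] using hk
      · right; simpa [h] using hk
  rw [this]
  exact iUnion_closed fun k => by split <;> assumption

theorem SigmaZero.inter
    (hX : ∀ U : Set X, IsOpen U → ∃ F : ℕ → Set X, (∀ k, IsClosed (F k)) ∧ U = ⋃ k, F k)
    {α : Ordinal} {A B : Set X}
    (hA : SigmaZero α A) (hB : SigmaZero α B) : SigmaZero α (A ∩ B) := by
  rcases eq_or_lt_of_le hA.one_le with rfl | h1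
  · exact .isOpen (hA.isOpen_of_one.inter hB.isOpen_of_one)
  · obtain ⟨C, β, hβ1, hβ, hC, rfl⟩ := sigmaZero_dest h1 hA
    obtain ⟨D, γ, hγ1, hγ, hD, rfl⟩ := sigmaZero_dest h1 hB
    have key : ∀ i j : ℕ, SigmaZero (max (β i) (γ j)) (C i ∩ D j)ᶜ := fun i j => by
      rw [Set.compl_inter]
      exact ((hC i).mono hX (le_max_left _ _)).union ((hD j).mono hX (le_max_right _ _))
    have heq : (⋃ j, C j) ∩ (⋃ j, D j)
        = ⋃ c : ℕ, (C (Nat.pairEquiv.symm c).1 ∩ D (Nat.pairEquiv.symm c).2) := by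
      ext x
      simp only [Set.mem_inter_iff, Set.mem_iUnion]
      constructor
      · rintro ⟨⟨i, hi⟩, ⟨j, hj⟩⟩
        exact ⟨Nat.pairEquiv (i, j), by simpa [Equiv.symm_apply_apply] using And.intro hi hj⟩
      · rintro ⟨c, hc1, hc2⟩
        exact ⟨⟨_, hc1⟩, ⟨_, hc2⟩⟩
    rw [heq]
    exact .iUnion h1 _ (fun c => max (β (Nat.pairEquiv.symm c).1) (γ (Nat.pairEquiv.symm c).2))
      (fun c => le_trans (hβ1 _) (le_max_left _ _))
      (fun c => max_lt (hβ _) (hγ _))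
      (fun c => key _ _)

theorem ord_lt_add_one (α : Ordinal) : α < α + 1 := by
  rw [Ordinal.add_one_eq_succ]; exact Order.lt_succ _

theorem ord_le_of_lt_add_one {β α : Ordinal} (h : β < α + 1) : β ≤ α := by
  rw [Ordinal.add_one_eq_succ, Order.lt_succ_iff] at h; exact h

theorem one_lt_add_one {α : Ordinal} (hα : 1 ≤ α) : 1 < α + 1 :=
  lt_of_le_of_lt hα (ord_lt_add_one α)

theorem pi_subset_sigma_succ {α : Ordinal} {A : Set X} (h : SigmaZero α Aᶜ) :
    SigmaZero (α + 1) A := by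
  have : A = ⋃ _k : ℕ, A := (Set.iUnion_const A).symm
  rw [this]
  exact .iUnion (one_lt_add_one h.one_le) _ (fun _ => α) (fun _ => h.one_le)
    (fun _ => ord_lt_add_one α) (fun _ => h)

theorem sigmaZero_empty {α : Ordinal}
    (hX : ∀ U : Set X, IsOpen U → ∃ F : ℕ → Set X, (∀ k, IsClosed (F k)) ∧ U = ⋃ k, F k)
    (hα : 1 ≤ α) : SigmaZero α (∅ : Set X) :=
  (SigmaZero.isOpen isOpen_empty).mono hX hα

theorem sigmaZero_univ {α : Ordinal}
    (hX : ∀ U : Set X, IsOpen U → ∃ F : ℕ → Set X, (∀ k, IsClosed (F k)) ∧ U = ⋃ k, F k)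
    (hα : 1 ≤ α) : SigmaZero α (Set.univ : Set X) :=
  (SigmaZero.isOpen isOpen_univ).mono hX hα

/-- The set of points whose first entry into the family `W` happens at an index
satisfying `p`. -/
def FirstHit (p : ℕ → Prop) (W : ℕ → Set X) : Set X :=
  {x | ∃ k, p k ∧ x ∈ W k ∧ ∀ m < k, x ∉ W m}

theorem firstHit_sigma
    (hX : ∀ U : Set X, IsOpen U → ∃ F : ℕ → Set X, (∀ k, IsClosed (F k)) ∧ U = ⋃ k, F k)
    {α : Ordinal} (p : ℕ → Prop) (W : ℕ → Set X) (hW : ∀ k, SigmaZero α (W k)ᶜ) :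
    SigmaZero (α + 1) (FirstHit p W) := by
  classical
  have hα : 1 ≤ α := (hW 0).one_le
  have hα1 : (1:Ordinal) ≤ α + 1 := le_of_lt (one_lt_add_one hα)
  have hinter : ∀ k, SigmaZero (α + 1) (⋂ m ∈ Finset.range k, (W m)ᶜ) := by
    intro k
    induction k with
    | zero =>
        convert sigmaZero_univ hX hα1 using 1
        simp
    | succ k ih =>
        have : (⋂ m ∈ Finset.range (k+1), (W m)ᶜ) =
            (⋂ m ∈ Finset.range k, (W m)ᶜ) ∩ (W k)ᶜ := by
          rw [Finset.range_add_one, Finset.set_biInter_insert, Set.inter_comm]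
        rw [this]
        exact ih.inter hX ((hW k).mono hX (le_of_lt (ord_lt_add_one α)))
  have heq : FirstHit p W = ⋃ k, if p k then W k ∩ ⋂ m ∈ Finset.range k, (W m)ᶜ else ∅ := by
    ext x
    simp only [FirstHit, Set.mem_setOf_eq, Set.mem_iUnion]
    constructor
    · rintro ⟨k, hpk, hxk, hfirst⟩
      refine ⟨k, ?_⟩
      rw [if_pos hpk]
      exact ⟨hxk, by simp only [Set.mem_iInter, Finset.mem_range]; exact fun m hm => hfirst m hm⟩
    · rintro ⟨k, hk⟩
      by_cases hpk : p k
      · rw [if_pos hpk] at hk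
        refine ⟨k, hpk, hk.1, fun m hm => ?_⟩
        have := hk.2
        simp only [Set.mem_iInter, Finset.mem_range] at this
        exact this m hm
      · rw [if_neg hpk] at hk; exact absurd hk (Set.notMem_empty x)
  rw [heq]
  refine SigmaZero.iUnion_closed fun k => ?_
  split
  · exact (pi_subset_sigma_succ (hW k)).inter hX (hinter k)
  · exact sigmaZero_empty hX hα1

abbrev Cnt := ℕ → Bool

/-- Basic clopen cylinder determined by the first `p.1` values. -/
def cylS (p : Σ n : ℕ, Fin n → Bool) : Set Cnt :=
  {x | ∀ i : Fin p.1, x i = p.2 i}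

theorem cylS_isOpen (p : Σ n : ℕ, Fin n → Bool) : IsOpen (cylS p) := by
  have : cylS p = ⋂ i : Fin p.1, {x : Cnt | x i = p.2 i} := by
    ext x; simp [cylS]
  rw [this]
  refine isOpen_iInter_of_finite fun i => ?_
  have : {x : Cnt | x i = p.2 i} = (fun x : Cnt => x (i : ℕ)) ⁻¹' {p.2 i} := rfl
  rw [this]
  exact (continuous_apply (i : ℕ)).isOpen_preimage _ (isOpen_discrete _)

theorem cylS_basis {A : Set Cnt} (hA : IsOpen A) {x : Cnt} (hx : x ∈ A) :
    ∃ p, x ∈ cylS p ∧ cylS p ⊆ A := by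
  obtain ⟨I, u, h, hsub⟩ := isOpen_pi_iff.mp hA x hx
  refine ⟨⟨I.sup id + 1, fun i => x i⟩, fun i => rfl, fun z hz => hsub ?_⟩
  intro a ha
  have haI : a < I.sup id + 1 := Nat.lt_succ_of_le (Finset.le_sup (f := id) ha)
  have := hz ⟨a, haI⟩
  simp only [cylS, Set.mem_setOf_eq] at this
  rw [this]
  exact (h a ha).2

/-- decoder of a point of Cantor space into a sequence of points -/
def dec (y : Cnt) (k : ℕ) : Cnt := fun m => y (Nat.pairEquiv (k, m))

theorem dec_continuous (k : ℕ) : Continuous fun y => dec y k :=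
  continuous_pi fun _ => continuous_apply _

theorem dec_surjective (s : ℕ → Cnt) : ∃ y, ∀ k, dec y k = s k := by
  refine ⟨fun c => s (Nat.pairEquiv.symm c).1 (Nat.pairEquiv.symm c).2, fun k => ?_⟩
  funext m
  simp [dec]

/-- universal sets for the finite levels of the Borel hierarchy on Cantor space;
`Unv σ m` is universal for `Σ⁰_{m+1}`. -/
def Unv (σ : ℕ → Σ n : ℕ, Fin n → Bool) : ℕ → Set (Cnt × Cnt)
  | 0 => ⋃ k, {y : Cnt | y k = true} ×ˢ cylS (σ k)
  | (m+1) => {p | ∃ k, (dec p.1 k, p.2) ∉ Unv σ m}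

theorem cnt_fsigma : ∀ U : Set Cnt, IsOpen U → ∃ F : ℕ → Set Cnt,
    (∀ k, IsClosed (F k)) ∧ U = ⋃ k, F k := fsigma_of_pseudoMetrizable

theorem cnt2_fsigma : ∀ U : Set (Cnt × Cnt), IsOpen U → ∃ F : ℕ → Set (Cnt × Cnt),
    (∀ k, IsClosed (F k)) ∧ U = ⋃ k, F k := fsigma_of_pseudoMetrizable

theorem unv_sigma (σ : ℕ → Σ n : ℕ, Fin n → Bool) (m : ℕ) :
    SigmaZero (((m+1 : ℕ) : Ordinal)) (Unv σ m) := by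
  induction m with
  | zero =>
      have : ((0+1 : ℕ) : Ordinal) = 1 := by norm_num
      rw [this]
      refine SigmaZero.isOpen (isOpen_iUnion fun k => IsOpen.prod ?_ (cylS_isOpen _))
      have : {y : Cnt | y k = true} = (fun y : Cnt => y k) ⁻¹' {true} := rfl
      rw [this]
      exact (continuous_apply k).isOpen_preimage _ (isOpen_discrete _)
  | succ m ih =>
      have heq : Unv σ (m+1) = ⋃ k, ((fun p : Cnt × Cnt => (dec p.1 k, p.2)) ⁻¹' (Unv σ m))ᶜ := by
        ext p
        simp [Unv, Set.mem_iUnion]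
      rw [heq]
      refine SigmaZero.iUnion ?_ _ (fun _ => ((m+1 : ℕ) : Ordinal)) (fun _ => ?_) (fun _ => ?_)
        (fun k => ?_)
      · have : (1:ℕ) < m+1+1 := by omega
        exact_mod_cast this
      · show (1:Ordinal) ≤ ((m+1:ℕ):Ordinal)
        have : (1:ℕ) ≤ m+1 := by omega
        exact_mod_cast this
      · show ((m+1:ℕ):Ordinal) < ((m+1+1:ℕ):Ordinal)
        have : m+1 < m+1+1 := by omega
        exact_mod_cast this
      · rw [compl_compl]
        exact ih.preimage (((dec_continuous k).comp continuous_fst).prodMk continuous_snd)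

theorem unv_univ (σ : ℕ → Σ n : ℕ, Fin n → Bool) (hσ : Function.Surjective σ) (m : ℕ) :
    ∀ A : Set Cnt, SigmaZero (((m+1 : ℕ) : Ordinal)) A → ∃ y, A = {x | (y, x) ∈ Unv σ m} := by
  induction m with
  | zero =>
      intro A hA
      have hA : IsOpen A := by
        have : ((0+1 : ℕ) : Ordinal) = 1 := by norm_num
        rw [this] at hA
        exact hA.isOpen_of_one
      classical
      refine ⟨fun k => decide (cylS (σ k) ⊆ A), ?_⟩
      ext x
      simp only [Unv, Set.mem_iUnion, Set.mem_setOf_eq, Set.mem_prod, decide_eq_true_eq]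
      constructor
      · intro hx
        obtain ⟨p, hxp, hpA⟩ := cylS_basis hA hx
        obtain ⟨k, rfl⟩ := hσ p
        exact ⟨k, hpA, hxp⟩
      · rintro ⟨k, hsub, hxk⟩
        exact hsub hxk
  | succ m ih =>
      intro A hA
      have h1 : (1 : Ordinal) < ((m+1+1 : ℕ) : Ordinal) := by
        have : (1:ℕ) < m+1+1 := by omega
        exact_mod_cast this
      obtain ⟨C, β, hβ1, hβ, hC, rfl⟩ := sigmaZero_dest h1 hA
      have hCm : ∀ j, SigmaZero (((m+1 : ℕ) : Ordinal)) (C j)ᶜ := by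
        intro j
        refine (hC j).mono cnt_fsigma (ord_le_of_lt_add_one ?_)
        have : ((m+1+1 : ℕ) : Ordinal) = ((m+1 : ℕ) : Ordinal) + 1 := Nat.cast_add_one (m+1)
        rw [← this]
        exact hβ j
      have hyk : ∀ j, ∃ y, (C j)ᶜ = {x | (y, x) ∈ Unv σ m} := fun j => ih _ (hCm j)
      choose ys hys using hyk
      obtain ⟨y, hy⟩ := dec_surjective ys
      refine ⟨y, ?_⟩
      ext x
      simp only [Set.mem_iUnion, Unv, Set.mem_setOf_eq, hy]
      have hmem : ∀ (j : ℕ), x ∈ (C j)ᶜ ↔ (ys j, x) ∈ Unv σ m := fun j => by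
        have := Set.ext_iff.mp (hys j) x
        simpa using this
      constructor
      · rintro ⟨j, hj⟩
        refine ⟨j, fun hcon => ?_⟩
        exact ((hmem j).mpr hcon) hj
      · rintro ⟨j, hj⟩
        refine ⟨j, ?_⟩
        by_contra hcon
        exact hj ((hmem j).mp hcon)

/-- `Q₀`: sequences whose first coordinate landing in `Q` does so at an even index. -/
def Qeven (Q : Set (ℕ → Bool)) : Set (ℕ → (ℕ → Bool)) :=
  {x | ∃ k, Even k ∧ x k ∈ Q ∧ ∀ m < k, x m ∉ Q}

/-- `Q₁`: sequences whose first coordinate landing in `Q` does so at an odd index. -/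
def Qodd (Q : Set (ℕ → Bool)) : Set (ℕ → (ℕ → Bool)) :=
  {x | ∃ k, Odd k ∧ x k ∈ Q ∧ ∀ m < k, x m ∉ Q}

theorem stmt6 (n : ℕ) (hn : 1 ≤ n) (Q : Set (ℕ → Bool))
    (hQ : PiZero (n : Ordinal) Q)
    (hcomplete : ∀ B : Set (ℕ → Bool), PiZero (n : Ordinal) B →
      ∃ f : (ℕ → Bool) → (ℕ → Bool), Continuous f ∧ f ⁻¹' Q = B) :
    Qeven Q ∩ Qodd Q = ∅ ∧
    SigmaZero ((n : Ordinal) + 1) (Qeven Q) ∧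
    SigmaZero ((n : Ordinal) + 1) (Qodd Q) ∧
    ¬ ∃ C : Set (ℕ → (ℕ → Bool)), DeltaZero ((n : Ordinal) + 1) C ∧
        Qeven Q ⊆ C ∧ C ∩ Qodd Q = ∅ := by
  classical
  set o : Ordinal := (n : Ordinal) with ho
  have ho1 : (1 : Ordinal) ≤ o := by
    show (1:Ordinal) ≤ ((n:ℕ):Ordinal)
    exact_mod_cast hn
  have hfsP : ∀ U : Set (ℕ → Cnt), IsOpen U → ∃ F : ℕ → Set (ℕ → Cnt),
      (∀ k, IsClosed (F k)) ∧ U = ⋃ k, F k := fsigma_of_pseudoMetrizable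
  -- disjointness
  have hdisj : Qeven Q ∩ Qodd Q = ∅ := by
    ext x
    simp only [Set.mem_inter_iff, Set.mem_empty_iff_false, iff_false, not_and]
    rintro ⟨k, hke, hxk, hkmin⟩ ⟨j, hjo, hxj, hjmin⟩
    rcases Nat.lt_trichotomy k j with h | rfl | h
    · exact hjmin k h hxk
    · exact (Nat.not_odd_iff_even.mpr hke) hjo
    · exact hkmin j h hxj
  -- Σ⁰_{n+1}-ness of Qeven, Qodd
  have hWcoord : ∀ k, SigmaZero o ((fun x : ℕ → Cnt => x k) ⁻¹' Q)ᶜ := by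
    intro k
    have := (hQ : SigmaZero o Qᶜ).preimage (continuous_apply (A := fun _ : ℕ => Cnt) k)
    rwa [Set.preimage_compl] at this
  have hQev : Qeven Q = FirstHit Even (fun k => (fun x : ℕ → Cnt => x k) ⁻¹' Q) := rfl
  have hQod : Qodd Q = FirstHit Odd (fun k => (fun x : ℕ → Cnt => x k) ⁻¹' Q) := rfl
  have hQevS : SigmaZero (o + 1) (Qeven Q) := by
    rw [hQev]; exact firstHit_sigma hfsP _ _ hWcoord
  have hQodS : SigmaZero (o + 1) (Qodd Q) := by
    rw [hQod]; exact firstHit_sigma hfsP _ _ hWcoord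
  refine ⟨hdisj, hQevS, hQodS, ?_⟩
  -- the non-separation part
  rintro ⟨C, ⟨hCs, hCp⟩, hQ0C, hCQ1⟩
  obtain ⟨σ, hσ⟩ := exists_surjective_nat (Σ n : ℕ, Fin n → Bool)
  have hno : ((n+1 : ℕ) : Ordinal) = o + 1 := Nat.cast_add_one n
  have hUs : SigmaZero (o + 1) (Unv σ n) := by rw [← hno]; exact unv_sigma σ n
  -- the diagonal pair
  set A : Set Cnt := {x | (dec x 0, x) ∈ Unv σ n} with hAdef
  set B : Set Cnt := {x | (dec x 1, x) ∈ Unv σ n} with hBdef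
  have hdiag : ∀ k : ℕ, Continuous fun x : Cnt => (dec x k, x) :=
    fun k => (dec_continuous k).prodMk continuous_id
  have hAs : SigmaZero (o + 1) A := hUs.preimage (hdiag 0)
  have hBs : SigmaZero (o + 1) B := hUs.preimage (hdiag 1)
  have h1o : (1 : Ordinal) < o + 1 := one_lt_add_one ho1
  obtain ⟨P, βP, hβP1, hβP, hP, hAeq⟩ := sigmaZero_dest h1o hAs
  obtain ⟨R, βR, hβR1, hβR, hR, hBeq⟩ := sigmaZero_dest h1o hBs
  have hPo : ∀ j, SigmaZero o (P j)ᶜ :=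
    fun j => (hP j).mono cnt_fsigma (ord_le_of_lt_add_one (hβP j))
  have hRo : ∀ j, SigmaZero o (R j)ᶜ :=
    fun j => (hR j).mono cnt_fsigma (ord_le_of_lt_add_one (hβR j))
  -- the interleaved family
  set W : ℕ → Set Cnt := fun j => if Even j then P (j / 2) else R (j / 2) with hWdef
  have hWo : ∀ j, SigmaZero o (W j)ᶜ := by
    intro j
    simp only [hWdef]
    split
    · exact hPo _
    · exact hRo _
  -- reductions to Q
  have hg : ∀ j, ∃ g : Cnt → Cnt, Continuous g ∧ g ⁻¹' Q = W j := fun j => hcomplete _ (hWo j)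
  choose g hgc hgp using hg
  set G : Cnt → (ℕ → Cnt) := fun x j => g j x with hGdef
  have hGc : Continuous G := continuous_pi fun j => hgc j
  have hGW : ∀ j x, G x j ∈ Q ↔ x ∈ W j := by
    intro j x
    rw [← hgp j]
    exact Iff.rfl
  set Astar : Set Cnt := FirstHit Even W with hAstar
  set Bstar : Set Cnt := FirstHit Odd W with hBstar
  have hAstarQ : ∀ x ∈ Astar, G x ∈ Qeven Q := by
    rintro x ⟨k, hke, hxk, hmin⟩
    exact ⟨k, hke, (hGW k x).mpr hxk, fun m hm hq => hmin m hm ((hGW m x).mp hq)⟩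
  have hBstarQ : ∀ x ∈ Bstar, G x ∈ Qodd Q := by
    rintro x ⟨k, hko, hxk, hmin⟩
    exact ⟨k, hko, (hGW k x).mpr hxk, fun m hm hq => hmin m hm ((hGW m x).mp hq)⟩
  -- the separating set pulled back
  set D : Set Cnt := G ⁻¹' C with hDdef
  have hDs : SigmaZero (o + 1) D := hCs.preimage hGc
  have hDp : SigmaZero (o + 1) Dᶜ := by
    have := (hCp : SigmaZero (o+1) Cᶜ).preimage hGc
    rwa [Set.preimage_compl] at this
  have hAstarD : Astar ⊆ D := fun x hx => hQ0C (hAstarQ x hx)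
  have hBstarD : ∀ x ∈ Bstar, x ∉ D := by
    intro x hx hxD
    have : G x ∈ C ∩ Qodd Q := ⟨hxD, hBstarQ x hx⟩
    rw [hCQ1] at this
    exact this
  -- find the diagonal parameter
  obtain ⟨y0, hy0⟩ := unv_univ σ hσ n Dᶜ (by rw [hno]; exact hDp)
  obtain ⟨y1, hy1⟩ := unv_univ σ hσ n D (by rw [hno]; exact hDs)
  obtain ⟨y, hy⟩ := dec_surjective (fun k => if k = 0 then y0 else y1)
  have hyA : y ∈ A ↔ y ∉ D := by
    have h0 : dec y 0 = y0 := by rw [hy 0]; simp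
    have hiff := Set.ext_iff.mp hy0 y
    simp only [Set.mem_compl_iff, Set.mem_setOf_eq] at hiff
    have hA' : y ∈ A ↔ (y0, y) ∈ Unv σ n := by
      rw [hAdef]
      simp only [Set.mem_setOf_eq, h0]
    rw [hA']
    exact hiff.symm
  have hyB : y ∈ B ↔ y ∈ D := by
    have h1 : dec y 1 = y1 := by rw [hy 1]; simp
    have hiff := Set.ext_iff.mp hy1 y
    simp only [Set.mem_setOf_eq] at hiff
    have hB' : y ∈ B ↔ (y1, y) ∈ Unv σ n := by
      rw [hBdef]
      simp only [Set.mem_setOf_eq, h1]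
    rw [hB']
    exact hiff.symm
  -- membership transfer: A ∪ B ⊆ Astar ∪ Bstar
  have hfirst : ∀ x : Cnt, x ∈ A ∨ x ∈ B → x ∈ Astar ∨ x ∈ Bstar := by
    intro x hx
    have hex : ∃ j, x ∈ W j := by
      rcases hx with hx | hx
      · rw [hAeq] at hx
        obtain ⟨k, hk⟩ := Set.mem_iUnion.mp hx
        refine ⟨2 * k, ?_⟩
        have : W (2 * k) = P k := by
          simp only [hWdef, if_pos (even_two_mul k), Nat.mul_div_cancel_left k (by norm_num : 0 < 2)]
        rw [this]; exact hk
      · rw [hBeq] at hx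
        obtain ⟨k, hk⟩ := Set.mem_iUnion.mp hx
        refine ⟨2 * k + 1, ?_⟩
        have hodd : ¬ Even (2 * k + 1) := by simp [Nat.even_add_one]
        have : W (2 * k + 1) = R k := by
          simp only [hWdef, if_neg hodd]
          have h2 : (2 * k + 1) / 2 = k := by omega
          rw [h2]
        rw [this]; exact hk
    set k := Nat.find hex with hk
    have hxk : x ∈ W k := Nat.find_spec hex
    have hmin : ∀ m < k, x ∉ W m := fun m hm => Nat.find_min hex hm
    rcases Nat.even_or_odd k with he | hodd
    · exact Or.inl ⟨k, he, hxk, hmin⟩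
    · exact Or.inr ⟨k, hodd, hxk, hmin⟩
  have hAstarA : Astar ⊆ A := by
    rintro x ⟨k, hke, hxk, -⟩
    rw [hAeq]
    have : W k = P (k / 2) := by simp only [hWdef, if_pos hke]
    exact Set.mem_iUnion.mpr ⟨k / 2, by rw [← this]; exact hxk⟩
  have hBstarB : Bstar ⊆ B := by
    rintro x ⟨k, hko, hxk, -⟩
    rw [hBeq]
    have : W k = R (k / 2) := by
      simp only [hWdef, if_neg (Nat.not_even_iff_odd.mpr hko)]
    exact Set.mem_iUnion.mpr ⟨k / 2, by rw [← this]; exact hxk⟩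
  -- the contradiction
  by_cases hyD : y ∈ D
  · have hyBmem : y ∈ B := hyB.mpr hyD
    rcases hfirst y (Or.inr hyBmem) with hA' | hB'
    · exact (hyA.mp (hAstarA hA')) hyD
    · exact hBstarD y hB' hyD
  · have hyAmem : y ∈ A := hyA.mpr hyD
    rcases hfirst y (Or.inl hyAmem) with hA' | hB'
    · exact hyD (hAstarD hA')
    · exact hyD (hyB.mp (hBstarB hB'))
end

section
/- Let GN be Louveau's filter on ω^{<ω}: for A ⊆ ω^{<ω}, A ∈ GN iff there exists σ : ω^{<ω} → ℕ such that for every x ∈ ℕ^ℕ, if x(n) ≥ σ(x↾n) for all n, then there exists n such that every finite sequence s extending x↾n satisfies s ∉ A. Let GN* = {ω^{<ω} \ A : A ∈ GN} be its dual ideal. Identifying subsets of ω^{<ω} with their characteristic functions in the Cantor space 2^{ω^{<ω}} (product topology), there is no Borel set B ⊆ 2^{ω^{<ω}} with GN ⊆ B and B ∩ GN* = ∅. -/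
def GN : Set (List ℕ → Bool) :=
  {A | ∃ σ : List ℕ → ℕ, ∀ x : ℕ → ℕ,
    (∀ n, σ (List.ofFn fun i : Fin n => x i) ≤ x n) →
    ∃ n, ∀ s : List ℕ, (List.ofFn fun i : Fin n => x i) <+: s → A s = false}

def GNstar : Set (List ℕ → Bool) :=
  {A | (fun s => ! A s) ∈ GN}

namespace Louveau

abbrev Y := List ℕ → Bool

/-- initial segment of a branch -/
def seg (x : ℕ → ℕ) (n : ℕ) : List ℕ := List.ofFn fun i : Fin n => x i

lemma GN_def (A : Y) : A ∈ GN ↔ ∃ σ : List ℕ → ℕ, ∀ x : ℕ → ℕ,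
    (∀ n, σ (seg x n) ≤ x n) →
    ∃ n, ∀ s : List ℕ, seg x n <+: s → A s = false := Iff.rfl

lemma empty_mem_GN : (fun _ => false : Y) ∈ GN := by
  refine ⟨fun _ => 0, fun x _ => ⟨0, fun s _ => rfl⟩⟩

lemma full_mem_GNstar : (fun _ => true : Y) ∈ GNstar := by
  refine ⟨fun _ => 0, fun x _ => ⟨0, fun s _ => rfl⟩⟩

/-- even / odd subsequences -/
def pick : Bool → List ℕ → List ℕ
  | _, [] => []
  | true, a :: r => a :: pick false r
  | false, _ :: r => pick true r

lemma pick_prefix {t s : List ℕ} (h : t <+: s) : ∀ b, pick b t <+: pick b s := by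
  induction t generalizing s with
  | nil => intro b; simp [pick]
  | cons a r ih =>
    intro b
    rcases s with _ | ⟨c, s'⟩
    · simp at h
    · rw [List.cons_prefix_cons] at h
      obtain ⟨rfl, h2⟩ := h
      cases b with
      | true => simpa [pick, List.cons_prefix_cons] using ih h2 false
      | false => simpa [pick] using ih h2 true

lemma seg_zero (x : ℕ → ℕ) : seg x 0 = [] := rfl

lemma seg_succ_cons (x : ℕ → ℕ) (n : ℕ) :
    seg x (n+1) = x 0 :: seg (fun j => x (j+1)) n := by
  simp [seg, List.ofFn_succ]

lemma seg_len (x : ℕ → ℕ) (n : ℕ) : (seg x n).length = n := by simp [seg]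

lemma seg_congr {f g : ℕ → ℕ} (h : ∀ j, f j = g j) (k : ℕ) : seg f k = seg g k := by
  have : f = g := funext h
  rw [this]

lemma seg_snoc (z : ℕ → ℕ) (n : ℕ) : seg z (n+1) = seg z n ++ [z n] := by
  show List.ofFn _ = _
  rw [List.ofFn_succ']
  simp [seg, List.concat_eq_append]

lemma pick_seg_even (x : ℕ → ℕ) : ∀ k,
    pick true (seg x (2*k)) = seg (fun j => x (2*j)) k ∧
    pick false (seg x (2*k)) = seg (fun j => x (2*j+1)) k := by
  intro k
  induction k generalizing x with
  | zero => simp [seg_zero, pick]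
  | succ k ih =>
    have h1 : 2*(k+1) = (2*k+1)+1 := by ring
    rw [h1, seg_succ_cons]
    have h2 : seg (fun j => x (j+1)) (2*k+1) = x 1 :: seg (fun j => x (j+2)) (2*k) := by
      rw [seg_succ_cons]
    rw [h2]
    obtain ⟨e1, e2⟩ := ih (fun j => x (j+2))
    constructor
    · show x 0 :: pick true (seg (fun j => x (j+2)) (2*k)) = _
      rw [e1, seg_succ_cons]
      all_goals first
        | rfl
        | (congr 1; all_goals exact seg_congr (fun j => by ring_nf) k)
    · show x 1 :: pick false (seg (fun j => x (j+2)) (2*k)) = _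
      rw [e2, seg_succ_cons]
      all_goals first
        | rfl
        | (congr 1 <;> first | ring_nf | exact seg_congr (fun j => by ring_nf) k)

lemma pick_seg_odd (x : ℕ → ℕ) (k : ℕ) :
    pick false (seg x (2*k+1)) = seg (fun j => x (2*j+1)) k := by
  rw [seg_succ_cons]
  show pick true (seg (fun j => x (j+1)) (2*k)) = _
  rw [(pick_seg_even (fun j => x (j+1)) k).1]
  all_goals exact seg_congr (fun j => by ring_nf) k

lemma seg_mono (z : ℕ → ℕ) {k K : ℕ} (h : k ≤ K) : seg z k <+: seg z K := by
  induction K with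
  | zero => interval_cases k; exact List.prefix_refl _
  | succ K ih =>
    rcases Nat.lt_or_ge k (K+1) with h' | h'
    · rw [seg_snoc]
      exact (ih (Nat.lt_succ_iff.mp h')).trans (List.prefix_append _ _)
    · have : k = K + 1 := le_antisymm h h'
      subst this; exact List.prefix_refl _

end Louveau

namespace Louveau

/-- binary interleaving gadget -/
def comb (A₀ A₁ : Y) : Y := fun s => A₀ (pick true s) || A₁ (pick false s)

lemma comb_GN {A₀ A₁ : Y} (h0 : A₀ ∈ GN) (h1 : A₁ ∈ GN) : comb A₀ A₁ ∈ GN := by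
  obtain ⟨σ₀, H0⟩ := h0
  obtain ⟨σ₁, H1⟩ := h1
  refine ⟨fun t => if t.length % 2 = 0 then σ₀ (pick true t) else σ₁ (pick false t),
    fun x hx => ?_⟩
  set E := fun j => x (2*j) with hE
  set O := fun j => x (2*j+1) with hO
  have hxE : ∀ n, σ₀ (seg E n) ≤ E n := by
    intro n
    have := hx (2*n)
    rw [show (List.ofFn fun i : Fin (2*n) => x i) = seg x (2*n) from rfl] at this
    simp only [seg_len] at this
    simpa [Nat.mul_mod_right, (pick_seg_even x n).1] using this
  have hxO : ∀ n, σ₁ (seg O n) ≤ O n := by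
    intro n
    have := hx (2*n+1)
    rw [show (List.ofFn fun i : Fin (2*n+1) => x i) = seg x (2*n+1) from rfl] at this
    simp only [seg_len] at this
    have hodd : (2*n+1) % 2 = 1 := by omega
    rw [hodd] at this
    simpa [pick_seg_odd x n] using this
  obtain ⟨k₀, hk₀⟩ := H0 E hxE
  obtain ⟨k₁, hk₁⟩ := H1 O hxO
  refine ⟨2 * max k₀ k₁, fun s hs => ?_⟩
  rw [show (List.ofFn fun i : Fin (2 * max k₀ k₁) => x i) = seg x (2 * max k₀ k₁) from rfl] at hs
  have ht : seg E k₀ <+: pick true s := by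
    have h1 : seg E k₀ <+: seg E (max k₀ k₁) := seg_mono E (le_max_left _ _)
    have h2 : pick true (seg x (2 * max k₀ k₁)) <+: pick true s := pick_prefix hs true
    rw [(pick_seg_even x (max k₀ k₁)).1] at h2
    exact h1.trans h2
  have hf : seg O k₁ <+: pick false s := by
    have h1 : seg O k₁ <+: seg O (max k₀ k₁) := seg_mono O (le_max_right _ _)
    have h2 : pick false (seg x (2 * max k₀ k₁)) <+: pick false s := pick_prefix hs false
    rw [(pick_seg_even x (max k₀ k₁)).2] at h2
    exact h1.trans h2
  have e0 := hk₀ (pick true s) ht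
  have e1 := hk₁ (pick false s) hf
  simp [comb, e0, e1]

lemma comb_GNstar_left {A₀ A₁ : Y} (h0 : A₀ ∈ GNstar) : comb A₀ A₁ ∈ GNstar := by
  obtain ⟨σ₀, H0⟩ := h0
  refine ⟨fun t => if t.length % 2 = 0 then σ₀ (pick true t) else 0, fun x hx => ?_⟩
  set E := fun j => x (2*j) with hE
  have hxE : ∀ n, σ₀ (seg E n) ≤ E n := by
    intro n
    have := hx (2*n)
    rw [show (List.ofFn fun i : Fin (2*n) => x i) = seg x (2*n) from rfl] at this
    simp only [seg_len] at this
    simpa [Nat.mul_mod_right, (pick_seg_even x n).1] using this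
  obtain ⟨k, hk⟩ := H0 E hxE
  refine ⟨2 * k, fun s hs => ?_⟩
  rw [show (List.ofFn fun i : Fin (2*k) => x i) = seg x (2*k) from rfl] at hs
  have ht : seg E k <+: pick true s := by
    have h2 : pick true (seg x (2*k)) <+: pick true s := pick_prefix hs true
    rw [(pick_seg_even x k).1] at h2
    exact h2
  have e0 := hk (pick true s) ht
  have : A₀ (pick true s) = true := by
    simpa using e0
  simp [comb, this]

lemma comb_GNstar_right {A₀ A₁ : Y} (h1 : A₁ ∈ GNstar) : comb A₀ A₁ ∈ GNstar := by
  obtain ⟨σ₁, H1⟩ := h1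
  refine ⟨fun t => if t.length % 2 = 0 then 0 else σ₁ (pick false t), fun x hx => ?_⟩
  set O := fun j => x (2*j+1) with hO
  have hxO : ∀ n, σ₁ (seg O n) ≤ O n := by
    intro n
    have := hx (2*n+1)
    rw [show (List.ofFn fun i : Fin (2*n+1) => x i) = seg x (2*n+1) from rfl] at this
    simp only [seg_len] at this
    have hodd : (2*n+1) % 2 = 1 := by omega
    rw [hodd] at this
    simpa [pick_seg_odd x n] using this
  obtain ⟨k, hk⟩ := H1 O hxO
  refine ⟨2 * k, fun s hs => ?_⟩
  rw [show (List.ofFn fun i : Fin (2*k) => x i) = seg x (2*k) from rfl] at hs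
  have ht : seg O k <+: pick false s := by
    have h2 : pick false (seg x (2*k)) <+: pick false s := pick_prefix hs false
    rw [(pick_seg_even x k).2] at h2
    exact h2
  have e1 := hk (pick false s) ht
  have : A₁ (pick false s) = true := by
    simpa using e1
  simp [comb, this]

/-- countable-union root gadget -/
def combR (g : ℕ → Y) : Y := fun s => match s with
  | [] => false
  | m :: w => g m w

lemma prefix_cons_elim {a : ℕ} {l s : List ℕ} (h : (a :: l) <+: s) :
    ∃ w, s = a :: w ∧ l <+: w := by
  rcases s with _ | ⟨c, w⟩
  · exact absurd (List.prefix_nil.mp h) (by simp)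
  · rw [List.cons_prefix_cons] at h
    exact ⟨w, by rw [h.1], h.2⟩

lemma combR_GN {g : ℕ → Y} (h : ∀ m, g m ∈ GN) : combR g ∈ GN := by
  choose σ hσ using h
  refine ⟨fun t => match t with | [] => 0 | m :: w => σ m w, fun x hx => ?_⟩
  set w := fun j => x (j+1) with hw
  have hseg : ∀ j, (List.ofFn fun i : Fin (j+1) => x i) = x 0 :: seg w j := by
    intro j; exact seg_succ_cons x j
  have hxw : ∀ n, σ (x 0) (seg w n) ≤ w n := by
    intro n
    have := hx (n+1)
    rw [hseg n] at this
    exact this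
  obtain ⟨k, hk⟩ := hσ (x 0) w hxw
  refine ⟨k + 1, fun s hs => ?_⟩
  rw [show (List.ofFn fun i : Fin (k+1) => x i) = x 0 :: seg w k from hseg k] at hs
  obtain ⟨w', rfl, hw'⟩ := prefix_cons_elim hs
  exact hk w' hw'

lemma combR_GNstar {g : ℕ → Y} (n₀ : ℕ) (h : ∀ m, n₀ ≤ m → g m ∈ GNstar) :
    combR g ∈ GNstar := by
  have h' : ∀ m, ∃ τ : List ℕ → ℕ, n₀ ≤ m → ∀ x : ℕ → ℕ,
      (∀ n, τ (seg x n) ≤ x n) →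
      ∃ n, ∀ s : List ℕ, seg x n <+: s → (!(g m s)) = false := by
    intro m
    by_cases hm : n₀ ≤ m
    · obtain ⟨τ, hτ⟩ := h m hm
      exact ⟨τ, fun _ => hτ⟩
    · exact ⟨fun _ => 0, fun hc => absurd hc hm⟩
  choose τ hτ using h'
  refine ⟨fun t => match t with | [] => n₀ | m :: w => τ m w, fun x hx => ?_⟩
  set w := fun j => x (j+1) with hw
  have hx0 : n₀ ≤ x 0 := by
    have := hx 0
    simpa using this
  have hseg : ∀ j, (List.ofFn fun i : Fin (j+1) => x i) = x 0 :: seg w j := by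
    intro j; exact seg_succ_cons x j
  have hxw : ∀ n, τ (x 0) (seg w n) ≤ w n := by
    intro n
    have := hx (n+1)
    rw [hseg n] at this
    exact this
  obtain ⟨k, hk⟩ := hτ (x 0) hx0 w hxw
  refine ⟨k + 1, fun s hs => ?_⟩
  rw [show (List.ofFn fun i : Fin (k+1) => x i) = x 0 :: seg w k from hseg k] at hs
  obtain ⟨w', rfl, hw'⟩ := prefix_cons_elim hs
  exact hk w' hw'

end Louveau

namespace Louveau

abbrev Lit := (List ℕ) × Bool
abbrev CodeD := List (List Lit)

/-- evaluation of a DNF code on a point of the Cantor space -/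
def dnf (c : CodeD) (x : Y) : Bool := c.any fun cl => cl.all fun p => x p.1 == p.2

def prodCode (c d : CodeD) : CodeD := c.flatMap fun cl => d.map fun cl' => cl ++ cl'

lemma dnf_append (c d : CodeD) (x : Y) : dnf (c ++ d) x = (dnf c x || dnf d x) := by
  simp [dnf, List.any_append]

lemma dnf_prod (c d : CodeD) (x : Y) : dnf (prodCode c d) x = (dnf c x && dnf d x) := by
  rw [Bool.eq_iff_iff]
  simp only [dnf, prodCode, List.any_eq_true, List.mem_flatMap, List.mem_map,
    Bool.and_eq_true, List.all_append]
  constructor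
  · rintro ⟨cl'', ⟨cl, hcl, cl', hcl', rfl⟩, h⟩
    rw [List.all_append, Bool.and_eq_true] at h
    exact ⟨⟨cl, hcl, h.1⟩, ⟨cl', hcl', h.2⟩⟩
  · rintro ⟨⟨cl, hcl, h1⟩, ⟨cl', hcl', h2⟩⟩
    exact ⟨cl ++ cl', ⟨cl, hcl, cl', hcl', rfl⟩, by rw [List.all_append, h1, h2]; rfl⟩

def negCode (l : List Lit) : CodeD := l.map fun p => [(p.1, !p.2)]

lemma dnf_negCode (l : List Lit) (x : Y) :
    dnf (negCode l) x = !(l.all fun p => x p.1 == p.2) := by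
  rw [Bool.eq_iff_iff]
  simp only [dnf, negCode, List.any_eq_true, List.mem_map, Bool.not_eq_true',
    List.all_eq_false]
  constructor
  · rintro ⟨cl, ⟨p, hp, rfl⟩, h⟩
    simp only [List.all_cons, List.all_nil, Bool.and_true, beq_iff_eq] at h
    refine ⟨p, hp, ?_⟩
    rw [h]
    simp
  · rintro ⟨p, hp, h⟩
    refine ⟨[(p.1, !p.2)], ⟨p, hp, rfl⟩, ?_⟩
    simp only [List.all_cons, List.all_nil, Bool.and_true, beq_iff_eq]
    rw [Bool.eq_iff_iff] at h ⊢
    simp only [beq_iff_eq] at h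
    cases hx : x p.1 <;> cases hp2 : p.2 <;> simp_all

/-- Reducibility of a set to the pair (GNstar, GN), with coded coordinates. -/
def Red (C : Set Y) : Prop :=
  ∃ F : Y → Y,
    (∀ s : List ℕ, ∃ cp cn : CodeD,
      (∀ x, F x s = dnf cp x) ∧ (∀ x, (! F x s) = dnf cn x)) ∧
    (∀ x ∈ C, F x ∈ GNstar) ∧ (∀ x, x ∉ C → F x ∈ GN)

lemma red_congr {C C' : Set Y} (h : C = C') (hC : Red C) : Red C' := h ▸ hC

lemma red_empty : Red (∅ : Set Y) := by
  refine ⟨fun _ _ => false, fun s => ⟨[], [[]], fun x => by simp [dnf], fun x => by simp [dnf]⟩,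
    fun x hx => absurd hx (Set.notMem_empty x), fun x _ => empty_mem_GN⟩

lemma red_compl {C : Set Y} (hC : Red C) : Red Cᶜ := by
  obtain ⟨F, hcode, hstar, hgn⟩ := hC
  refine ⟨fun x s => ! F x s, ?_, ?_, ?_⟩
  · intro s
    obtain ⟨cp, cn, h1, h2⟩ := hcode s
    exact ⟨cn, cp, h2, fun x => by rw [Bool.not_not]; exact h1 x⟩
  · intro x hx
    show (fun s => !(!(F x s))) ∈ GN
    have heq : (fun s => !(!(F x s))) = F x := by
      funext s; rw [Bool.not_not]
    rw [heq]
    exact hgn x hx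
  · intro x hx
    have hx' : x ∈ C := by simpa using hx
    show (fun s => !(F x s)) ∈ GN
    exact hstar x hx' 

def cylSet (l : List Lit) : Set Y := {x | ∀ p ∈ l, x p.1 = p.2}

lemma red_cyl (l : List Lit) : Red (cylSet l) := by
  refine ⟨fun x _ => l.all fun p => x p.1 == p.2,
    fun s => ⟨[l], negCode l, fun x => by simp [dnf], fun x => (dnf_negCode l x).symm⟩, ?_, ?_⟩
  · intro x hx
    have : (l.all fun p => x p.1 == p.2) = true := by
      rw [List.all_eq_true]
      intro p hp
      simpa using hx p hp
    show (fun _ : List ℕ => l.all fun p => x p.1 == p.2) ∈ GNstar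
    rw [show (fun _ : List ℕ => l.all fun p => x p.1 == p.2) = (fun _ => true) from
      funext fun _ => this]
    exact full_mem_GNstar
  · intro x hx
    have : (l.all fun p => x p.1 == p.2) = false := by
      rw [List.all_eq_false]
      by_contra hc
      push_neg at hc
      exact hx fun p hp => by
        have := hc p hp
        simpa using this
    show (fun _ : List ℕ => l.all fun p => x p.1 == p.2) ∈ GN
    rw [show (fun _ : List ℕ => l.all fun p => x p.1 == p.2) = (fun _ => false) from
      funext fun _ => this]
    exact empty_mem_GN

lemma red_union2 {C C' : Set Y} (h : Red C) (h' : Red C') : Red (C ∪ C') := by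
  obtain ⟨F, hcode, hstar, hgn⟩ := h
  obtain ⟨F', hcode', hstar', hgn'⟩ := h'
  refine ⟨fun x => comb (F x) (F' x), ?_, ?_, ?_⟩
  · intro s
    obtain ⟨cp, cn, h1, h2⟩ := hcode (pick true s)
    obtain ⟨cp', cn', h1', h2'⟩ := hcode' (pick false s)
    refine ⟨cp ++ cp', prodCode cn cn', fun x => ?_, fun x => ?_⟩
    · rw [dnf_append, ← h1 x, ← h1' x]; rfl
    · rw [dnf_prod, ← h2 x, ← h2' x]
      show (!(F x (pick true s) || F' x (pick false s))) = _
      rw [Bool.not_or]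
  · intro x hx
    rcases hx with hx | hx
    · exact comb_GNstar_left (hstar x hx)
    · exact comb_GNstar_right (hstar' x hx)
  · intro x hx
    rw [Set.mem_union] at hx
    push_neg at hx
    exact comb_GN (hgn x hx.1) (hgn' x hx.2)

lemma red_iUnion (C : ℕ → Set Y) (h : ∀ n, Red (C n)) : Red (⋃ n, C n) := by
  set D : ℕ → Set Y := fun m => ⋃ i ∈ Finset.range (m+1), C i with hD
  have hDred : ∀ m, Red (D m) := by
    intro m
    induction m with
    | zero =>
      refine red_congr ?_ (h 0)
      simp [hD]
    | succ m ih =>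
      refine red_congr ?_ (red_union2 ih (h (m+1)))
      ext y
      simp only [hD, Set.mem_union, Set.mem_iUnion, Finset.mem_range]
      constructor
      · rintro (⟨i, hi, hy⟩ | hy)
        · exact ⟨i, by omega, hy⟩
        · exact ⟨m+1, by omega, hy⟩
      · rintro ⟨i, hi, hy⟩
        rcases Nat.lt_or_ge i (m+1) with h' | h'
        · exact Or.inl ⟨i, h', hy⟩
        · have : i = m + 1 := by omega
          subst this
          exact Or.inr hy
  choose G hGcode hGstar hGgn using hDred
  refine ⟨fun x => combR (fun m => G m x), ?_, ?_, ?_⟩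
  · intro s
    rcases s with _ | ⟨m, w⟩
    · exact ⟨[], [[]], fun x => by simp [combR, dnf], fun x => by simp [combR, dnf]⟩
    · obtain ⟨cp, cn, h1, h2⟩ := hGcode m w
      exact ⟨cp, cn, fun x => h1 x, fun x => h2 x⟩
  · intro x hx
    rw [Set.mem_iUnion] at hx
    obtain ⟨n₀, hn₀⟩ := hx
    refine combR_GNstar n₀ (fun m hm => ?_)
    refine hGstar m x ?_
    rw [hD]
    simp only [Set.mem_iUnion]
    exact ⟨n₀, by simpa using Nat.lt_succ_of_le hm, hn₀⟩
  · intro x hx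
    refine combR_GN (fun m => ?_)
    refine hGgn m x (fun hc => hx ?_)
    rw [hD] at hc
    simp only [Set.mem_iUnion] at hc
    obtain ⟨i, _, hi⟩ := hc
    exact Set.mem_iUnion.mpr ⟨i, hi⟩

lemma red_open (U : Set Y) (hU : IsOpen U) : Red U := by
  classical
  obtain ⟨e, he⟩ := exists_surjective_nat (List Lit)
  set C : ℕ → Set Y := fun n => if cylSet (e n) ⊆ U then cylSet (e n) else ∅ with hC
  have hCn : ∀ n, C n = if cylSet (e n) ⊆ U then cylSet (e n) else ∅ := fun n => rfl
  have hred : ∀ n, Red (C n) := by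
    intro n
    rw [hCn n]
    by_cases hsub : cylSet (e n) ⊆ U
    · rw [if_pos hsub]; exact red_cyl (e n)
    · rw [if_neg hsub]; exact red_empty
  refine red_congr ?_ (red_iUnion C hred)
  apply Set.eq_of_subset_of_subset
  · intro x hx
    rw [Set.mem_iUnion] at hx
    obtain ⟨n, hn⟩ := hx
    rw [hCn n] at hn
    by_cases hsub : cylSet (e n) ⊆ U
    · rw [if_pos hsub] at hn; exact hsub hn
    · rw [if_neg hsub] at hn; exact absurd hn (Set.notMem_empty x)
  · intro x hx
    obtain ⟨I, u, hIu, hsub⟩ := (isOpen_pi_iff.mp hU) x hx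
    set l : List Lit := I.toList.map fun t => (t, x t) with hl
    have hx_mem : x ∈ cylSet l := by
      intro p hp
      rw [hl] at hp
      obtain ⟨t, _, rfl⟩ := List.mem_map.mp hp
      rfl
    have hcyl_sub : cylSet l ⊆ U := by
      intro y hy
      apply hsub
      intro t ht
      have hmem : (t, x t) ∈ l := by
        rw [hl]
        exact List.mem_map.mpr ⟨t, Finset.mem_toList.mpr ht, rfl⟩
      have := hy (t, x t) hmem
      rw [this]
      exact (hIu t ht).2
    obtain ⟨n, hn⟩ := he l
    rw [Set.mem_iUnion]
    refine ⟨n, ?_⟩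
    rw [hCn n, hn, if_pos hcyl_sub]
    exact hx_mem

/-- every Borel set is reducible to the pair (GNstar, GN) -/
lemma key (C : Set Y) (h : MeasurableSpace.GenerateMeasurable {s : Set Y | IsOpen s} C) :
    Red C := by
  induction h with
  | basic u hu => exact red_open u hu
  | empty => exact red_empty
  | compl t _ ih => exact red_compl ih
  | iUnion f _ ih => exact red_iUnion f ih

end Louveau

namespace Louveau

noncomputable def bij : ((List ℕ) × ℕ) ≃ List ℕ :=
  ((Denumerable.eqv (List ℕ)).prodCongr (Equiv.refl ℕ)).trans
    (((Denumerable.eqv (ℕ × ℕ)).trans (Denumerable.eqv ℕ).symm).trans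
      (Denumerable.eqv (List ℕ)).symm)

noncomputable def streamAt (w : Y) (s : List ℕ) : ℕ → Bool := fun n => w (bij (s, n))

open Classical in
noncomputable def ft (v : ℕ → Bool) : ℕ :=
  if h : ∃ n, v n = true then Nat.find h else 0

lemma meas_cnt {α β : Type*} [MeasurableSpace α] [MeasurableSpace β] [Countable β]
    (f : α → β) (h : ∀ b, MeasurableSet (f ⁻¹' {b})) : Measurable f := by
  intro s _
  have : f ⁻¹' s = ⋃ b ∈ s, f ⁻¹' {b} := by ext a; simp
  rw [this]
  exact MeasurableSet.biUnion s.to_countable (fun b _ => h b)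

lemma meas_bool {α : Type*} [MeasurableSpace α] {f : α → Bool}
    (h : MeasurableSet (f ⁻¹' {true})) : Measurable f := by
  apply meas_cnt
  intro b
  cases b
  · have : f ⁻¹' {false} = (f ⁻¹' {true})ᶜ := by
      ext a; cases ha : f a <;> simp [ha]
    rw [this]; exact h.compl
  · exact h

lemma coord_meas (n : ℕ) (b : Bool) : MeasurableSet {v : ℕ → Bool | v n = b} := by
  have h := (measurable_pi_apply (X := fun _ : ℕ => Bool) n) (MeasurableSet.singleton b)
  exact h

lemma coordY_meas (t : List ℕ) (b : Bool) : MeasurableSet {x : Y | x t = b} := by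
  have h := (measurable_pi_apply (X := fun _ : List ℕ => Bool) t) (MeasurableSet.singleton b)
  exact h

lemma meas_ft : Measurable ft := by
  apply meas_cnt
  intro k
  by_cases hk : k = 0
  · subst hk
    have : ft ⁻¹' {0} = {v : ℕ → Bool | v 0 = true} ∪ ⋂ n, {v : ℕ → Bool | v n = false} := by
      ext v
      simp only [Set.mem_preimage, Set.mem_singleton_iff, Set.mem_union, Set.mem_iInter,
        Set.mem_setOf_eq]
      unfold ft
      split_ifs with h
      · rw [Nat.find_eq_zero h]
        constructor
        · exact fun h0 => Or.inl h0
        · rintro (h0 | hall)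
          · exact h0
          · obtain ⟨n, hn⟩ := h
            rw [hall n] at hn
            exact absurd hn (by simp)
      · push_neg at h
        simp only [Bool.not_eq_true] at h
        exact ⟨fun _ => Or.inr h, fun _ => rfl⟩
    rw [this]
    exact MeasurableSet.union (coord_meas 0 true)
      (MeasurableSet.iInter fun n => coord_meas n false)
  · have : ft ⁻¹' {k} = {v : ℕ → Bool | v k = true} ∩
        ⋂ j ∈ Finset.range k, {v : ℕ → Bool | v j = false} := by
      ext v
      simp only [Set.mem_preimage, Set.mem_singleton_iff, Set.mem_inter_iff, Set.mem_iInter,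
        Set.mem_setOf_eq, Finset.mem_range]
      unfold ft
      split_ifs with h
      · rw [Nat.find_eq_iff h]
        constructor
        · rintro ⟨h1, h2⟩
          exact ⟨h1, fun j hj => by simpa using h2 j hj⟩
        · rintro ⟨h1, h2⟩
          exact ⟨h1, fun j hj => by simp [h2 j hj]⟩
      · push_neg at h
        constructor
        · intro h0; exact absurd h0.symm hk
        · rintro ⟨h1, _⟩
          exact absurd h1 (h k)
    rw [this]
    exact MeasurableSet.inter (coord_meas k true)
      (MeasurableSet.biInter (Set.to_countable _) (fun j _ => coord_meas j false))

lemma meas_dnf (c : CodeD) : Measurable fun x : Y => dnf c x := by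
  apply meas_bool
  have : (fun x : Y => dnf c x) ⁻¹' {true} =
      ⋃ cl ∈ {cl | cl ∈ c}, ⋂ p ∈ {p | p ∈ cl}, {x : Y | x p.1 = p.2} := by
    ext x
    simp [dnf, List.any_eq_true, List.all_eq_true]
  rw [this]
  refine MeasurableSet.biUnion (List.finite_toSet c).countable (fun cl _ => ?_)
  refine MeasurableSet.biInter (List.finite_toSet cl).countable (fun p _ => ?_)
  exact coordY_meas p.1 p.2

noncomputable def evalw (dec : ℕ → CodeD) (w x : Y) : Y :=
  fun s => dnf (dec (ft (streamAt w s))) x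

lemma meas_evalw (dec : ℕ → CodeD) :
    Measurable (fun p : Y × Y => evalw dec p.1 p.2) := by
  rw [measurable_pi_iff]
  intro s
  have h1 : Measurable (fun p : Y × Y => (p.2, ft (streamAt p.1 s))) := by
    refine Measurable.prodMk measurable_snd ?_
    refine meas_ft.comp ?_
    have : Measurable (fun p : Y × Y => streamAt p.1 s) := by
      rw [measurable_pi_iff]
      intro n
      exact (measurable_pi_apply (bij (s, n))).comp measurable_fst
    exact this
  have h2 : Measurable (fun q : Y × ℕ => dnf (dec q.2) q.1) := by
    apply measurable_from_prod_countable_left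
    intro k
    exact meas_dnf (dec k)
  exact h2.comp h1

end Louveau

open Louveau in
/-- GN cannot be separated from its dual ideal by a Borel set. -/
theorem stmt8 :
    ¬ ∃ B : Set (List ℕ → Bool),
        @MeasurableSet (List ℕ → Bool) (borel (List ℕ → Bool)) B ∧
        GN ⊆ B ∧ B ∩ GNstar = ∅ := by
  rintro ⟨B, hBmeas, hGNB, hdisj⟩
  classical
  have hBS : (inferInstance : MeasurableSpace Y) = borel Y := BorelSpace.measurable_eq
  have hB : MeasurableSet B := by rwa [← hBS] at hBmeas
  obtain ⟨dec, hdec⟩ := exists_surjective_nat CodeD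
  have hdgmeas : Measurable (fun y : Y => evalw dec y y) :=
    (meas_evalw dec).comp (measurable_id.prodMk measurable_id)
  set D : Set Y := (fun y : Y => evalw dec y y) ⁻¹' B with hDdef
  have hD : MeasurableSet D := hdgmeas hB
  have hgen : MeasurableSpace.GenerateMeasurable {s : Set Y | IsOpen s} D := by
    have hD' : @MeasurableSet Y (borel Y) D := by rw [← hBS]; exact hD
    exact hD' 
  obtain ⟨F, hcode, hstar, hgn⟩ := key D hgen
  choose cp cn hc using hcode
  have hk : ∀ s, ∃ k, dec k = cp s := fun s => hdec (cp s)
  choose kk hkk using hk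
  set w₀ : Y := fun u => decide ((bij.symm u).2 = kk (bij.symm u).1) with hw₀
  have hstream : ∀ s n, streamAt w₀ s n = decide (n = kk s) := by
    intro s n
    simp only [streamAt, hw₀, Equiv.symm_apply_apply]
  have hft : ∀ s, ft (streamAt w₀ s) = kk s := by
    intro s
    have hx : streamAt w₀ s = fun n => decide (n = kk s) := funext (hstream s)
    rw [hx]
    unfold ft
    have hex : ∃ n, (decide (n = kk s)) = true := ⟨kk s, by simp⟩
    rw [dif_pos hex, Nat.find_eq_iff hex]
    constructor
    · simp
    · intro j hj
      simp only [decide_eq_true_eq]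
      omega
  have hFeval : ∀ x, F x = evalw dec w₀ x := by
    intro x
    funext s
    show F x s = dnf (dec (ft (streamAt w₀ s))) x
    rw [hft s, hkk s]
    exact (hc s).1 x
  by_cases hw : w₀ ∈ D
  · have h1 : F w₀ ∈ GNstar := hstar w₀ hw
    have h2 : F w₀ ∉ B := by
      intro hcon
      have : F w₀ ∈ B ∩ GNstar := ⟨hcon, h1⟩
      rw [hdisj] at this
      exact this
    have h3 : evalw dec w₀ w₀ ∈ B := hw
    rw [← hFeval w₀] at h3
    exact h2 h3
  · have h1 : F w₀ ∈ GN := hgn w₀ hw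
    have h2 : F w₀ ∈ B := hGNB h1
    rw [hFeval w₀] at h2
    exact hw h2
end

section
/- Let F be the cofinite × cofinite filter on ω × ω: for A ⊆ ω × ω, A ∈ F iff for all but finitely many n, for all but finitely many m, (n,m) ∈ A. Let F* = {(ω×ω) \ A : A ∈ F} be its dual ideal. Identifying subsets of ω × ω with points of the Cantor space 2^{ω×ω} (product topology), there is no set C in Δ⁰₃(2^{ω×ω}) with F ⊆ C and C ∩ F* = ∅. -/
/-- The cofinite × cofinite filter on ω × ω, as a set of characteristic functions in the
Cantor space `ℕ × ℕ → Bool`: `A ∈ cofXcof` iff for all but finitely many `n`,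
for all but finitely many `m`, `(n, m) ∈ A`. -/
def cofXcof : Set (ℕ × ℕ → Bool) :=
  {A | ∀ᶠ n in Filter.cofinite, ∀ᶠ m in Filter.cofinite, A (n, m) = true}

/-- The dual ideal of the cofinite × cofinite filter: complements of its members. -/
def cofXcofStar : Set (ℕ × ℕ → Bool) :=
  {A | (fun p => ! A p) ∈ cofXcof}

/-!
Write a Δ⁰₃ set `C` as `C = ⋂ₖ ⋃ⱼ Hₖⱼ` and `Cᶜ = ⋂ₖ ⋃ⱼ Gₖⱼ` with closed `Gₖⱼ`, `Hₖⱼ`. If `C`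
separates `F` from `F*`, then `F ⊆ ⋃ⱼ Hₖⱼ` and `F* ⊆ ⋃ⱼ Gₖⱼ` for every `k`.

Let `(Eⱼ)` be a countable closed cover of the points that are `b` at cof × cof-almost every
coordinate, and fix a row cylinder (finitely many rows prescribed). Code the points of the cylinder
whose other rows are eventually `b` by the Baire space `ℕ → ℕ`. By the Baire category theorem
some `Eⱼ` pulls back to a set with nonempty interior, hence containing all codes with finitely
many rows fixed; their images are dense in a smaller row cylinder, which therefore lies in `Eⱼ`.
Refining alternately against the covers of `F*` and of `F` gives a decreasing sequence of row
cylinders; by compactness its intersection contains a point of both `C` and `Cᶜ`.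
-/

open Set Filter Topology

section Borel

variable {X : Type*} [TopologicalSpace X]

theorem SigmaZero.isOpen_of_lt_two {α : Ordinal.{0}} {S : Set X} (h : SigmaZero α S)
    (hα : α < 2) : IsOpen S := by
  cases h with
  | isOpen hS => exact hS
  | iUnion hα₁ =>
    rw [← one_add_one_eq_two, Order.lt_add_one_iff] at hα
    exact absurd hα₁ hα.not_gt

theorem SigmaZero.exists_isClosed_iUnion_eq_of_lt_three [PerfectlyNormalSpace X]
    {α : Ordinal.{0}} {S : Set X} (h : SigmaZero α S) (hα : α < 3) :
    ∃ E : ℕ → Set X, (∀ j, IsClosed (E j)) ∧ S = ⋃ j, E j := by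
  cases h with
  | isOpen hS =>
    obtain ⟨U, hU, hSU⟩ := isGδ_iff_eq_iInter_nat.mp hS.isClosed_compl.isGδ
    refine ⟨fun j => (U j)ᶜ, fun j => (hU j).isClosed_compl, ?_⟩
    rw [← compl_iInter, ← hSU, compl_compl]
  | iUnion _ A β _ hβ hA =>
    rw [show (3 : Ordinal) = 2 + 1 by norm_num, Order.lt_add_one_iff] at hα
    exact ⟨A, fun k => isOpen_compl_iff.mp ((hA k).isOpen_of_lt_two ((hβ k).trans_le hα)), rfl⟩

theorem SigmaZero.exists_isClosed_compl_eq_iInter_iUnion [PerfectlyNormalSpace X]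
    {α : Ordinal.{0}} {S : Set X} (h : SigmaZero α S) (hα : α ≤ 3) :
    ∃ E : ℕ → ℕ → Set X, (∀ k j, IsClosed (E k j)) ∧ Sᶜ = ⋂ k, ⋃ j, E k j := by
  cases h with
  | isOpen hS =>
    exact ⟨fun _ _ => Sᶜ, fun _ _ => hS.isClosed_compl, by rw [iInter_const, iUnion_const]⟩
  | iUnion _ A β _ hβ hA =>
    choose E hE hAE using fun k =>
      (hA k).exists_isClosed_iUnion_eq_of_lt_three ((hβ k).trans_le hα)
    exact ⟨E, hE, by simp only [compl_iUnion, hAE]⟩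

end Borel

theorem exists_forall_mem_of_forall_exists_subset_inter {X ι : Type*} [TopologicalSpace X]
    [CompactSpace X] [Nonempty ι] {K : ι → Set X} (hK : ∀ i, IsClosed (K i))
    (hKne : ∀ i, (K i).Nonempty) {S : ℕ → Set X} (hS : ∀ t i, ∃ i', K i' ⊆ K i ∩ S t) :
    ∃ x, ∀ t, x ∈ S t := by
  choose next hnext using hS
  let i : ℕ → ι := fun t => Nat.rec (Classical.arbitrary ι) next t
  obtain ⟨x, hx⟩ := IsCompact.nonempty_iInter_of_sequence_nonempty_isCompact_isClosed
    (fun t => K (i (t + 1))) (fun t => (hnext (t + 1) (i (t + 1))).trans inter_subset_left)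
    (fun t => hKne _) (hK _).isCompact (fun t => hK _)
  exact ⟨x, fun t => (hnext t (i t) (mem_iInter.mp hx t)).2⟩

def cofXcofConst (b : Bool) : Set (ℕ × ℕ → Bool) :=
  {x | ∀ᶠ n in cofinite, ∀ᶠ m in cofinite, x (n, m) = b}

theorem cofXcof_eq : cofXcof = cofXcofConst true := rfl

theorem cofXcofStar_eq : cofXcofStar = cofXcofConst false := by
  ext x
  simp [cofXcofStar, cofXcof, cofXcofConst]

def rowCyl (z : ℕ × ℕ → Bool) (N : ℕ) : Set (ℕ × ℕ → Bool) :=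
  {x | ∀ p : ℕ × ℕ, p.1 < N → x p = z p}

theorem isClosed_rowCyl (z : ℕ × ℕ → Bool) (N : ℕ) : IsClosed (rowCyl z N) := by
  simp only [rowCyl, ofPred_forall]
  exact isClosed_iInter fun p => isClosed_iInter fun _ =>
    isClosed_eq (continuous_apply p) continuous_const

theorem self_mem_rowCyl (z : ℕ × ℕ → Bool) (N : ℕ) : z ∈ rowCyl z N := fun _ _ => rfl

/-- Rows below `N` are those of `z`; row `n ≥ N` is the list of booleans coded by `y n`,
padded with `b`. -/
def spliceRows (z : ℕ × ℕ → Bool) (N : ℕ) (b : Bool) (y : ℕ → ℕ) : ℕ × ℕ → Bool :=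
  fun p => if p.1 < N then z p
    else ((Encodable.decode (α := List Bool) (y p.1)).getD []).getD p.2 b

section spliceRows

variable (z : ℕ × ℕ → Bool) (N : ℕ) (b : Bool)

theorem continuous_spliceRows : Continuous (spliceRows z N b) := by
  refine continuous_pi fun p => ?_
  unfold spliceRows
  split_ifs <;> fun_prop

theorem spliceRows_mem_cofXcofConst (y : ℕ → ℕ) : spliceRows z N b y ∈ cofXcofConst b := by
  simp only [cofXcofConst, mem_ofPred_eq, Nat.cofinite_eq_atTop]
  filter_upwards [eventually_ge_atTop N] with n hn
  filter_upwards [eventually_ge_atTop ((Encodable.decode (α := List Bool) (y n)).getD []).length]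
    with m hm
  simp only [spliceRows, if_neg hn.not_gt]
  exact List.getD_eq_default _ _ hm

theorem spliceRows_of_lt {y : ℕ → ℕ} {p : ℕ × ℕ} (hp : p.1 < N) : spliceRows z N b y p = z p :=
  if_pos hp

theorem rowCyl_subset_closure_image_spliceRows {M : ℕ} (hNM : N ≤ M) (y₀ : ℕ → ℕ) :
    rowCyl (spliceRows z N b y₀) M ⊆
      closure (spliceRows z N b '' {y | ∀ k < M, y k = y₀ k}) := by
  intro x hx
  let approx : ℕ → ℕ → ℕ := fun L k =>
    if k < M then y₀ k else Encodable.encode (List.ofFn fun i : Fin L => x (k, i))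
  refine mem_closure_of_tendsto (f := fun L => spliceRows z N b (approx L)) (b := atTop) ?_
    (Eventually.of_forall fun L => mem_image_of_mem _ fun k hk => if_pos hk)
  refine tendsto_pi_nhds.mpr fun p => tendsto_nhds_of_eventually_eq ?_
  by_cases hp : p.1 < M
  · refine Eventually.of_forall fun L => (hx p hp).symm ▸ ?_
    simp only [spliceRows, approx, if_pos hp]
  · filter_upwards [eventually_gt_atTop p.2] with L hL
    have hpN : ¬ p.1 < N := fun h => hp (h.trans_le hNM)
    simp [spliceRows, approx, hp, hpN, Encodable.encodek, hL]

end spliceRows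

theorem exists_rowCyl_subset_inter_iUnion {b : Bool} {E : ℕ → Set (ℕ × ℕ → Bool)}
    (hE : ∀ j, IsClosed (E j)) (hcover : cofXcofConst b ⊆ ⋃ j, E j) (z : ℕ × ℕ → Bool)
    (N : ℕ) :
    ∃ z' N', rowCyl z' N' ⊆ rowCyl z N ∩ ⋃ j, E j := by
  obtain ⟨j, y₀, hy₀⟩ := nonempty_interior_of_iUnion_of_closed
    (fun j => (hE j).preimage (continuous_spliceRows z N b))
    (eq_univ_of_forall fun y => by
      simpa only [mem_iUnion, mem_preimage] using hcover (spliceRows_mem_cofXcofConst z N b y))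
  obtain ⟨I, u, hu, hIu⟩ := isOpen_pi_iff.mp isOpen_interior y₀ hy₀
  obtain ⟨K, hIK⟩ := I.exists_nat_subset_range
  have hcyl : spliceRows z N b '' {y | ∀ k < N + K, y k = y₀ k} ⊆ E j := by
    rintro _ ⟨y, hy, rfl⟩
    refine (interior_subset (hIu fun k hk => ?_) : y ∈ spliceRows z N b ⁻¹' E j)
    rw [hy k ((Finset.mem_range.mp (hIK hk)).trans_le (Nat.le_add_left K N))]
    exact (hu k hk).2
  refine ⟨spliceRows z N b y₀, N + K, fun x hx => ⟨fun p hp => ?_, mem_iUnion_of_mem j ?_⟩⟩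
  · rw [hx p (by omega), spliceRows_of_lt z N b hp]
  · exact closure_minimal hcyl (hE j)
      (rowCyl_subset_closure_image_spliceRows z N b (Nat.le_add_right N K) y₀ hx)

/-- The cofinite × cofinite filter cannot be separated from its dual ideal by a Δ⁰₃ set. -/
theorem stmt9 :
    ¬ ∃ C : Set (ℕ × ℕ → Bool), DeltaZero 3 C ∧ cofXcof ⊆ C ∧ C ∩ cofXcofStar = ∅ := by
  rintro ⟨C, ⟨hC, hCc⟩, hF, hFstar⟩
  obtain ⟨G, hG, hCG⟩ := hC.exists_isClosed_compl_eq_iInter_iUnion le_rfl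
  obtain ⟨H, hH, hCH⟩ := hCc.exists_isClosed_compl_eq_iInter_iUnion le_rfl
  rw [compl_compl] at hCH
  have hFstarG : ∀ k, cofXcofStar ⊆ ⋃ j, G k j := fun k x hx => by
    have hxC : x ∈ Cᶜ := fun hxC => hFstar.subset ⟨hxC, hx⟩
    exact mem_iInter.mp (hCG ▸ hxC) k
  have hFH : ∀ k, cofXcof ⊆ ⋃ j, H k j := fun k x hx => mem_iInter.mp (hCH ▸ hF hx) k
  have hrefine : ∀ k (i : (ℕ × ℕ → Bool) × ℕ), ∃ i' : (ℕ × ℕ → Bool) × ℕ,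
      rowCyl i'.1 i'.2 ⊆ rowCyl i.1 i.2 ∩ ((⋃ j, G k j) ∩ ⋃ j, H k j) := by
    rintro k ⟨z, N⟩
    obtain ⟨z₁, N₁, h₁⟩ :=
      exists_rowCyl_subset_inter_iUnion (hG k) (cofXcofStar_eq ▸ hFstarG k) z N
    obtain ⟨z₂, N₂, h₂⟩ := exists_rowCyl_subset_inter_iUnion (hH k) (cofXcof_eq ▸ hFH k) z₁ N₁
    exact ⟨(z₂, N₂), fun x hx => ⟨(h₁ (h₂ hx).1).1, (h₁ (h₂ hx).1).2, (h₂ hx).2⟩⟩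
  obtain ⟨x, hx⟩ := exists_forall_mem_of_forall_exists_subset_inter
    (K := fun i : (ℕ × ℕ → Bool) × ℕ => rowCyl i.1 i.2) (fun i => isClosed_rowCyl i.1 i.2)
    (fun i => ⟨i.1, self_mem_rowCyl i.1 i.2⟩) hrefine
  have hxC : x ∈ C := hCH ▸ mem_iInter.mpr fun k => (hx k).2
  exact (hCG ▸ mem_iInter.mpr fun k => (hx k).1 : x ∈ Cᶜ) hxC
end

section
/- Let F be the cofinite × cofinite filter on ω × ω: A ∈ F iff for all but finitely many n, for all but finitely many m, (n,m) ∈ A; and let F* = {(ω×ω) \ A : A ∈ F}. Suppose A and B are disjoint sets in Σ⁰₃(2^ω). Then there exists a continuous function h : 2^ω → 2^{ω×ω} such that h(A) ⊆ F and h(B) ⊆ F* (identifying subsets of ω × ω with their characteristic functions in 2^{ω×ω}). -/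
/-!
A Σ⁰₃ set is a countable union of Gδ sets, so `A = ⋃ₙ Pₙ` and `B = ⋃ₙ Qₙ` with `Pₙ`, `Qₙ`
increasing Gδ sets, disjoint from `B` and `A` respectively. Write a Gδ set `P` as `⋂ₖ Wₖ` with
`Wₖ` decreasing open and each `Wₖ` as an increasing union `⋃ₘ Cₖₘ` of clopen sets; then
`c x m = #{k < m | x ∈ Cₖₘ}` is locally constant in `x`, tends to infinity on `P` and stays
bounded off `P`. Row `n` of `h x` is true at column `m` when the counter of `Pₙ` exceeds that
of `Qₙ`. For `x ∈ A`, eventually `x ∈ Pₙ \ Qₙ`, so cofinitely many rows are cofinitely true;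
symmetrically for `x ∈ B`.
-/

open Filter Set TopologicalSpace

theorem Ordinal.eq_one_of_one_le_of_lt_two {β : Ordinal} (h1 : 1 ≤ β) (h2 : β < 2) : β = 1 :=
  le_antisymm (Order.lt_add_one_iff.1 (one_add_one_eq_two (R := Ordinal) ▸ h2)) h1

namespace SigmaZero

variable {X : Type*} [TopologicalSpace X] {α : Ordinal.{0}} {A : Set X}

theorem isOpen_of_one_s10 (h : SigmaZero 1 A) : IsOpen A := by
  cases h with
  | isOpen h => exact h
  | iUnion hα => exact absurd hα (lt_irrefl 1)

theorem exists_eq_iUnion (h : SigmaZero α A) (hα : 1 < α) :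
    ∃ (B : ℕ → Set X) (β : ℕ → Ordinal.{0}), (∀ k, 1 ≤ β k) ∧ (∀ k, β k < α) ∧
      (∀ k, SigmaZero (β k) (B k)ᶜ) ∧ A = ⋃ k, B k := by
  cases h with
  | isOpen => exact absurd hα (lt_irrefl 1)
  | iUnion _ B β hβ1 hβ h => exact ⟨B, β, hβ1, hβ, h, rfl⟩

theorem isGδ_compl_of_two (h : SigmaZero 2 A) : IsGδ Aᶜ := by
  obtain ⟨B, β, hβ1, hβ, hB, rfl⟩ := h.exists_eq_iUnion one_lt_two
  rw [compl_iUnion]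
  refine .iInter_of_isOpen fun k => isOpen_of_one_s10 ?_
  exact Ordinal.eq_one_of_one_le_of_lt_two (hβ1 k) (hβ k) ▸ hB k

theorem exists_isGδ_of_three [PerfectlyNormalSpace X] (h : SigmaZero 3 A) :
    ∃ G : ℕ → Set X, (∀ n, IsGδ (G n)) ∧ A = ⋃ n, G n := by
  obtain ⟨B, β, hβ1, hβ, hB, rfl⟩ := h.exists_eq_iUnion (by norm_num)
  refine ⟨B, fun k => ?_, rfl⟩
  have hβk : β k ≤ 2 := Order.lt_add_one_iff.1 (two_add_one_eq_three (R := Ordinal) ▸ hβ k)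
  have hBk := hB k
  rcases hβk.lt_or_eq with hβk | hβk
  · rw [Ordinal.eq_one_of_one_le_of_lt_two (hβ1 k) hβk] at hBk
    simpa using (isOpen_of_one_s10 hBk).isClosed_compl.isGδ
  · rw [hβk] at hBk
    simpa using isGδ_compl_of_two hBk

end SigmaZero

theorem IsOpen.exists_monotone_isClopen_iUnion_eq {X : Type*} [TopologicalSpace X]
    [SecondCountableTopology X]
    (hX : IsTopologicalBasis {s : Set X | IsClopen s}) {W : Set X} (hW : IsOpen W) :
    ∃ C : ℕ → Set X, (∀ m, IsClopen (C m)) ∧ Monotone C ∧ ⋃ m, C m = W := by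
  obtain ⟨s, hs, hsc, rfl⟩ := hX.exists_countable_biUnion_of_isOpen hW
  obtain ⟨D, hD⟩ := (hsc.insert ∅).exists_eq_range (insert_nonempty ∅ s)
  have hDclopen : ∀ m, IsClopen (D m) := fun m => by
    rcases (hD ▸ mem_range_self m : D m ∈ insert ∅ s) with h | h
    · exact h ▸ isClopen_empty
    · exact hs h
  refine ⟨accumulate D, fun m => (finite_Iic m).isClopen_biUnion fun k _ => hDclopen k,
    monotone_accumulate, ?_⟩
  rw [iUnion_accumulate, ← sUnion_range, ← hD, sUnion_insert, empty_union, sUnion_eq_biUnion]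

section ApproxCount

open Classical
open scoped Finset

variable {X : Type*} {C : ℕ → ℕ → Set X}

noncomputable def approxCount (C : ℕ → ℕ → Set X) (x : X) (m : ℕ) : ℕ :=
  #{k ∈ Finset.range m | x ∈ C k m}

theorem continuous_approxCount [TopologicalSpace X] (hC : ∀ k m, IsClopen (C k m)) (m : ℕ) :
    Continuous fun x => approxCount C x m := by
  simp only [approxCount, Finset.card_filter]
  exact continuous_finsetSum _ fun k _ =>
    (hC k m).continuous_indicator (f := fun _ => 1) continuous_const

theorem tendsto_approxCount (hC : ∀ k, Monotone (C k)) {x : X} (hx : ∀ k, ∃ m, x ∈ C k m) :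
    Tendsto (approxCount C x) atTop atTop := by
  refine tendsto_atTop.2 fun K => ?_
  have hmem : ∀ᶠ m in atTop, ∀ k ∈ Finset.range K, x ∈ C k m :=
    (Finset.range K).eventually_all.2 fun k _ =>
      let ⟨M, hM⟩ := hx k; eventually_atTop.2 ⟨M, fun m hm => hC k hm hM⟩
  filter_upwards [hmem, eventually_ge_atTop K] with m hm hKm
  calc K = #(Finset.range K) := (Finset.card_range K).symm
    _ ≤ approxCount C x m := Finset.card_le_card fun k hk =>
      Finset.mem_filter.2 ⟨Finset.range_subset_range.2 hKm hk, hm k hk⟩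

theorem approxCount_le {x : X} {K : ℕ} (hx : ∀ k ≥ K, ∀ m, x ∉ C k m) (m : ℕ) :
    approxCount C x m ≤ K :=
  calc approxCount C x m ≤ #(Finset.range K) := Finset.card_le_card fun k hk => by
        obtain ⟨-, hk⟩ := Finset.mem_filter.1 hk
        exact Finset.mem_range.2 (lt_of_not_ge fun hK => hx k hK m hk)
    _ = K := Finset.card_range K

end ApproxCount

theorem isGδ_accumulate {X : Type*} [TopologicalSpace X] {G : ℕ → Set X}
    (hG : ∀ n, IsGδ (G n)) (n : ℕ) : IsGδ (accumulate G n) :=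
  .biUnion (finite_Iic n) fun k _ => hG k

theorem IsGδ.exists_counter {X : Type*} [TopologicalSpace X] [SecondCountableTopology X]
    (hX : IsTopologicalBasis {s : Set X | IsClopen s}) {P : Set X} (hP : IsGδ P) :
    ∃ c : X → ℕ → ℕ, (∀ m, Continuous fun x => c x m) ∧
      (∀ x ∈ P, Tendsto (c x) atTop atTop) ∧ (∀ x ∉ P, ∃ K, ∀ m, c x m ≤ K) := by
  obtain ⟨f, hf, rfl⟩ := hP.eq_iInter_nat
  have hW : ∀ k, IsOpen (dissipate f k) := fun k => (finite_Iic k).isOpen_biInter fun i _ => hf i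
  choose C hC hCmono hCW using fun k => (hW k).exists_monotone_isClopen_iUnion_eq hX
  refine ⟨approxCount C, continuous_approxCount hC,
    fun x hx => tendsto_approxCount hCmono fun k => ?_, fun x hx => ?_⟩
  · exact mem_iUnion.1 (hCW k ▸ iInter_subset_dissipate k hx)
  · obtain ⟨K, hK⟩ : ∃ K, x ∉ f K := by simpa using hx
    refine ⟨K, approxCount_le fun k hk m hxC => hK ?_⟩
    exact dissipate_subset hk (hCW k ▸ mem_iUnion_of_mem m hxC)

theorem eventually_eventually_lt_of_mem_iUnion {X : Type*} {G H : ℕ → Set X}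
    {cG cH : ℕ → X → ℕ → ℕ}
    (hcG : ∀ n, ∀ x ∈ accumulate G n, Tendsto (cG n x) atTop atTop)
    (hcH : ∀ n, ∀ x ∉ accumulate H n, ∃ K, ∀ m, cH n x m ≤ K)
    {x : X} (hxG : x ∈ ⋃ n, G n) (hxH : x ∉ ⋃ n, H n) :
    ∀ᶠ n in atTop, ∀ᶠ m in atTop, cH n x m < cG n x m := by
  obtain ⟨j, hj⟩ := mem_iUnion.1 hxG
  filter_upwards [eventually_ge_atTop j] with n hn
  obtain ⟨K, hK⟩ := hcH n x fun h => hxH (accumulate_subset_iUnion n h)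
  filter_upwards [(hcG n x (mem_accumulate.2 ⟨j, hn, hj⟩)).eventually_gt_atTop K] with m hm
  exact (hK m).trans_lt hm

theorem stmt10 (A B : Set (ℕ → Bool)) (hA : SigmaZero 3 A) (hB : SigmaZero 3 B)
    (hdisj : A ∩ B = ∅) :
    ∃ h : (ℕ → Bool) → (ℕ × ℕ → Bool), Continuous h ∧
      h '' A ⊆ cofXcof ∧ h '' B ⊆ cofXcofStar := by
  obtain ⟨G, hG, rfl⟩ := hA.exists_isGδ_of_three
  obtain ⟨H, hH, rfl⟩ := hB.exists_isGδ_of_three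
  have hdisj : Disjoint (⋃ n, G n) (⋃ n, H n) := disjoint_iff_inter_eq_empty.2 hdisj
  choose cG hcG_cont hcG_top hcG_bdd using
    fun n => (isGδ_accumulate hG n).exists_counter isTopologicalBasis_isClopen
  choose cH hcH_cont hcH_top hcH_bdd using
    fun n => (isGδ_accumulate hH n).exists_counter isTopologicalBasis_isClopen
  refine ⟨fun x p => decide (cH p.1 x p.2 < cG p.1 x p.2), continuous_pi fun p => ?_, ?_, ?_⟩
  · exact continuous_of_discreteTopology (f := fun q : ℕ × ℕ => decide (q.1 < q.2)) |>.comp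
      ((hcH_cont p.1 p.2).prodMk (hcG_cont p.1 p.2))
  · rintro _ ⟨x, hx, rfl⟩
    simp only [cofXcof, mem_ofPred_eq, Nat.cofinite_eq_atTop, decide_eq_true_eq]
    exact eventually_eventually_lt_of_mem_iUnion hcG_top hcH_bdd hx
      (hdisj.notMem_of_mem_left hx)
  · rintro _ ⟨x, hx, rfl⟩
    simp only [cofXcofStar, cofXcof, mem_ofPred_eq, Nat.cofinite_eq_atTop, Bool.not_eq_true',
      decide_eq_false_iff_not, not_lt]
    refine (eventually_eventually_lt_of_mem_iUnion hcH_top hcG_bdd hx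
      (hdisj.notMem_of_mem_right hx)).mono fun n hn => ?_
    exact hn.mono fun m hm => hm.le
end

section
/- Let LO ⊆ 2^{ω×ω} be the set of (characteristic functions of) linear orderings of ℕ, and WO ⊆ LO the set of well-orderings. Define D₁ = {(L₁,L₂) ∈ LO × LO : L₁ ∈ WO and there is no order embedding of L₂ into L₁} and D₂ = {(L₁,L₂) ∈ LO × LO : L₂ ∈ WO and there is no order embedding of L₁ into L₂}. Then D₁ and D₂ are disjoint and there is no Borel set C ⊆ 2^{ω×ω} × 2^{ω×ω} with D₁ ⊆ C and C ∩ D₂ = ∅. -/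
/-- `L` (a point of `2^{ω×ω}`) is a linear ordering of ℕ: reflexive, antisymmetric,
transitive and total. -/
def IsLinOrd (L : ℕ × ℕ → Bool) : Prop :=
  (∀ n, L (n, n) = true) ∧
  (∀ m n, L (m, n) = true → L (n, m) = true → m = n) ∧
  (∀ m n p, L (m, n) = true → L (n, p) = true → L (m, p) = true) ∧
  (∀ m n, L (m, n) = true ∨ L (n, m) = true)

/-- `L` is a well-ordering of ℕ: a linear ordering in which every nonempty set
has a least element. -/
def IsWellOrd (L : ℕ × ℕ → Bool) : Prop :=
  IsLinOrd L ∧ ∀ S : Set ℕ, S.Nonempty → ∃ n ∈ S, ∀ m ∈ S, L (n, m) = true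

/-- There is an order embedding of `L₂` into `L₁`. -/
def OrdEmbeds (L₂ L₁ : ℕ × ℕ → Bool) : Prop :=
  ∃ f : ℕ → ℕ, Function.Injective f ∧
    ∀ m n, L₂ (m, n) = true ↔ L₁ (f m, f n) = true

/-- D₁ : pairs of linear orders (L₁, L₂) with L₁ a well-order and L₂ not embeddable
into L₁. -/
def Done : Set ((ℕ × ℕ → Bool) × (ℕ × ℕ → Bool)) :=
  {p | IsLinOrd p.1 ∧ IsLinOrd p.2 ∧ IsWellOrd p.1 ∧ ¬ OrdEmbeds p.2 p.1}

/-- D₂ : pairs of linear orders (L₁, L₂) with L₂ a well-order and L₁ not embeddable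
into L₂. -/
def Dtwo : Set ((ℕ × ℕ → Bool) × (ℕ × ℕ → Bool)) :=
  {p | IsLinOrd p.1 ∧ IsLinOrd p.2 ∧ IsWellOrd p.2 ∧ ¬ OrdEmbeds p.1 p.2}

namespace Sep

abbrev XX : Type := ℕ × ℕ → Bool

/-- the strict relation associated to a linear ordering code -/
def sRel (L : XX) : ℕ → ℕ → Prop := fun m n => L (m, n) = true ∧ m ≠ n

theorem sRel_total {L : XX} (hL : IsLinOrd L) {m n : ℕ} (hmn : m ≠ n) :
    sRel L m n ∨ sRel L n m := by
  rcases hL.2.2.2 m n with h | h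
  · exact Or.inl ⟨h, hmn⟩
  · exact Or.inr ⟨h, hmn.symm⟩

theorem isWellOrder_sRel {L : XX} (h : IsWellOrd L) : IsWellOrder ℕ (sRel L) := by
  obtain ⟨hL, hW⟩ := h
  refine { trichotomous := ?tri, wf := ?wfg }
  case tri =>
    intro m n hmn1 hmn2
    rcases eq_or_ne m n with rfl | hmn
    · rfl
    · rcases sRel_total hL hmn with h | h
      · exact absurd h hmn1
      · exact absurd h hmn2
  case wfg =>
    rw [WellFounded.wellFounded_iff_has_min]
    intro s hs
    obtain ⟨n, hn, hmin⟩ := hW s hs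
    refine ⟨n, hn, ?_⟩
    rintro x hx ⟨hxn, hxn'⟩
    exact hxn' (hL.2.1 _ _ hxn (hmin x hx))

theorem ordEmbeds_iff_relEmb {A B : XX} (hA : IsLinOrd A) (hB : IsLinOrd B) :
    OrdEmbeds A B ↔ Nonempty (sRel A ↪r sRel B) := by
  constructor
  · rintro ⟨f, hinj, hf⟩
    refine ⟨⟨⟨f, hinj⟩, ?_⟩⟩
    intro m n
    simp only [Function.Embedding.coeFn_mk]
    constructor
    · rintro ⟨h1, h2⟩
      exact ⟨(hf m n).2 h1, fun e => h2 (congrArg f e)⟩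
    · rintro ⟨h1, h2⟩
      exact ⟨(hf m n).1 h1, fun e => h2 (hinj e)⟩
  · rintro ⟨f⟩
    refine ⟨f, f.injective, fun m n => ?_⟩
    rcases eq_or_ne m n with rfl | hmn
    · simp [hA.1 m, hB.1 (f m)]
    · constructor
      · intro h
        exact (f.map_rel_iff.2 (⟨h, hmn⟩ : sRel A m n)).1
      · intro h
        have : sRel B (f m) (f n) := ⟨h, fun e => hmn (f.injective e)⟩
        exact (f.map_rel_iff.1 this).1

/-- add a new top element (namely `0`) on top of `L` -/
def succL (L : XX) : XX := fun q =>
  if q.2 = 0 then true else if q.1 = 0 then false else L (q.1 - 1, q.2 - 1)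

@[simp] theorem succL_top (L : XX) (m : ℕ) : succL L (m, 0) = true := by simp [succL]
@[simp] theorem succL_bot (L : XX) (n : ℕ) : succL L (0, n + 1) = false := by simp [succL]
@[simp] theorem succL_succ (L : XX) (m n : ℕ) : succL L (m + 1, n + 1) = L (m, n) := by
  simp [succL]

theorem isLinOrd_succL {L : XX} (hL : IsLinOrd L) : IsLinOrd (succL L) := by
  refine ⟨?_, ?_, ?_, ?_⟩
  · rintro (_ | n)
    · exact succL_top L 0
    · simpa using hL.1 n
  · rintro (_ | m) (_ | n) h1 h2
    · rfl
    · simp at h1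
    · simp at h2
    · simp only [succL_succ] at h1 h2
      exact congrArg Nat.succ (hL.2.1 _ _ h1 h2)
  · rintro (_ | m) (_ | n) (_ | p) h1 h2 <;> simp_all
    exact hL.2.2.1 _ _ _ h1 h2
  · rintro (_ | m) (_ | n)
    · exact Or.inl (succL_top L 0)
    · exact Or.inr (succL_top L _)
    · exact Or.inl (succL_top L _)
    · simpa using hL.2.2.2 m n

theorem isWellOrd_succL {L : XX} (hL : IsWellOrd L) : IsWellOrd (succL L) := by
  refine ⟨isLinOrd_succL hL.1, fun S hS => ?_⟩
  by_cases h : (Nat.succ ⁻¹' S).Nonempty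
  · obtain ⟨n, hn, hmin⟩ := hL.2 _ h
    refine ⟨n + 1, hn, ?_⟩
    rintro (_ | m) hm
    · simp
    · simpa using hmin m hm
  · obtain ⟨m, hm⟩ := hS
    have hm0 : m = 0 := by
      cases m with
      | zero => rfl
      | succ k => exact absurd ⟨k, hm⟩ h
    subst hm0
    refine ⟨0, hm, ?_⟩
    rintro (_ | m) hm'
    · exact succL_top L 0
    · exact absurd ⟨m, hm'⟩ h

theorem embeds_succL (L : XX) : OrdEmbeds L (succL L) :=
  ⟨Nat.succ, fun a b h => Nat.succ_injective h, fun m n => by simp⟩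

theorem ordEmbeds_trans {A B C : XX} (h1 : OrdEmbeds A B) (h2 : OrdEmbeds B C) :
    OrdEmbeds A C := by
  obtain ⟨f, hf, hfi⟩ := h1
  obtain ⟨g, hg, hgi⟩ := h2
  exact ⟨g ∘ f, hg.comp hf, fun m n => (hfi m n).trans (hgi (f m) (f n))⟩

theorem embeds_wellOrd {L M : XX} (h : OrdEmbeds L M) (hM : IsWellOrd M) (hL : IsLinOrd L) :
    IsWellOrd L := by
  obtain ⟨f, hinj, hf⟩ := h
  refine ⟨hL, fun S hS => ?_⟩
  obtain ⟨n, hn, hmin⟩ := hM.2 (f '' S) (hS.image f)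
  obtain ⟨s, hs, rfl⟩ := hn
  exact ⟨s, hs, fun m hm => (hf s m).2 (hmin (f m) ⟨m, hm, rfl⟩)⟩

theorem relEmb_no_descent {r : ℕ → ℕ → Prop} (hw : WellFounded r) (φ : r ↪r r) :
    ∀ a, ¬ r (φ a) a := by
  intro a
  induction a using hw.induction with
  | _ a ih =>
    intro h
    exact ih (φ a) h (φ.map_rel_iff.2 h)

theorem not_embeds_succ_self {B : XX} (hB : IsWellOrd B) : ¬ OrdEmbeds (succL B) B := by
  rintro ⟨f, hinj, hf⟩
  have hwo : IsWellOrder ℕ (sRel (succL B)) := isWellOrder_sRel (isWellOrd_succL hB)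
  have hiff : ∀ m n, succL B (m, n) = true ↔ succL B (f m + 1, f n + 1) = true := by
    intro m n
    rw [succL_succ]
    exact hf m n
  have hinj' : Function.Injective (fun n => f n + 1) := by
    intro a b h
    exact hinj (Nat.succ_injective h)
  let φ : sRel (succL B) ↪r sRel (succL B) :=
    ⟨⟨fun n => f n + 1, hinj'⟩, by
      intro m n
      simp only [Function.Embedding.coeFn_mk]
      constructor
      · rintro ⟨h1, h2⟩
        exact ⟨(hiff m n).2 h1, fun e => h2 (by rw [e])⟩
      · rintro ⟨h1, h2⟩
        exact ⟨(hiff m n).1 h1, fun e => h2 (hinj' e)⟩⟩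
  have : sRel (succL B) (φ 0) 0 := ⟨succL_top _ _, by simp [φ]⟩
  exact relEmb_no_descent hwo.wf φ 0 this

theorem wo_compare {A B : XX} (hA : IsWellOrd A) (hB : IsWellOrd B) :
    OrdEmbeds A B ∨ OrdEmbeds (succL B) A := by
  haveI iA := isWellOrder_sRel hA
  haveI iB := isWellOrder_sRel hB
  rcases InitialSeg.total (sRel A) (sRel B) with f | f
  · exact Or.inl ((ordEmbeds_iff_relEmb hA.1 hB.1).2 ⟨f.toRelEmbedding⟩)
  · rcases em (Function.Surjective f) with hsurj | hsurj
    · left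
      rw [ordEmbeds_iff_relEmb hA.1 hB.1]
      have hg : ∀ m, f ((hsurj m).choose) = m := fun m => (hsurj m).choose_spec
      have hginj : Function.Injective (fun m => (hsurj m).choose) := by
        intro a b h
        simp only at h
        rw [← hg a, ← hg b, h]
      refine ⟨⟨⟨fun m => (hsurj m).choose, hginj⟩, ?_⟩⟩
      intro m n
      simp only [Function.Embedding.coeFn_mk]
      constructor
      · intro h
        have := f.map_rel_iff.2 h
        rwa [hg, hg] at this
      · intro h
        apply f.map_rel_iff.1
        rwa [hg, hg]
    · right
      rw [ordEmbeds_iff_relEmb (isLinOrd_succL hB.1) hA.1]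
      simp only [Function.Surjective, not_forall] at hsurj
      obtain ⟨t, ht'⟩ := hsurj
      have ht : ∀ b, f b ≠ t := by
        intro b hb
        exact ht' ⟨b, hb⟩
      have hlt : ∀ b, sRel A (f b) t := by
        intro b
        rcases trichotomous_of (sRel A) (f b) t with h | h | h
        · exact h
        · exact absurd h (ht b)
        · obtain ⟨b', hb'⟩ := f.mem_range_of_rel h
          exact absurd hb' (ht b')
      have hfinj : Function.Injective f := f.toRelEmbedding.injective
      refine ⟨⟨⟨fun k => Nat.casesOn k t (fun n => f n), ?_⟩, ?_⟩⟩
      · rintro (_ | a) (_ | b) h <;> simp only at h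
        · rfl
        · exact absurd h.symm (ht b)
        · exact absurd h (ht a)
        · exact congrArg Nat.succ (hfinj h)
      · rintro (_ | a) (_ | b)
        · constructor
          · rintro ⟨_, h⟩
            exact absurd rfl h
          · rintro ⟨_, h⟩
            exact absurd rfl h
        · simp only [Function.Embedding.coeFn_mk]
          constructor
          · intro h
            exact absurd (trans_of (sRel A) h (hlt b)) (irrefl_of (sRel A) t)
          · rintro ⟨h1, _⟩
            exact absurd h1 (by simp)
        · simp only [Function.Embedding.coeFn_mk]
          constructor
          · intro _
            exact ⟨succL_top _ _, Nat.succ_ne_zero a⟩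
          · intro _
            exact hlt a
        · simp only [Function.Embedding.coeFn_mk]
          constructor
          · intro h
            have hab := f.map_rel_iff.1 h
            exact ⟨by simpa using hab.1, by
              intro e
              exact hab.2 (Nat.succ_injective e)⟩
          · rintro ⟨h1, h2⟩
            apply f.map_rel_iff.2
            exact ⟨by simpa using h1, fun e => h2 (by rw [e])⟩

theorem not_embeds_both {A B : XX} (hB : IsWellOrd B) :
    ¬ (OrdEmbeds (succL B) A ∧ OrdEmbeds A B) := by
  rintro ⟨h1, h2⟩
  exact not_embeds_succ_self hB (ordEmbeds_trans h1 h2)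

theorem done_inter_dtwo : Done ∩ Dtwo = ∅ := by
  ext p
  simp only [Set.mem_inter_iff, Set.mem_empty_iff_false, iff_false]
  rintro ⟨⟨h1, h2, hw1, hne1⟩, ⟨_, _, hw2, hne2⟩⟩
  rcases wo_compare hw1 hw2 with h | h
  · exact hne2 h
  · exact hne1 (ordEmbeds_trans (embeds_succL p.2) h)




open Filter Topology

/-- evaluation at a varying discrete index is continuous -/
theorem continuous_eval_discrete {W : Type*} [TopologicalSpace W] {g : W → XX}
    (hg : Continuous g) {i : W → ℕ × ℕ} (hi : Continuous i) :
    Continuous fun w => g w (i w) := by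
  rw [continuous_iff_continuousAt]
  intro w
  have h1 : ∀ᶠ w' in 𝓝 w, i w' = i w := by
    have : IsOpen (i ⁻¹' {i w}) := (isOpen_discrete _).preimage hi
    exact this.mem_nhds rfl
  have h2 : ∀ᶠ w' in 𝓝 w, g w' (i w) = g w (i w) := by
    have hc : Continuous fun w' => g w' (i w) := (continuous_apply (i w)).comp hg
    have : IsOpen ((fun w' => g w' (i w)) ⁻¹' {g w (i w)}) :=
      (isOpen_discrete _).preimage hc
    exact this.mem_nhds rfl
  have h3 : ∀ᶠ w' in 𝓝 w, g w' (i w') = g w (i w) := by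
    filter_upwards [h1, h2] with w' e1 e2
    rw [e1, e2]
  refine Filter.Tendsto.congr' ?_ tendsto_const_nhds
  filter_upwards [h3] with w' e
  exact e.symm

/-- a map that factors through a continuous map into a discrete space is continuous -/
theorem continuous_via_discrete {W D E : Type*} [TopologicalSpace W] [TopologicalSpace D]
    [DiscreteTopology D] [TopologicalSpace E] {r : W → D} (hr : Continuous r) {f : W → E}
    (h : ∀ w w', r w = r w' → f w = f w') : Continuous f := by
  classical
  rcases isEmpty_or_nonempty W with hW | hW
  · rw [continuous_iff_continuousAt]
    intro w
    exact (hW.false w).elim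
  · haveI : Nonempty E := ⟨f (Classical.arbitrary W)⟩
    have hf : f = (fun d => if hd : ∃ w, r w = d then f hd.choose else Classical.arbitrary E) ∘ r := by
      funext w
      have hex : ∃ w', r w' = r w := ⟨w, rfl⟩
      simp only [Function.comp_apply, dif_pos hex]
      symm
      exact h _ _ hex.choose_spec
    rw [hf]
    exact (continuous_of_discreteTopology).comp hr

noncomputable def enat : ℕ ≃ ℕ × ℕ := (Denumerable.eqv (ℕ × ℕ)).symm

theorem approx_mem {F : Set (XX × (ℕ → ℕ))} (hF : IsClosed F) (x : XX) (β : ℕ → ℕ)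
    (h : ∀ k, ∃ p ∈ F, (∀ i, i < k → p.1 (enat i) = x (enat i)) ∧ (∀ i, i < k → p.2 i = β i)) :
    (x, β) ∈ F := by
  choose p hp h1 h2 using h
  have t1 : Tendsto (fun k => (p k).1) atTop (𝓝 x) := by
    rw [tendsto_pi_nhds]
    intro q
    apply Filter.Tendsto.congr' _ tendsto_const_nhds
    rw [Filter.EventuallyEq, eventually_atTop]
    refine ⟨enat.symm q + 1, fun k hk => ?_⟩
    have := h1 k (enat.symm q) (by omega)
    rw [Equiv.apply_symm_apply] at this
    exact this.symm
  have t2 : Tendsto (fun k => (p k).2) atTop (𝓝 β) := by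
    rw [tendsto_pi_nhds]
    intro i
    apply Filter.Tendsto.congr' _ tendsto_const_nhds
    rw [Filter.EventuallyEq, eventually_atTop]
    exact ⟨i + 1, fun k hk => (h2 k i (by omega)).symm⟩
  have := hF.mem_of_tendsto (t1.prodMk_nhds t2) (Filter.Eventually.of_forall (fun k => by
    have := hp k
    simpa using this))
  simpa using this





noncomputable def dec : ℕ → List ℕ := Denumerable.ofNat (List ℕ)

theorem dec_injective : Function.Injective dec := by
  intro a b h
  unfold dec at h
  have := congrArg Encodable.encode h
  rwa [Denumerable.encode_ofNat, Denumerable.encode_ofNat] at this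

@[simp] theorem dec_encode (l : List ℕ) : dec (Encodable.encode l) = l :=
  Denumerable.ofNat_encode l

def lift : List ℕ → List (WithTop ℕ) := fun s => (s.map (fun n : ℕ => (n : WithTop ℕ))) ++ [⊤]

@[simp] theorem lift_cons (a : ℕ) (s : List ℕ) :
    lift (a :: s) = (a : WithTop ℕ) :: lift s := by simp [lift]

@[simp] theorem lift_nil : lift [] = [⊤] := by simp [lift]

theorem lift_injective : Function.Injective lift := by
  intro s t h
  unfold lift at h
  have h2 : s.map (fun n : ℕ => (n : WithTop ℕ)) = t.map (fun n : ℕ => (n : WithTop ℕ)) :=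
    (List.append_inj' h rfl).1
  exact List.map_injective_iff.2 (fun a b hab => by exact_mod_cast hab) h2

theorem lift_append_lt {s t : List ℕ} (ht : t ≠ []) : lift (s ++ t) < lift s := by
  induction s with
  | nil =>
    cases t with
    | nil => exact absurd rfl ht
    | cons a t' =>
      simp only [List.nil_append, lift_cons, lift_nil]
      exact List.Lex.rel (WithTop.coe_lt_top a)
  | cons a s' ih =>
    simp only [List.cons_append, lift_cons]
    exact List.Lex.cons ih

theorem lex_cons_le {α : Type*} [LinearOrder α] {a b : α} {s t : List α}
    (h : List.Lex (· < ·) (a :: s) (b :: t)) : a ≤ b := by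
  cases h with
  | rel h => exact h.le
  | cons h => exact le_rfl

theorem lift_head_le {a b : ℕ} {s t : List ℕ} (h : lift (a :: s) < lift (b :: t)) : a ≤ b := by
  simp only [lift_cons] at h
  exact_mod_cast lex_cons_le h

theorem lift_cons_lt_iff {a : ℕ} {s t : List ℕ} :
    lift (a :: s) < lift (a :: t) ↔ lift s < lift t := by
  simp only [lift_cons]
  exact List.lex_cons_iff

theorem not_lift_nil_lt (t : List ℕ) : ¬ lift [] < lift t := by
  intro h
  rw [lift_nil] at h
  cases t with
  | nil =>
    rw [lift_nil] at h
    cases h with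
    | rel h => exact lt_irrefl _ h
    | cons h => cases h
  | cons a t' =>
    rw [lift_cons] at h
    cases h with
    | rel h => exact not_top_lt h


def GoodP (T : Set (List ℕ)) (p : List ℕ) : Prop :=
  ∃ g : ℕ → List ℕ, (∀ n, p ++ g n ∈ T) ∧ ∀ n, lift (g (n+1)) < lift (g n)

theorem GoodP.step {T : Set (List ℕ)} {p : List ℕ} (hp : GoodP T p) :
    ∃ a, GoodP T (p ++ [a]) := by
  obtain ⟨g, hgT, hgd⟩ := hp
  have hne : ∀ n, g (n+1) ≠ [] := by
    intro n hnil
    exact not_lift_nil_lt (g n) (hnil ▸ hgd n)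
  have hg1T : ∀ n, p ++ g (n+1) ∈ T := fun n => hgT (n+1)
  have hg1d : ∀ n, lift (g (n+2)) < lift (g (n+1)) := fun n => hgd (n+1)
  have hct : ∀ n, (g (n+1)).head! :: (g (n+1)).tail = g (n+1) :=
    fun n => List.cons_head!_tail (hne n)
  have hd_mono : ∀ n, (g (n+2)).head! ≤ (g (n+1)).head! := by
    intro n
    have h := hg1d n
    rw [← hct (n+1), ← hct n] at h
    exact lift_head_le h
  have hd_mono' : ∀ m k, (g (m+k+1)).head! ≤ (g (m+1)).head! := by
    intro m k
    induction k with
    | zero => exact le_rfl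
    | succ k ih =>
      have h2 := hd_mono (m+k)
      rw [show m+k+2 = m+(k+1)+1 by omega] at h2
      exact le_trans h2 ih
  obtain ⟨N, hN⟩ : ∃ N, (g (N+1)).head! = sInf (Set.range fun n => (g (n+1)).head!) :=
    Nat.sInf_mem (Set.range_nonempty _)
  have hconst : ∀ n, (g (N+n+1)).head! = (g (N+1)).head! := by
    intro n
    refine le_antisymm (hd_mono' N n) ?_
    rw [hN]
    exact Nat.sInf_le ⟨N + n, rfl⟩
  refine ⟨(g (N+1)).head!, fun n => (g (N+n+1)).tail, fun n => ?_, fun n => ?_⟩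
  · have e : (p ++ [(g (N+1)).head!]) ++ (g (N+n+1)).tail = p ++ g (N+n+1) := by
      rw [List.append_assoc]
      congr 1
      rw [List.singleton_append, ← hconst n, hct (N+n)]
    rw [e]
    exact hgT (N+n+1)
  · have h := hg1d (N+n)
    have e2 : g (N+n+2) = (g (N+1)).head! :: (g (N+(n+1)+1)).tail := by
      rw [show N+n+2 = N+(n+1)+1 by omega, ← hconst (n+1), hct (N+(n+1))]
    have e1 : g (N+n+1) = (g (N+1)).head! :: (g (N+n+1)).tail := by
      rw [← hconst n, hct (N+n)]
    rw [e1, e2, lift_cons_lt_iff] at h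
    exact h

theorem goodP_branch {T : Set (List ℕ)} (hpre : ∀ s t, t <+: s → s ∈ T → t ∈ T)
    (h0 : GoodP T []) : ∃ β : ℕ → ℕ, ∀ k, (List.range k).map β ∈ T := by
  classical
  let ch : ℕ → {p : List ℕ // GoodP T p} := fun k => Nat.rec ⟨[], h0⟩
    (fun _ s => ⟨s.1 ++ [Classical.choose s.2.step], Classical.choose_spec s.2.step⟩) k
  have hsucc : ∀ k, (ch (k+1)).1 = (ch k).1 ++ [Classical.choose (ch k).2.step] := fun k => rfl
  have hβ : ∀ k, (List.range k).map (fun k => Classical.choose (ch k).2.step) = (ch k).1 := by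
    intro k
    induction k with
    | zero => rfl
    | succ k ih => rw [List.range_succ, List.map_append, ih, hsucc]; rfl
  refine ⟨fun k => Classical.choose (ch k).2.step, fun k => ?_⟩
  rw [hβ]
  obtain ⟨g, hgT, _⟩ := (ch k).2
  exact hpre _ _ (List.prefix_append _ _) (hgT 0)

theorem descending_branch {T : Set (List ℕ)} (hpre : ∀ s t, t <+: s → s ∈ T → t ∈ T)
    {g : ℕ → List ℕ} (hg : ∀ n, g n ∈ T) (hd : ∀ n, lift (g (n+1)) < lift (g n)) :
    ∃ β : ℕ → ℕ, ∀ k, (List.range k).map β ∈ T :=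
  goodP_branch hpre ⟨g, fun n => by simpa using hg n, hd⟩



theorem range_map_take (f : ℕ → ℕ) (n k : ℕ) :
    ((List.range n).map f).take k = (List.range (min k n)).map f := by
  rw [← List.map_take, List.take_range]

theorem range_map_eq (f g : ℕ → ℕ) (k : ℕ) (h : (List.range k).map f = (List.range k).map g) :
    ∀ i, i < k → f i = g i := by
  intro i hi
  have h1 := List.getElem_of_eq h (i := i) (by simpa using hi)
  simpa using h1

theorem noWO_iff_desc {L : XX} (hL : IsLinOrd L) :
    ¬ IsWellOrd L ↔ ∃ f : ℕ → ℕ, ∀ n, L (f (n+1), f n) = true ∧ f (n+1) ≠ f n := by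
  constructor
  · intro h
    have h2 : ¬ ∀ S : Set ℕ, S.Nonempty → ∃ n ∈ S, ∀ m ∈ S, L (n, m) = true := by
      intro hc
      exact h ⟨hL, hc⟩
    push_neg at h2
    obtain ⟨S, hS, hno⟩ := h2
    have step : ∀ n, n ∈ S → ∃ m, m ∈ S ∧ L (m, n) = true ∧ m ≠ n := by
      intro n hn
      obtain ⟨m, hm, hne⟩ := hno n hn
      have hmn : m ≠ n := by
        rintro rfl
        exact hne (hL.1 m)
      rcases hL.2.2.2 n m with h | h
      · exact absurd h hne
      · exact ⟨m, hm, h, hmn⟩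
    choose stepf h1 h2 h3 using step
    let F : ℕ → {a // a ∈ S} := fun n => Nat.rec ⟨hS.choose, hS.choose_spec⟩
      (fun _ s => ⟨stepf s.1 s.2, h1 s.1 s.2⟩) n
    refine ⟨fun n => (F n).1, fun n => ⟨?_, ?_⟩⟩
    · exact h2 (F n).1 (F n).2
    · exact h3 (F n).1 (F n).2
  · rintro ⟨f, hf⟩ ⟨_, hW⟩
    obtain ⟨n, hn, hmin⟩ := hW (Set.range f) ⟨f 0, ⟨0, rfl⟩⟩
    obtain ⟨k, rfl⟩ := hn
    exact (hf k).2 (hL.2.1 _ _ (hf k).1 (hmin (f (k+1)) ⟨k+1, rfl⟩))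

theorem no_embed_of_desc {L M : XX} (hM : IsWellOrd M)
    (hd : ∃ f : ℕ → ℕ, ∀ n, L (f (n+1), f n) = true ∧ f (n+1) ≠ f n) :
    ¬ OrdEmbeds L M := by
  rintro ⟨g, ginj, giff⟩
  obtain ⟨f, hf⟩ := hd
  exact (noWO_iff_desc hM.1).2
    ⟨g ∘ f, fun n => ⟨(giff _ _).1 (hf n).1, fun e => (hf n).2 (ginj e)⟩⟩ hM

/-- the tree of finite approximations of the closed set `F`, relative to `x` -/
def TreeMem (F : Set (XX × (ℕ → ℕ))) (x : XX) (s : List ℕ) : Prop :=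
  ∃ p ∈ F, (∀ i, i < s.length → p.1 (enat i) = x (enat i)) ∧ (List.range s.length).map p.2 = s

theorem TreeMem.prefix {F x} {s t : List ℕ} (h : TreeMem F x s) (hts : t <+: s) :
    TreeMem F x t := by
  obtain ⟨p, hp, h1, h2⟩ := h
  have hlen : t.length ≤ s.length := hts.length_le
  refine ⟨p, hp, fun i hi => h1 i (lt_of_lt_of_le hi hlen), ?_⟩
  have ht : t = s.take t.length := List.prefix_iff_eq_take.1 hts
  conv_rhs => rw [ht, ← h2]
  rw [range_map_take, min_eq_left hlen]

theorem TreeMem.determined {F} {x y : XX} {s : List ℕ}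
    (hxy : ∀ i, i < s.length → x (enat i) = y (enat i)) :
    TreeMem F x s ↔ TreeMem F y s := by
  constructor <;> rintro ⟨p, hp, h1, h2⟩
  · exact ⟨p, hp, fun i hi => (h1 i hi).trans (hxy i hi), h2⟩
  · exact ⟨p, hp, fun i hi => (h1 i hi).trans (hxy i hi).symm, h2⟩

theorem treeMem_of_branch_mem {F : Set (XX × (ℕ → ℕ))} {x : XX} {α : ℕ → ℕ}
    (h : (x, α) ∈ F) (k : ℕ) : TreeMem F x ((List.range k).map α) := by
  refine ⟨(x, α), h, fun i hi => rfl, ?_⟩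
  simp

theorem mem_proj_iff_branch {F : Set (XX × (ℕ → ℕ))} (hF : IsClosed F) (x : XX) :
    x ∈ Prod.fst '' F ↔ ∃ β : ℕ → ℕ, ∀ k, (List.range k).map β ∈ {s | TreeMem F x s} := by
  constructor
  · rintro ⟨⟨x', α⟩, hp, rfl⟩
    exact ⟨α, fun k => treeMem_of_branch_mem hp k⟩
  · rintro ⟨β, hβ⟩
    have : (x, β) ∈ F := by
      apply approx_mem hF
      intro k
      obtain ⟨p, hp, h1, h2⟩ := hβ k
      have hlen : ((List.range k).map β).length = k := by simp
      rw [hlen] at h1 h2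
      exact ⟨p, hp, h1, range_map_eq p.2 β k h2⟩
    exact ⟨(x, β), this, rfl⟩


open Classical in
/-- the Kleene–Brouwer-style linear order associated to `F` and `x`:
tree elements (under KB) sit above the non-tree elements (under `≤` on ℕ). -/
noncomputable def LL (F : Set (XX × (ℕ → ℕ))) (x : XX) : XX := fun q =>
  if TreeMem F x (dec q.1) then
    (if TreeMem F x (dec q.2) then decide (lift (dec q.1) ≤ lift (dec q.2)) else false)
  else (if TreeMem F x (dec q.2) then true else decide (q.1 ≤ q.2))

section LLfacts
variable {F : Set (XX × (ℕ → ℕ))} {x : XX} {u v : ℕ}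

theorem LL_tt (hu : TreeMem F x (dec u)) (hv : TreeMem F x (dec v)) :
    LL F x (u, v) = decide (lift (dec u) ≤ lift (dec v)) := by
  simp only [LL, if_pos hu, if_pos hv]

theorem LL_tf (hu : TreeMem F x (dec u)) (hv : ¬ TreeMem F x (dec v)) :
    LL F x (u, v) = false := by
  simp only [LL, if_pos hu, if_neg hv]

theorem LL_ft (hu : ¬ TreeMem F x (dec u)) (hv : TreeMem F x (dec v)) :
    LL F x (u, v) = true := by
  simp only [LL, if_neg hu, if_pos hv]

theorem LL_ff (hu : ¬ TreeMem F x (dec u)) (hv : ¬ TreeMem F x (dec v)) :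
    LL F x (u, v) = decide (u ≤ v) := by
  simp only [LL, if_neg hu, if_neg hv]

theorem LL_lin (F : Set (XX × (ℕ → ℕ))) (x : XX) : IsLinOrd (LL F x) := by
  refine ⟨?_, ?_, ?_, ?_⟩
  · intro n
    by_cases h : TreeMem F x (dec n)
    · rw [LL_tt h h]
      simp
    · rw [LL_ff h h]
      simp
  · intro m n h1 h2
    by_cases hm : TreeMem F x (dec m) <;> by_cases hn : TreeMem F x (dec n)
    · rw [LL_tt hm hn] at h1
      rw [LL_tt hn hm] at h2
      simp only [decide_eq_true_eq] at h1 h2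
      exact dec_injective (lift_injective (le_antisymm h1 h2))
    · rw [LL_tf hm hn] at h1
      exact absurd h1 (by simp)
    · rw [LL_tf hn hm] at h2
      exact absurd h2 (by simp)
    · rw [LL_ff hm hn] at h1
      rw [LL_ff hn hm] at h2
      simp only [decide_eq_true_eq] at h1 h2
      omega
  · intro m n p h1 h2
    by_cases hm : TreeMem F x (dec m) <;> by_cases hn : TreeMem F x (dec n) <;>
      by_cases hp : TreeMem F x (dec p)
    · rw [LL_tt hm hn] at h1
      rw [LL_tt hn hp] at h2
      rw [LL_tt hm hp]
      simp only [decide_eq_true_eq] at h1 h2 ⊢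
      exact le_trans h1 h2
    · rw [LL_tf hn hp] at h2
      exact absurd h2 (by simp)
    · rw [LL_tf hm hn] at h1
      exact absurd h1 (by simp)
    · rw [LL_tf hm hn] at h1
      exact absurd h1 (by simp)
    · rw [LL_ft hm hp]
    · rw [LL_tf hn hp] at h2
      exact absurd h2 (by simp)
    · rw [LL_ft hm hp]
    · rw [LL_ff hm hn] at h1
      rw [LL_ff hn hp] at h2
      rw [LL_ff hm hp]
      simp only [decide_eq_true_eq] at h1 h2 ⊢
      omega
  · intro m n
    by_cases hm : TreeMem F x (dec m) <;> by_cases hn : TreeMem F x (dec n)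
    · rw [LL_tt hm hn, LL_tt hn hm]
      rcases le_total (lift (dec m)) (lift (dec n)) with h | h
      · exact Or.inl (by simpa using h)
      · exact Or.inr (by simpa using h)
    · exact Or.inr (LL_ft hn hm)
    · exact Or.inl (LL_ft hm hn)
    · rw [LL_ff hm hn, LL_ff hn hm]
      rcases le_total m n with h | h
      · exact Or.inl (by simpa using h)
      · exact Or.inr (by simpa using h)

end LLfacts

theorem LL_spec {F : Set (XX × (ℕ → ℕ))} (hF : IsClosed F) (x : XX) :
    x ∈ Prod.fst '' F ↔ ¬ IsWellOrd (LL F x) := by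
  rw [noWO_iff_desc (LL_lin F x), mem_proj_iff_branch hF]
  constructor
  · rintro ⟨β, hβ⟩
    refine ⟨fun n => Encodable.encode ((List.range n).map β), fun n => ?_⟩
    have hn : TreeMem F x (dec (Encodable.encode ((List.range n).map β))) := by
      rw [dec_encode]
      exact hβ n
    have hn1 : TreeMem F x (dec (Encodable.encode ((List.range (n+1)).map β))) := by
      rw [dec_encode]
      exact hβ (n+1)
    constructor
    · rw [LL_tt hn1 hn, dec_encode, dec_encode]
      simp only [decide_eq_true_eq]
      refine le_of_lt ?_
      rw [List.range_succ, List.map_append]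
      exact lift_append_lt (by simp)
    · intro e
      have := congrArg dec e
      rw [dec_encode, dec_encode] at this
      have := congrArg List.length this
      simp at this
  · rintro ⟨f, hf⟩
    by_cases hall : ∀ n, TreeMem F x (dec (f n))
    · have hdesc : ∀ n, lift (dec (f (n+1))) < lift (dec (f n)) := by
        intro n
        have h := (hf n).1
        rw [LL_tt (hall (n+1)) (hall n)] at h
        simp only [decide_eq_true_eq] at h
        rcases lt_or_eq_of_le h with h | h
        · exact h
        · exact absurd (dec_injective (lift_injective h)) (hf n).2
      exact descending_branch (T := {s | TreeMem F x s}) (fun s t hts hs => hs.prefix hts)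
        (g := fun n => dec (f n)) (fun n => hall n) hdesc
    · push_neg at hall
      obtain ⟨n0, hn0⟩ := hall
      have hstay : ∀ k, ¬ TreeMem F x (dec (f (n0 + k))) := by
        intro k
        induction k with
        | zero => simpa using hn0
        | succ k ih =>
          intro hmem
          have h := (hf (n0 + k)).1
          rw [show n0 + k + 1 = n0 + (k+1) by omega] at h
          rw [LL_tf hmem ih] at h
          simp at h
      have hdec : ∀ k, f (n0 + (k+1)) < f (n0 + k) := by
        intro k
        have h := (hf (n0 + k)).1
        have hne := (hf (n0 + k)).2
        rw [show n0 + k + 1 = n0 + (k+1) by omega] at h hne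
        rw [LL_ff (hstay (k+1)) (hstay k)] at h
        simp only [decide_eq_true_eq] at h
        omega
      exfalso
      have hm := Nat.sInf_mem (Set.range_nonempty (fun k => f (n0 + k)))
      rw [Set.mem_range] at hm
      obtain ⟨K, hK⟩ := hm
      exact absurd (Nat.sInf_le (Set.mem_range.2 ⟨K + 1, rfl⟩)) (by
        rw [← hK]
        simpa using hdec K)

theorem LL_continuous (F : Set (XX × (ℕ → ℕ))) : Continuous (LL F) := by
  apply continuous_pi
  intro q
  have hN : ∀ (s : List ℕ) (x y : XX),
      (∀ i : Fin (max (dec q.1).length (dec q.2).length), x (enat i) = y (enat i)) →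
      s.length ≤ max (dec q.1).length (dec q.2).length →
      (TreeMem F x s ↔ TreeMem F y s) := by
    intro s x y hagree hslen
    exact TreeMem.determined (fun i hi => hagree ⟨i, lt_of_lt_of_le hi hslen⟩)
  apply continuous_via_discrete
    (r := fun x : XX => fun i : Fin (max (dec q.1).length (dec q.2).length) => x (enat i))
    (continuous_pi fun i => continuous_apply _)
  intro x y hxy
  have hagree : ∀ i : Fin (max (dec q.1).length (dec q.2).length), x (enat i) = y (enat i) :=
    fun i => congrFun hxy i
  have h1 := hN (dec q.1) x y hagree (le_max_left _ _)
  have h2 := hN (dec q.2) x y hagree (le_max_right _ _)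
  by_cases hu : TreeMem F x (dec q.1) <;> by_cases hv : TreeMem F x (dec q.2)
  · rw [show q = (q.1, q.2) from rfl, LL_tt hu hv, LL_tt (h1.1 hu) (h2.1 hv)]
  · rw [show q = (q.1, q.2) from rfl, LL_tf hu hv, LL_tf (h1.1 hu) (fun c => hv (h2.2 c))]
  · rw [show q = (q.1, q.2) from rfl, LL_ft hu hv, LL_ft (fun c => hu (h1.2 c)) (h2.1 hv)]
  · rw [show q = (q.1, q.2) from rfl, LL_ff hu hv, LL_ff (fun c => hu (h1.2 c)) (fun c => hv (h2.2 c))]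



/-- Σ¹₁ subsets of a topological space: projections of closed subsets of `W × ℕ^ω`. -/
def Sigma11 {W : Type*} [TopologicalSpace W] (s : Set W) : Prop :=
  ∃ F : Set (W × (ℕ → ℕ)), IsClosed F ∧ s = Prod.fst '' F

theorem sigma11_of_analytic {W : Type*} [TopologicalSpace W] [T2Space W] {s : Set W}
    (hs : MeasureTheory.AnalyticSet s) : Sigma11 s := by
  rw [MeasureTheory.AnalyticSet] at hs
  rcases hs with h | ⟨f, hf, hr⟩
  · exact ⟨∅, isClosed_empty, by simp [h]⟩
  · refine ⟨{p | f p.2 = p.1}, isClosed_eq (hf.comp continuous_snd) continuous_fst, ?_⟩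
    rw [← hr]
    ext w
    constructor
    · rintro ⟨α, rfl⟩
      exact ⟨(f α, α), rfl, rfl⟩
    · rintro ⟨⟨w', α⟩, hα, rfl⟩
      exact ⟨α, hα⟩

theorem Sigma11.preimage {W V : Type*} [TopologicalSpace W] [TopologicalSpace V] {s : Set V}
    (hs : Sigma11 s) {g : W → V} (hg : Continuous g) : Sigma11 (g ⁻¹' s) := by
  obtain ⟨F, hF, rfl⟩ := hs
  refine ⟨(fun p : W × (ℕ → ℕ) => (g p.1, p.2)) ⁻¹' F,
    hF.preimage ((hg.comp continuous_fst).prodMk continuous_snd), ?_⟩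
  ext w
  simp only [Set.mem_preimage, Set.mem_image]
  constructor
  · rintro ⟨⟨v, α⟩, hα, hv⟩
    simp only at hv
    subst hv
    exact ⟨(w, α), hα, rfl⟩
  · rintro ⟨⟨w', α⟩, hα, hv⟩
    simp only at hv
    subst hv
    exact ⟨(g w', α), hα, rfl⟩

theorem Sigma11.union {W : Type*} [TopologicalSpace W] {s t : Set W}
    (hs : Sigma11 s) (ht : Sigma11 t) : Sigma11 (s ∪ t) := by
  obtain ⟨F1, hF1, rfl⟩ := hs
  obtain ⟨F2, hF2, rfl⟩ := ht
  have hshift : Continuous fun p : W × (ℕ → ℕ) => (p.1, fun n => p.2 (n+1)) :=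
    continuous_fst.prodMk (continuous_pi fun n => (continuous_apply (n+1)).comp continuous_snd)
  have hz : Continuous fun p : W × (ℕ → ℕ) => p.2 0 := (continuous_apply 0).comp continuous_snd
  refine ⟨({p | p.2 0 = 0} ∩ ((fun p : W × (ℕ → ℕ) => (p.1, fun n => p.2 (n+1))) ⁻¹' F1)) ∪
    ({p | p.2 0 ≠ 0} ∩ ((fun p : W × (ℕ → ℕ) => (p.1, fun n => p.2 (n+1))) ⁻¹' F2)), ?_, ?_⟩
  · refine IsClosed.union (IsClosed.inter ?_ (hF1.preimage hshift))
      (IsClosed.inter ?_ (hF2.preimage hshift))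
    · exact (isClosed_discrete ({0} : Set ℕ)).preimage hz
    · exact (isClosed_discrete ({0}ᶜ : Set ℕ)).preimage hz
  · ext w
    simp only [Set.mem_union, Set.mem_image, Set.mem_inter_iff, Set.mem_setOf_eq,
      Set.mem_preimage]
    constructor
    · rintro (⟨⟨w', α⟩, hα, hv⟩ | ⟨⟨w', α⟩, hα, hv⟩) <;> simp only at hv <;> subst hv
      · refine ⟨(w', fun n => Nat.rec 0 (fun k _ => α k) n), Or.inl ⟨rfl, ?_⟩, rfl⟩
        simpa using hα
      · refine ⟨(w', fun n => Nat.rec 1 (fun k _ => α k) n), Or.inr ⟨by simp, ?_⟩, rfl⟩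
        simpa using hα
    · rintro ⟨⟨w', α⟩, (⟨h0, hα⟩ | ⟨h0, hα⟩), hv⟩ <;> simp only at hv <;> subst hv
      · exact Or.inl ⟨(w', fun n => α (n+1)), hα, rfl⟩
      · exact Or.inr ⟨(w', fun n => α (n+1)), hα, rfl⟩

/-- code of the finite approximation of length `k` of a point of `XX × ℕ^ω` -/
noncomputable def codek (p : XX × (ℕ → ℕ)) (k : ℕ) : ℕ :=
  Encodable.encode (((List.range k).map (fun i => p.1 (enat i))), (List.range k).map p.2)

theorem codek_eq {p q : XX × (ℕ → ℕ)} {k k' : ℕ} (h : codek p k = codek q k') :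
    k = k' ∧ (∀ i, i < k → p.1 (enat i) = q.1 (enat i)) ∧ (∀ i, i < k → p.2 i = q.2 i) := by
  unfold codek at h
  have h2 := Encodable.encode_injective h
  have hk : k = k' := by
    have := congrArg (fun q => q.1.length) h2
    simpa using this
  subst hk
  have e1 := congrArg Prod.fst h2
  have e2 := congrArg Prod.snd h2
  simp only at e1 e2
  refine ⟨rfl, ?_, range_map_eq _ _ _ e2⟩
  intro i hi
  have h1 := List.getElem_of_eq e1 (i := i) (by simpa using hi)
  simpa using h1

theorem continuous_codek (k : ℕ) : Continuous fun p : XX × (ℕ → ℕ) => codek p k := by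
  apply continuous_via_discrete
    (r := fun p : XX × (ℕ → ℕ) => ((fun i : Fin k => p.1 (enat i)), (fun i : Fin k => p.2 i)))
  · exact Continuous.prodMk
      (continuous_pi fun i => (continuous_apply (enat i)).comp continuous_fst)
      (continuous_pi fun i => (continuous_apply (i : ℕ)).comp continuous_snd)
  · intro p q hpq
    have e1 := congrArg Prod.fst hpq
    have e2 := congrArg Prod.snd hpq
    simp only at e1 e2
    unfold codek
    have l1 : (List.range k).map (fun i => p.1 (enat i)) =
        (List.range k).map (fun i => q.1 (enat i)) := by
      apply List.map_congr_left
      intro a ha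
      rw [List.mem_range] at ha
      exact congrFun e1 ⟨a, ha⟩
    have l2 : (List.range k).map p.2 = (List.range k).map q.2 := by
      apply List.map_congr_left
      intro a ha
      rw [List.mem_range] at ha
      exact congrFun e2 ⟨a, ha⟩
    rw [l1, l2]

/-- the universal closed set -/
def UnivF : Set ((XX × XX) × (ℕ → ℕ)) :=
  {q | ∀ k, q.1.1 (codek (q.1.2, q.2) k, 0) = true}

theorem isClosed_univF : IsClosed UnivF := by
  have : UnivF = ⋂ k, {q : (XX × XX) × (ℕ → ℕ) | q.1.1 (codek (q.1.2, q.2) k, 0) = true} := by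
    ext q
    simp [UnivF, Set.mem_iInter]
  rw [this]
  refine isClosed_iInter fun k => ?_
  have hc : Continuous fun q : (XX × XX) × (ℕ → ℕ) => q.1.1 (codek (q.1.2, q.2) k, 0) := by
    apply continuous_eval_discrete (continuous_fst.comp continuous_fst)
    have : Continuous fun q : (XX × XX) × (ℕ → ℕ) => codek (q.1.2, q.2) k :=
      (continuous_codek k).comp ((continuous_snd.comp continuous_fst).prodMk continuous_snd)
    exact this.prodMk continuous_const
  exact (isClosed_discrete ({true} : Set Bool)).preimage hc

/-- the universal Σ¹₁ set over `XX` with parameters in `XX` -/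
def UU : Set (XX × XX) := Prod.fst '' UnivF

theorem sigma11_UU : Sigma11 UU := ⟨UnivF, isClosed_univF, rfl⟩

open Classical in
/-- a parameter coding the Σ¹₁ set `Prod.fst '' F'` -/
noncomputable def aParam (F' : Set (XX × (ℕ → ℕ))) : XX :=
  fun q => decide (∃ p ∈ F', ∃ k, codek p k = q.1)

theorem UU_section {F' : Set (XX × (ℕ → ℕ))} (hF' : IsClosed F') (y : XX) :
    (aParam F', y) ∈ UU ↔ y ∈ Prod.fst '' F' := by
  constructor
  · rintro ⟨⟨⟨a, y'⟩, α⟩, hα, he⟩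
    simp only at he
    have ha : a = aParam F' := congrArg Prod.fst he
    have hy : y' = y := congrArg Prod.snd he
    subst ha
    rw [← hy]
    refine ⟨(y', α), ?_, rfl⟩
    apply approx_mem hF'
    intro k
    have h := hα k
    simp only [aParam, decide_eq_true_eq] at h
    obtain ⟨p, hp, k', hk'⟩ := h
    obtain ⟨rfl, h1, h2⟩ := codek_eq hk'
    exact ⟨p, hp, fun i hi => h1 i hi, fun i hi => h2 i hi⟩
  · rintro ⟨⟨y', α⟩, hα, rfl⟩
    refine ⟨((aParam F', y'), α), ?_, rfl⟩
    intro k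
    simp only [aParam, decide_eq_true_eq]
    exact ⟨(y', α), hα, k, rfl⟩



theorem bool_eq_iff' {a b : Bool} : a = b ↔ ((a = true) ↔ (b = true)) := by
  cases a <;> cases b <;> simp

/-- unpairing (first component) -/
def pi0 (x : XX) : XX := fun q => x (2 * q.1, q.2)
/-- unpairing (second component) -/
def pi1 (x : XX) : XX := fun q => x (2 * q.1 + 1, q.2)
/-- pairing -/
def pairX (a b : XX) : XX := fun q =>
  if q.1 % 2 = 0 then a (q.1 / 2, q.2) else b (q.1 / 2, q.2)

theorem continuous_pi0 : Continuous pi0 := continuous_pi fun q => continuous_apply _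
theorem continuous_pi1 : Continuous pi1 := continuous_pi fun q => continuous_apply _

theorem pi0_pair (a b : XX) : pi0 (pairX a b) = a := by
  funext q
  have h1 : (2 * q.1) % 2 = 0 := by omega
  have h2 : (2 * q.1) / 2 = q.1 := by omega
  simp [pi0, pairX, h1, h2]

theorem pi1_pair (a b : XX) : pi1 (pairX a b) = b := by
  funext q
  have h1 : ¬ ((2 * q.1 + 1) % 2 = 0) := by omega
  have h2 : (2 * q.1 + 1) / 2 = q.1 := by omega
  simp [pi1, pairX, h1, h2]

theorem continuous_succL : Continuous succL := by
  apply continuous_pi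
  rintro ⟨(_ | m), (_ | n)⟩
  · have e : (fun L : XX => succL L (0, 0)) = fun _ => true := funext fun L => succL_top L 0
    rw [e]; exact continuous_const
  · have e : (fun L : XX => succL L (0, n + 1)) = fun _ => false :=
      funext fun L => succL_bot L n
    rw [e]; exact continuous_const
  · have e : (fun L : XX => succL L (m + 1, 0)) = fun _ => true :=
      funext fun L => succL_top L (m + 1)
    rw [e]; exact continuous_const
  · have e : (fun L : XX => succL L (m + 1, n + 1)) = fun L => L (m, n) :=
      funext fun L => succL_succ L m n
    rw [e]; exact continuous_apply _

theorem embeds_iff_noInj {A B : XX} (hA : IsLinOrd A) (hB : IsLinOrd B) :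
    OrdEmbeds B A ↔ ∃ f : ℕ → ℕ, ∀ m n, B (m, n) = A (f m, f n) := by
  constructor
  · rintro ⟨f, hinj, hf⟩
    exact ⟨f, fun m n => bool_eq_iff'.2 (hf m n)⟩
  · rintro ⟨f, hf⟩
    have hinj : Function.Injective f := by
      intro u v h
      apply hB.2.1 u v
      · rw [hf u v, h, hA.1]
      · rw [hf v u, ← h, hA.1]
    exact ⟨f, hinj, fun m n => by rw [hf m n]⟩

theorem sigma11_embeds {A B : XX → XX} (hA : Continuous A) (hB : Continuous B) :
    Sigma11 {x | ∃ f : ℕ → ℕ, ∀ m n, (B x) (m, n) = (A x) (f m, f n)} := by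
  refine ⟨{p : XX × (ℕ → ℕ) | ∀ m n, (B p.1) (m, n) = (A p.1) (p.2 m, p.2 n)}, ?_, ?_⟩
  · have e : {p : XX × (ℕ → ℕ) | ∀ m n, (B p.1) (m, n) = (A p.1) (p.2 m, p.2 n)} =
        ⋂ m, ⋂ n, {p : XX × (ℕ → ℕ) | (B p.1) (m, n) = (A p.1) (p.2 m, p.2 n)} := by
      ext p
      simp [Set.mem_iInter]
    rw [e]
    refine isClosed_iInter fun m => isClosed_iInter fun n => ?_
    apply isClosed_eq
    · exact (continuous_apply ((m, n) : ℕ × ℕ)).comp (hB.comp continuous_fst)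
    · exact continuous_eval_discrete (hA.comp continuous_fst)
        (((continuous_apply m).comp continuous_snd).prodMk
          ((continuous_apply n).comp continuous_snd))
  · ext x
    constructor
    · rintro hx
      obtain ⟨f, hf⟩ := hx
      exact ⟨(x, f), hf, rfl⟩
    · rintro ⟨⟨x', f⟩, hf, hv⟩
      simp only at hv
      subst hv
      exact ⟨f, hf⟩

/-- the Π¹₁ set P -/
def Pset : Set XX := {x | (pi0 x, x) ∉ UU}
/-- the Π¹₁ set Q -/
def Qset : Set XX := {x | (pi1 x, x) ∉ UU}

theorem sigma11_Pc : Sigma11 (Psetᶜ) := by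
  have e : Psetᶜ = (fun x => (pi0 x, x)) ⁻¹' UU := by
    ext x
    simp [Pset]
  rw [e]
  exact sigma11_UU.preimage (continuous_pi0.prodMk continuous_id)

theorem sigma11_Qc : Sigma11 (Qsetᶜ) := by
  have e : Qsetᶜ = (fun x => (pi1 x, x)) ⁻¹' UU := by
    ext x
    simp [Qset]
  rw [e]
  exact sigma11_UU.preimage (continuous_pi1.prodMk continuous_id)

/-- a linear-order representation of `P` -/
noncomputable def AP : XX → XX := LL (Classical.choose sigma11_Pc)
/-- a linear-order representation of `Q` -/
noncomputable def BQ : XX → XX := LL (Classical.choose sigma11_Qc)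

theorem AP_spec (x : XX) : x ∈ Pset ↔ IsWellOrd (AP x) := by
  obtain ⟨hc, he⟩ := Classical.choose_spec sigma11_Pc
  have := LL_spec hc x
  rw [← he] at this
  unfold AP
  simp only [Set.mem_compl_iff] at this
  constructor
  · intro hx
    by_contra hw
    exact (this.2 hw) hx
  · intro hw
    by_contra hx
    exact this.1 hx hw

theorem BQ_spec (x : XX) : x ∈ Qset ↔ IsWellOrd (BQ x) := by
  obtain ⟨hc, he⟩ := Classical.choose_spec sigma11_Qc
  have := LL_spec hc x
  rw [← he] at this
  unfold BQ
  simp only [Set.mem_compl_iff] at this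
  constructor
  · intro hx
    by_contra hw
    exact (this.2 hw) hx
  · intro hw
    by_contra hx
    exact this.1 hx hw

theorem AP_cont : Continuous AP := LL_continuous _
theorem BQ_cont : Continuous BQ := LL_continuous _
theorem AP_lin (x : XX) : IsLinOrd (AP x) := LL_lin _ _
theorem BQ_lin (x : XX) : IsLinOrd (BQ x) := LL_lin _ _

/-- reduced version of `P` -/
def Pstar : Set XX :=
  Pset ∩ {x | ¬ ∃ f : ℕ → ℕ, ∀ m n, (succL (BQ x)) (m, n) = (AP x) (f m, f n)}
/-- reduced version of `Q` -/
def Qstar : Set XX :=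
  Qset ∩ {x | ¬ ∃ f : ℕ → ℕ, ∀ m n, (AP x) (m, n) = (BQ x) (f m, f n)}

theorem sigma11_Pstarc : Sigma11 (Pstarᶜ) := by
  have e : Pstarᶜ = Psetᶜ ∪ {x | ∃ f : ℕ → ℕ, ∀ m n, (succL (BQ x)) (m, n) = (AP x) (f m, f n)} := by
    ext x
    simp only [Pstar, Set.mem_compl_iff, Set.mem_inter_iff, Set.mem_setOf_eq, Set.mem_union,
      not_and, not_not]
    tauto
  rw [e]
  exact sigma11_Pc.union (sigma11_embeds AP_cont (continuous_succL.comp BQ_cont))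

theorem sigma11_Qstarc : Sigma11 (Qstarᶜ) := by
  have e : Qstarᶜ = Qsetᶜ ∪ {x | ∃ f : ℕ → ℕ, ∀ m n, (AP x) (m, n) = (BQ x) (f m, f n)} := by
    ext x
    simp only [Qstar, Set.mem_compl_iff, Set.mem_inter_iff, Set.mem_setOf_eq, Set.mem_union,
      not_and, not_not]
    tauto
  rw [e]
  exact sigma11_Qc.union (sigma11_embeds BQ_cont AP_cont)

/-- a linear-order representation of `Pstar` -/
noncomputable def APs : XX → XX := LL (Classical.choose sigma11_Pstarc)
/-- a linear-order representation of `Qstar` -/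
noncomputable def BQs : XX → XX := LL (Classical.choose sigma11_Qstarc)

theorem APs_spec (x : XX) : x ∈ Pstar ↔ IsWellOrd (APs x) := by
  obtain ⟨hc, he⟩ := Classical.choose_spec sigma11_Pstarc
  have h := LL_spec hc x
  rw [← he] at h
  unfold APs
  simp only [Set.mem_compl_iff] at h
  constructor
  · intro hx
    by_contra hw
    exact (h.2 hw) hx
  · intro hw
    by_contra hx
    exact h.1 hx hw

theorem BQs_spec (x : XX) : x ∈ Qstar ↔ IsWellOrd (BQs x) := by
  obtain ⟨hc, he⟩ := Classical.choose_spec sigma11_Qstarc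
  have h := LL_spec hc x
  rw [← he] at h
  unfold BQs
  simp only [Set.mem_compl_iff] at h
  constructor
  · intro hx
    by_contra hw
    exact (h.2 hw) hx
  · intro hw
    by_contra hx
    exact h.1 hx hw

theorem cover {x : XX} (h : x ∈ Pset ∪ Qset) : x ∈ Pstar ∪ Qstar := by
  rcases h with hx | hx
  · by_cases hE : OrdEmbeds (succL (BQ x)) (AP x)
    · right
      have hBQwo : IsWellOrd (BQ x) :=
        embeds_wellOrd (ordEmbeds_trans (embeds_succL (BQ x)) hE) ((AP_spec x).1 hx) (BQ_lin x)
      refine ⟨(BQ_spec x).2 hBQwo, ?_⟩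
      intro hc
      have h2 : OrdEmbeds (AP x) (BQ x) := (embeds_iff_noInj (BQ_lin x) (AP_lin x)).2 hc
      exact not_embeds_both hBQwo ⟨hE, h2⟩
    · left
      refine ⟨hx, ?_⟩
      intro hc
      exact hE ((embeds_iff_noInj (AP_lin x) (isLinOrd_succL (BQ_lin x))).2 hc)
  · by_cases hE : OrdEmbeds (AP x) (BQ x)
    · left
      have hAPwo : IsWellOrd (AP x) := embeds_wellOrd hE ((BQ_spec x).1 hx) (AP_lin x)
      refine ⟨(AP_spec x).2 hAPwo, ?_⟩
      intro hc
      have h2 : OrdEmbeds (succL (BQ x)) (AP x) :=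
        (embeds_iff_noInj (AP_lin x) (isLinOrd_succL (BQ_lin x))).2 hc
      exact not_embeds_both ((BQ_spec x).1 hx) ⟨h2, hE⟩
    · right
      refine ⟨hx, fun hc => hE ((embeds_iff_noInj (BQ_lin x) (AP_lin x)).2 hc)⟩

theorem PQstar_disj {x : XX} (h1 : x ∈ Pstar) (h2 : x ∈ Qstar) : False := by
  have hA := (AP_spec x).1 h1.1
  have hB := (BQ_spec x).1 h2.1
  rcases wo_compare hA hB with h | h
  · exact h2.2 ((embeds_iff_noInj (BQ_lin x) (AP_lin x)).1 h)
  · exact h1.2 ((embeds_iff_noInj (AP_lin x) (isLinOrd_succL (BQ_lin x))).1 h)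

theorem toD1 {x : XX} (h : x ∈ Pstar) : ((APs x, BQs x) : XX × XX) ∈ Done := by
  refine ⟨LL_lin _ _, LL_lin _ _, (APs_spec x).1 h, ?_⟩
  have hq : x ∉ Qstar := fun h2 => PQstar_disj h h2
  have hnw : ¬ IsWellOrd (BQs x) := fun hw => hq ((BQs_spec x).2 hw)
  exact no_embed_of_desc ((APs_spec x).1 h) ((noWO_iff_desc (LL_lin _ _)).1 hnw)

theorem toD2 {x : XX} (h : x ∈ Qstar) : ((APs x, BQs x) : XX × XX) ∈ Dtwo := by
  refine ⟨LL_lin _ _, LL_lin _ _, (BQs_spec x).1 h, ?_⟩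
  have hp : x ∉ Pstar := fun h2 => PQstar_disj h2 h
  have hnw : ¬ IsWellOrd (APs x) := fun hw => hp ((APs_spec x).2 hw)
  exact no_embed_of_desc ((BQs_spec x).1 h) ((noWO_iff_desc (LL_lin _ _)).1 hnw)

end Sep

theorem stmt12 :
    Done ∩ Dtwo = ∅ ∧
    ¬ ∃ C : Set ((ℕ × ℕ → Bool) × (ℕ × ℕ → Bool)),
        @MeasurableSet _ (borel ((ℕ × ℕ → Bool) × (ℕ × ℕ → Bool))) C ∧
        Done ⊆ C ∧ C ∩ Dtwo = ∅ := by
  constructor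
  · exact Sep.done_inter_dtwo
  · rintro ⟨C, hC, hD1, hD2⟩
    have hCm : MeasurableSet C := by
      rw [BorelSpace.measurable_eq (α := (ℕ × ℕ → Bool) × (ℕ × ℕ → Bool))]
      exact hC
    have hΦc : Continuous (fun x : Sep.XX => ((Sep.APs x, Sep.BQs x) : Sep.XX × Sep.XX)) :=
      (Sep.LL_continuous _).prodMk (Sep.LL_continuous _)
    set Φ : Sep.XX → Sep.XX × Sep.XX := fun x => (Sep.APs x, Sep.BQs x) with hΦ
    have hSm : MeasurableSet (Φ ⁻¹' C) := hCm.preimage hΦc.measurable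
    have : TopologicalSpace.IsCompletelyMetrizableSpace (ℕ × ℕ → Bool) :=
      TopologicalSpace.IsCompletelyMetrizableSpace.pi_countable
    obtain ⟨FS, hFSc, hFSe⟩ := Sep.sigma11_of_analytic hSm.analyticSet
    obtain ⟨FT, hFTc, hFTe⟩ := Sep.sigma11_of_analytic hSm.compl.analyticSet
    set z : Sep.XX := Sep.pairX (Sep.aParam FS) (Sep.aParam FT) with hz
    have hzP : z ∈ Sep.Pset ↔ Φ z ∉ C := by
      have h0 : (Sep.pi0 z, z) ∈ Sep.UU ↔ z ∈ Φ ⁻¹' C := by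
        rw [hz, Sep.pi0_pair, Sep.UU_section hFSc, ← hFSe]
      simp only [Sep.Pset, Set.mem_setOf_eq]
      rw [h0]
      simp [Set.mem_preimage]
    have hzQ : z ∈ Sep.Qset ↔ Φ z ∈ C := by
      have h0 : (Sep.pi1 z, z) ∈ Sep.UU ↔ z ∈ (Φ ⁻¹' C)ᶜ := by
        rw [hz, Sep.pi1_pair, Sep.UU_section hFTc, ← hFTe]
      simp only [Sep.Qset, Set.mem_setOf_eq]
      rw [h0]
      simp [Set.mem_preimage]
    by_cases hzC : Φ z ∈ C
    · rcases Sep.cover (Or.inr (hzQ.2 hzC)) with hp | hq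
      · exact (hzP.1 hp.1) hzC
      · have hmem : Φ z ∈ C ∩ Dtwo := ⟨hzC, Sep.toD2 hq⟩
        rw [hD2] at hmem
        exact hmem
    · rcases Sep.cover (Or.inl (hzP.2 hzC)) with hp | hq
      · exact hzC (hD1 (Sep.toD1 hp))
      · exact hzC (hzQ.1 hq.1)
end

section
/- Let LO ⊆ 2^{ω×ω} be the set of (characteristic functions of) linear orderings of ℕ, and WO ⊆ LO the set of well-orderings. For every coanalytic set A ⊆ 2^ω there exists a continuous function f : 2^ω → 2^{ω×ω} with f(x) ∈ LO for all x and f⁻¹(WO) = A. -/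
open Function Set

noncomputable section KBsec

/-- Coding of finite sequences by naturals. -/
def ee : ℕ ≃ List ℕ := (Denumerable.eqv (List ℕ)).symm

/-- The function underlying the lex embedding: pad a finite sequence with `⊤`. -/
def embf (s : List ℕ) (i : ℕ) : ℕ∞ :=
  if h : i < s.length then (s[i] : ℕ∞) else ⊤

/-- Embedding of finite sequences into the lexicographic order on `ℕ → ℕ∞`.
`emb s < emb t` is the Kleene–Brouwer order. -/
def emb (s : List ℕ) : Lex (ℕ → ℕ∞) := toLex (embf s)

lemma emb_lt_def {s t : List ℕ} :
    emb s < emb t ↔ ∃ i, (∀ j, j < i → embf s j = embf t j) ∧ embf s i < embf t i :=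
  Iff.rfl

lemma embf_eq_coe {s : List ℕ} {i : ℕ} (h : i < s.length) : embf s i = (s[i] : ℕ∞) :=
  dif_pos h

lemma embf_eq_top {s : List ℕ} {i : ℕ} (h : ¬ i < s.length) : embf s i = ⊤ :=
  dif_neg h

lemma embf_injective : Function.Injective embf := by
  intro s t h
  have hlen : s.length = t.length := by
    by_contra hne
    rcases Nat.lt_or_ge s.length t.length with hl | hl
    · have := congrFun h s.length
      rw [embf_eq_top (lt_irrefl _), embf_eq_coe hl] at this
      exact (WithTop.coe_ne_top (this.symm)).elim
    · rcases lt_or_eq_of_le hl with hl | hl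
      · have := congrFun h t.length
        rw [embf_eq_top (lt_irrefl _), embf_eq_coe hl] at this
        exact (WithTop.coe_ne_top this).elim
      · exact hne hl.symm
  apply List.ext_getElem hlen
  intro i h1 h2
  have := congrFun h i
  rw [embf_eq_coe h1, embf_eq_coe h2] at this
  exact_mod_cast this

lemma emb_injective : Function.Injective emb := fun s t h => embf_injective h

/-- A proper extension is KB-smaller. -/
lemma emb_lt_of_prefix {s t : List ℕ} (hp : t <+: s) (hne : t ≠ s) : emb s < emb t := by
  have hlt : t.length < s.length := by
    rcases lt_or_eq_of_le hp.length_le with h | h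
    · exact h
    · exact absurd (hp.eq_of_length h) hne
  refine emb_lt_def.mpr ⟨t.length, fun j hj => ?_, ?_⟩
  · rw [embf_eq_coe (hj.trans hlt), embf_eq_coe hj, hp.getElem hj]
  · rw [embf_eq_coe hlt, embf_eq_top (lt_irrefl _)]
    exact WithTop.coe_lt_top _

lemma ne_nil_of_emb_lt {s t : List ℕ} (h : emb s < emb t) : s ≠ [] := by
  rintro rfl
  obtain ⟨i, -, hi⟩ := emb_lt_def.mp h
  rw [embf_eq_top (by simp)] at hi
  exact not_top_lt hi

lemma exists_eventually_const (c : ℕ → ℕ) (hc : ∀ n, c (n + 1) ≤ c n) :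
    ∃ M, ∀ n, M ≤ n → c n = c M := by
  have hmono : ∀ m n, m ≤ n → c n ≤ c m := by
    intro m n h
    induction n, h using Nat.le_induction with
    | base => exact le_refl _
    | succ n hn ih => exact (hc n).trans ih
  obtain ⟨a, ⟨M, rfl⟩, hmin⟩ := Nat.lt_wfRel.wf.has_min (Set.range c) ⟨c 0, 0, rfl⟩
  exact ⟨M, fun n hn => le_antisymm (hmono M n hn) (not_lt.mp (hmin (c n) ⟨n, rfl⟩))⟩

lemma emb_chain {s : ℕ → List ℕ} (hd : ∀ n, emb (s (n + 1)) < emb (s n)) :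
    ∀ m n, n < m → emb (s m) < emb (s n) := by
  intro m n h
  induction m, h using Nat.le_induction with
  | base => exact hd n
  | succ m hm ih => exact (hd m).trans ih

/-- Stabilization step: if all members of a KB-descending sequence properly
extend `u`, then eventually they all properly extend `u ++ [a]` for some `a`. -/
lemma kb_step (s : ℕ → List ℕ) (hd : ∀ n, emb (s (n + 1)) < emb (s n))
    (u : List ℕ) (hu : ∀ n, u <+: s n ∧ u ≠ s n) :
    ∃ N a, ∀ n, N ≤ n → (u ++ [a]) <+: s n ∧ u ++ [a] ≠ s n := by
  have hlen : ∀ n, u.length < (s n).length := by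
    intro n
    rcases lt_or_eq_of_le (hu n).1.length_le with h | h
    · exact h
    · exact absurd ((hu n).1.eq_of_length h) (hu n).2
  set c : ℕ → ℕ := fun n => (s n).getD u.length 0 with hcdef
  have hcg : ∀ n, (c n : ℕ∞) = embf (s n) u.length := by
    intro n
    rw [embf_eq_coe (hlen n), hcdef]
    simp [List.getD_eq_getElem, hlen n]
  have hagree : ∀ n j, j < u.length → embf (s n) j = ((u.getD j 0 : ℕ) : ℕ∞) := by
    intro n j hj
    rw [embf_eq_coe (hj.trans (hlen n)), ← (hu n).1.getElem hj]
    simp [List.getD_eq_getElem, hj]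
  have hmono : ∀ n, c (n + 1) ≤ c n := by
    intro n
    obtain ⟨i, hagr, hlt⟩ := emb_lt_def.mp (hd n)
    rcases lt_trichotomy i u.length with hi | hi | hi
    · rw [hagree (n+1) i hi, hagree n i hi] at hlt
      exact absurd hlt (lt_irrefl _)
    · subst hi
      rw [← hcg, ← hcg] at hlt
      exact le_of_lt (WithTop.coe_lt_coe.mp hlt)
    · have := hagr u.length hi
      rw [← hcg, ← hcg] at this
      exact le_of_eq (WithTop.coe_inj.mp this)
  obtain ⟨M, hM⟩ := exists_eventually_const c hmono
  set a := c M with hadef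
  have hpref : ∀ n, M ≤ n → (u ++ [a]) <+: s n := by
    intro n hn
    obtain ⟨r, hr⟩ := (hu n).1
    rcases r with _ | ⟨b, r'⟩
    · exact absurd (by simpa using hr) (hu n).2
    · have hb : b = a := by
        have h1 : c n = b := by
          show (s n).getD u.length 0 = b
          rw [← hr]
          rw [List.getD_eq_getElem _ _ (by simp), List.getElem_append_right (le_refl _)]
          simp
        rw [← h1, hM n hn]
      refine ⟨r', ?_⟩
      rw [← hr, hb]
      simp
  by_cases hex : ∃ n, M ≤ n ∧ s n = u ++ [a]
  · obtain ⟨n₀, hn₀, he⟩ := hex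
    refine ⟨n₀ + 1, a, fun n hn => ⟨hpref n (by omega), fun hne => ?_⟩⟩
    have := emb_chain hd n n₀ (by omega)
    rw [← hne, ← he] at this
    exact absurd this (lt_irrefl _)
  · exact ⟨M, a, fun n hn => ⟨hpref n hn, fun hne => hex ⟨n, hn, hne.symm⟩⟩⟩

lemma ofFn_succ_concat (y : ℕ → ℕ) (k : ℕ) :
    (List.ofFn fun i : Fin (k + 1) => y i) = (List.ofFn fun i : Fin k => y i) ++ [y k] := by
  rw [List.ofFn_succ']
  simp [List.concat_eq_append]

/-- A KB-descending sequence through a tree yields an infinite branch. -/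
lemma exists_branch (T : List ℕ → Prop) (hT : ∀ s t, t <+: s → T s → T t)
    (s : ℕ → List ℕ) (hsT : ∀ n, T (s n)) (hd : ∀ n, emb (s (n + 1)) < emb (s n)) :
    ∃ y : ℕ → ℕ, ∀ n : ℕ, T (List.ofFn fun i : Fin n => y i) := by
  have claim : ∀ k : ℕ, ∃ Nu : ℕ × List ℕ, Nu.2.length = k ∧
      ∀ n, Nu.1 ≤ n → Nu.2 <+: s n ∧ Nu.2 ≠ s n := by
    intro k
    induction k with
    | zero =>
      refine ⟨(1, []), rfl, fun n hn => ⟨List.nil_prefix, ?_⟩⟩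
      rcases n with _ | m
      · omega
      · exact (ne_nil_of_emb_lt (hd m)).symm
    | succ k ih =>
      obtain ⟨⟨N, u⟩, hlen, hu⟩ := ih
      obtain ⟨N', a, h'⟩ := kb_step (fun n => s (N + n)) (fun n => hd (N + n))
        u (fun n => hu (N + n) (by omega))
      refine ⟨(N + N', u ++ [a]), by simp [hlen], fun n hn => ?_⟩
      have := h' (n - N) (by omega)
      have he : N + (n - N) = n := by omega
      rw [he] at this
      exact this
  choose U hUlen hU using claim
  set u : ℕ → List ℕ := fun k => (U k).2 with hudef
  have hpref : ∀ k, u k <+: u (k + 1) := by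
    intro k
    have h1 := hU k (max (U k).1 (U (k+1)).1) (le_max_left _ _)
    have h2 := hU (k+1) (max (U k).1 (U (k+1)).1) (le_max_right _ _)
    exact List.prefix_of_prefix_length_le h1.1 h2.1 (by rw [hUlen, hUlen]; omega)
  set y : ℕ → ℕ := fun k => (u (k + 1)).getD k 0 with hydef
  have hofFn : ∀ k, (List.ofFn fun i : Fin k => y i) = u k := by
    intro k
    induction k with
    | zero =>
      simp only [List.ofFn_zero]
      exact (List.eq_nil_of_length_eq_zero (hUlen 0)).symm
    | succ k ih =>
      rw [ofFn_succ_concat, ih]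
      obtain ⟨r, hr⟩ := hpref k
      have hrlen : r.length = 1 := by
        have := congrArg List.length hr
        simp only [List.length_append] at this
        rw [hUlen, hUlen] at this
        omega
      rcases r with _ | ⟨b, r'⟩
      · simp at hrlen
      · have hr' : r' = [] := by
          simpa using hrlen
        subst hr'
        have hb : y k = b := by
          rw [hydef]
          show (u (k+1)).getD k 0 = b
          rw [← hr, List.getD_eq_getElem _ _ (by simp; exact (hUlen k).ge),
            List.getElem_append_right (by rw [hUlen k])]
          simp [hUlen k]
        rw [hb, hr]
  refine ⟨y, fun n => ?_⟩
  rw [hofFn n]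
  exact hT (s (U n).1) (u n) (hU n (U n).1 (le_refl _)).1 (hsT (U n).1)

/-- The tree of finite attempts to realize `x` as a value of `g`. -/
def inT (g : (ℕ → ℕ) → ℕ → Bool) (x : ℕ → Bool) (s : List ℕ) : Prop :=
  ∃ y : ℕ → ℕ, (∀ i, i < s.length → g y i = x i) ∧ ∀ i (h : i < s.length), y i = s[i]

lemma inT_mono {g x} {s t : List ℕ} (hp : t <+: s) (h : inT g x s) : inT g x t := by
  obtain ⟨y, h1, h2⟩ := h
  refine ⟨y, fun i hi => h1 i (hi.trans_le hp.length_le), fun i hi => ?_⟩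
  rw [hp.getElem hi]
  exact h2 i (hi.trans_le hp.length_le)

lemma inT_congr {g x x'} {s : List ℕ} (h : ∀ i, i < s.length → x i = x' i) :
    inT g x s ↔ inT g x' s := by
  constructor <;> intro ⟨y, h1, h2⟩
  · exact ⟨y, fun i hi => (h1 i hi).trans (h i hi), h2⟩
  · exact ⟨y, fun i hi => (h1 i hi).trans (h i hi).symm, h2⟩

/-- The linear order on ℕ coding the Kleene–Brouwer order on the tree of `x`,
with non-tree elements on top in the usual order of ℕ. -/
def KRel (g : (ℕ → ℕ) → ℕ → Bool) (x : ℕ → Bool) (m n : ℕ) : Prop :=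
  (inT g x (ee m) ∧ inT g x (ee n) ∧ emb (ee m) ≤ emb (ee n)) ∨
  (inT g x (ee m) ∧ ¬ inT g x (ee n)) ∨
  (¬ inT g x (ee m) ∧ ¬ inT g x (ee n) ∧ m ≤ n)

lemma rel_refl (g x m) : KRel g x m m := by
  by_cases h : inT g x (ee m)
  · exact Or.inl ⟨h, h, le_refl _⟩
  · exact Or.inr (Or.inr ⟨h, h, le_refl _⟩)

lemma rel_antisymm {g x m n} (h1 : KRel g x m n) (h2 : KRel g x n m) : m = n := by
  rcases h1 with ⟨hm, hn, hle⟩ | ⟨hm, hn⟩ | ⟨hm, hn, hle⟩ <;>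
    rcases h2 with ⟨hn', hm', hle'⟩ | ⟨hn', hm'⟩ | ⟨hn', hm', hle'⟩ <;>
    first
      | exact absurd hn' hn | exact absurd hn hn'
      | exact absurd hm' hm | exact absurd hm hm'
      | exact ee.injective (emb_injective (le_antisymm hle hle'))
      | omega

lemma rel_trans {g x m n p} (h1 : KRel g x m n) (h2 : KRel g x n p) : KRel g x m p := by
  rcases h1 with ⟨hm, hn, hle⟩ | ⟨hm, hn⟩ | ⟨hm, hn, hle⟩ <;>
    rcases h2 with ⟨hn', hp, hle'⟩ | ⟨hn', hp⟩ | ⟨hn', hp, hle'⟩ <;>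
    first
      | exact absurd hn' hn | exact absurd hn hn'
      | exact Or.inl ⟨hm, hp, le_trans hle hle'⟩
      | exact Or.inr (Or.inl ⟨hm, hp⟩)
      | exact Or.inr (Or.inr ⟨hm, hp, le_trans hle hle'⟩)

lemma rel_total (g x m n) : KRel g x m n ∨ KRel g x n m := by
  by_cases h1 : inT g x (ee m) <;> by_cases h2 : inT g x (ee n)
  · rcases le_total (emb (ee m)) (emb (ee n)) with h | h
    · exact Or.inl (Or.inl ⟨h1, h2, h⟩)
    · exact Or.inr (Or.inl ⟨h2, h1, h⟩)
  · exact Or.inl (Or.inr (Or.inl ⟨h1, h2⟩))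
  · exact Or.inr (Or.inr (Or.inl ⟨h2, h1⟩))
  · rcases le_total m n with h | h
    · exact Or.inl (Or.inr (Or.inr ⟨h1, h2, h⟩))
    · exact Or.inr (Or.inr (Or.inr ⟨h2, h1, h⟩))

lemma rel_congr_KB {g x x' m n} (h : ∀ i, i < max (ee m).length (ee n).length → x i = x' i) :
    KRel g x m n ↔ KRel g x' m n := by
  have e1 : inT g x (ee m) ↔ inT g x' (ee m) :=
    inT_congr (fun i hi => h i (lt_of_lt_of_le hi (le_max_left _ _)))
  have e2 : inT g x (ee n) ↔ inT g x' (ee n) :=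
    inT_congr (fun i hi => h i (lt_of_lt_of_le hi (le_max_right _ _)))
  unfold KRel
  rw [e1, e2]

open Classical in
/-- The reduction function. -/
noncomputable def KBfun (g : (ℕ → ℕ) → ℕ → Bool) (x : ℕ → Bool) : ℕ × ℕ → Bool :=
  fun p => decide (KRel g x p.1 p.2)

lemma kb_iff {g x} (p : ℕ × ℕ) : KBfun g x p = true ↔ KRel g x p.1 p.2 := by
  simp [KBfun]

lemma KBfun_linOrd (g x) : IsLinOrd (KBfun g x) := by
  refine ⟨fun n => (kb_iff _).mpr (rel_refl g x n),
    fun m n h1 h2 => rel_antisymm ((kb_iff _).mp h1) ((kb_iff _).mp h2),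
    fun m n p h1 h2 => (kb_iff (m, p)).mpr (rel_trans ((kb_iff (m, n)).mp h1) ((kb_iff (n, p)).mp h2)),
    fun m n => ?_⟩
  rcases rel_total g x m n with h | h
  · exact Or.inl ((kb_iff _).mpr h)
  · exact Or.inr ((kb_iff _).mpr h)

lemma KBfun_continuous (g) : Continuous (KBfun g) := by
  apply continuous_pi
  intro p
  set k := max (ee p.1).length (ee p.2).length with hk
  have hfac : (fun x => KBfun g x p) =
      (fun v : Fin k → Bool =>
        KBfun g (fun i => if h : i < k then v ⟨i, h⟩ else false) p) ∘
      (fun x (i : Fin k) => x i.1) := by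
    funext x
    simp only [Function.comp]
    have := rel_congr_KB (g := g) (x := x)
      (x' := fun i => if h : i < k then x i else false) (m := p.1) (n := p.2)
      (fun i hi => by
        show x i = if h : i < k then x i else false
        rw [dif_pos (show i < k from hi)])
    simp only [KBfun]
    congr 1
    rw [eq_iff_iff]
    convert this using 2
  rw [hfac]
  exact (continuous_of_discreteTopology).comp (continuous_pi fun i => continuous_apply i.1)

lemma glimit {g : (ℕ → ℕ) → ℕ → Bool} (hg : Continuous g) (x : ℕ → Bool) (y : ℕ → ℕ)
    (hy : ∀ n : ℕ, inT g x (List.ofFn fun i : Fin n => y i)) : g y = x := by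
  funext i
  have hopen : IsOpen {z : ℕ → ℕ | g z i = g y i} :=
    ((continuous_apply i).comp hg).isOpen_preimage {g y i} (isOpen_discrete _)
  obtain ⟨I, u, hIu, hsub⟩ := isOpen_pi_iff.mp hopen y rfl
  set n := max (I.sup id + 1) (i + 1) with hn
  obtain ⟨z, hz1, hz2⟩ := hy n
  have hzy : ∀ j ∈ I, z j = y j := by
    intro j hj
    have hjn : j < n := by
      have := Finset.le_sup (f := id) hj
      simp only [id] at this
      omega
    have := hz2 j (by simpa using hjn)
    rw [this, List.getElem_ofFn]
  have hzU : z ∈ {z : ℕ → ℕ | g z i = g y i} := by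
    apply hsub
    intro j hj
    rw [hzy j hj]
    exact (hIu j hj).2
  have hzx : g z i = x i := hz1 i (by simp [hn])
  rw [← hzU, hzx]

lemma not_wellOrd {g : (ℕ → ℕ) → ℕ → Bool} {x : ℕ → Bool} (h : ∃ y, g y = x) :
    ¬ IsWellOrd (KBfun g x) := by
  obtain ⟨y, hy⟩ := h
  rintro ⟨-, hleast⟩
  set u : ℕ → List ℕ := fun n => List.ofFn fun i : Fin n => y i with hu
  have hinT : ∀ n, inT g x (u n) := by
    intro n
    refine ⟨y, fun i hi => by rw [hy], fun i hi => ?_⟩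
    rw [List.getElem_ofFn]
  have hpref : ∀ n, u n <+: u (n + 1) ∧ u n ≠ u (n + 1) := by
    intro n
    constructor
    · exact ⟨[y n], (ofFn_succ_concat y n).symm⟩
    · intro he
      have := congrArg List.length he
      simp only [hu, List.length_ofFn] at this
      omega
  obtain ⟨m, ⟨n, rfl⟩, hm⟩ := hleast {m | ∃ n, m = ee.symm (u n)} ⟨ee.symm (u 0), 0, rfl⟩
  have h2 := hm (ee.symm (u (n + 1))) ⟨n + 1, rfl⟩
  have h3 := (kb_iff _).mp h2
  have hlt : emb (u (n + 1)) < emb (u n) :=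
    emb_lt_of_prefix (hpref n).1 (hpref n).2
  rcases h3 with ⟨h4, h5, h6⟩ | ⟨h4, h5⟩ | ⟨h4, h5, h6⟩
  · rw [Equiv.apply_symm_apply, Equiv.apply_symm_apply] at h6
    exact absurd h6 (not_le_of_gt hlt)
  · rw [Equiv.apply_symm_apply] at h5
    exact h5 (hinT (n + 1))
  · rw [Equiv.apply_symm_apply] at h4
    exact h4 (hinT n)

lemma wellOrd {g : (ℕ → ℕ) → ℕ → Bool} (hg : Continuous g) {x : ℕ → Bool}
    (h : ¬ ∃ y, g y = x) : IsWellOrd (KBfun g x) := by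
  refine ⟨KBfun_linOrd g x, fun S hS => ?_⟩
  by_contra hno
  push_neg at hno
  have hstep : ∀ n, n ∈ S → ∃ m, m ∈ S ∧ ¬ KRel g x n m := by
    intro n hn
    obtain ⟨m, hm1, hm2⟩ := hno n hn
    exact ⟨m, hm1, fun hr => hm2 ((kb_iff _).mpr hr)⟩
  obtain ⟨n₀, hn₀⟩ := hS
  let v : ℕ → {n : ℕ // n ∈ S} := fun k =>
    Nat.rec ⟨n₀, hn₀⟩
      (fun _ p => ⟨(hstep p.1 p.2).choose, (hstep p.1 p.2).choose_spec.1⟩) k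
  have hv : ∀ k, ¬ KRel g x (v k).1 (v (k + 1)).1 := by
    intro k
    exact (hstep (v k).1 (v k).2).choose_spec.2
  have hrel : ∀ k, KRel g x (v (k + 1)).1 (v k).1 := by
    intro k
    rcases rel_total g x (v k).1 (v (k + 1)).1 with hr | hr
    · exact absurd hr (hv k)
    · exact hr
  by_cases hall : ∀ k, ¬ inT g x (ee (v k).1)
  · -- all outside the tree: strictly descending in ℕ, impossible
    have hdec : ∀ k, (v (k + 1)).1 < (v k).1 := by
      intro k
      rcases hrel k with ⟨h1, h2, h3⟩ | ⟨h1, h2⟩ | ⟨h1, h2, h3⟩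
      · exact absurd h1 (hall (k + 1))
      · exact absurd h1 (hall (k + 1))
      · rcases lt_or_eq_of_le h3 with h4 | h4
        · exact h4
        · exact absurd (h4 ▸ rel_refl g x (v k).1) (h4 ▸ hv k)
    have hsum : ∀ k, (v k).1 + k ≤ (v 0).1 := by
      intro k
      induction k with
      | zero => omega
      | succ k ih => have := hdec k; omega
    have := hsum ((v 0).1 + 1)
    omega
  · push_neg at hall
    obtain ⟨k₀, hk₀⟩ := hall
    have hper : ∀ j, inT g x (ee (v (k₀ + j)).1) := by
      intro j
      induction j with
      | zero => exact hk₀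
      | succ j ih =>
        rcases hrel (k₀ + j) with ⟨h1, h2, h3⟩ | ⟨h1, h2⟩ | ⟨h1, h2, h3⟩
        · exact h1
        · exact absurd ih h2
        · exact absurd ih h2
    have hdesc : ∀ j, emb (ee (v (k₀ + (j + 1))).1) < emb (ee (v (k₀ + j)).1) := by
      intro j
      rcases hrel (k₀ + j) with ⟨h1, h2, h3⟩ | ⟨h1, h2⟩ | ⟨h1, h2, h3⟩
      · -- strictness from hv
        rcases lt_or_eq_of_le h3 with h4 | h4
        · exact h4
        · exfalso
          apply hv (k₀ + j)
          exact Or.inl ⟨hper j, hper (j + 1), le_of_eq h4.symm⟩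
      · exact absurd (hper j) h2
      · exact absurd (hper j) h2
    obtain ⟨y, hy⟩ := exists_branch (inT g x) (fun s t hp hs => inT_mono hp hs)
      (fun j => ee (v (k₀ + j)).1) (fun j => hper j) hdesc
    exact h ⟨y, glimit hg x y hy⟩

/-- For every coanalytic subset A of Cantor space there is a continuous map into the
linear orderings of ℕ pulling back the well-orderings to exactly A. -/
theorem stmt13 (A : Set (ℕ → Bool)) (hA : MeasureTheory.AnalyticSet Aᶜ) :
    ∃ f : (ℕ → Bool) → (ℕ × ℕ → Bool), Continuous f ∧
      (∀ x, IsLinOrd (f x)) ∧ f ⁻¹' {L | IsWellOrd L} = A := by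
  rw [MeasureTheory.AnalyticSet_def] at hA
  rcases hA with hA | ⟨g, hgc, hgr⟩
  · -- `Aᶜ = ∅`: use the standard order on ℕ, a well-order, constantly
    have hAuniv : A = Set.univ := Set.compl_empty_iff.mp hA
    refine ⟨fun _ p => decide (p.1 ≤ p.2), continuous_const, fun x => ?_, ?_⟩
    · refine ⟨fun n => by simp, fun m n h1 h2 => ?_, fun m n p h1 h2 => ?_, fun m n => ?_⟩
      · simp at h1 h2; omega
      · simp at h1 h2 ⊢; omega
      · simp; omega
    · rw [hAuniv]
      ext x
      simp only [Set.mem_preimage, Set.mem_setOf_eq, Set.mem_univ, iff_true]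
      refine ⟨⟨fun n => by simp, fun m n h1 h2 => by simp at h1 h2; omega,
        fun m n p h1 h2 => by simp at h1 h2 ⊢; omega, fun m n => by simp; omega⟩,
        fun S hS => ?_⟩
      obtain ⟨n, hn, hmin⟩ := Nat.lt_wfRel.wf.has_min S hS
      refine ⟨n, hn, fun m hm => ?_⟩
      simp
      exact not_lt.mp (hmin m hm)
  · refine ⟨KBfun g, KBfun_continuous g, KBfun_linOrd g, ?_⟩
    ext x
    simp only [Set.mem_preimage, Set.mem_setOf_eq]
    constructor
    · intro hwo
      by_contra hxA
      have hx : x ∈ Aᶜ := hxA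
      rw [← hgr] at hx
      obtain ⟨y, hy⟩ := hx
      exact not_wellOrd ⟨y, hy⟩ hwo
    · intro hxA
      apply wellOrd hgc
      rintro ⟨y, hy⟩
      have hx : x ∈ Aᶜ := by rw [← hgr]; exact ⟨y, hy⟩
      exact hx hxA
end KBsec
end

section
/- Work in the Cantor space 2^{ω^{<ω}} of subsets of ω^{<ω}. Let W₁ = {A ⊆ ω^{<ω} : there is no f ∈ ℕ^ℕ with f↾n ∈ A for infinitely many n}, W₂ = {A ⊆ ω^{<ω} : there is no f ∈ ℕ^ℕ such that for infinitely many n there exists s ⊇ f↾n with s ∈ A}, and NWD = {A ⊆ ω^{<ω} : for every s ∈ ω^{<ω} there exists t ⊇ s such that every r ⊇ t satisfies r ∉ A}. Then W₁ ⊆ NWD and W₂ ⊆ NWD; NWD is a Borel subset of 2^{ω^{<ω}}; and no A ⊆ ω^{<ω} satisfies both A ∈ NWD and (ω^{<ω} \ A) ∈ NWD. Consequently, for i = 1, 2, the Borel set NWD separates the ideal W_i from its dual filter {ω^{<ω} \ A : A ∈ W_i}. -/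
/-- W₁: the ideal of well-founded subrelations of `ω^{<ω}` (as characteristic
functions): no branch `f` has infinitely many initial segments in `A`. -/
def Wone : Set (List ℕ → Bool) :=
  {A | ¬ ∃ f : ℕ → ℕ, {n | A (List.ofFn fun i : Fin n => f i) = true}.Infinite}

/-- W₂: the ideal generated by well-founded subtrees: there is no branch `f` such
that for infinitely many `n` some extension of `f↾n` is in `A`. -/
def Wtwo : Set (List ℕ → Bool) :=
  {A | ¬ ∃ f : ℕ → ℕ,
    {n | ∃ s : List ℕ, (List.ofFn fun i : Fin n => f i) <+: s ∧ A s = true}.Infinite}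

/-- NWD: the ideal of nowhere dense subsets of `ω^{<ω}`: every `s` has an extension
`t` all of whose extensions avoid `A`. -/
def NWD : Set (List ℕ → Bool) :=
  {A | ∀ s : List ℕ, ∃ t : List ℕ, s <+: t ∧ ∀ r : List ℕ, t <+: r → A r = false}

/-! If `A` is somewhere dense, say every extension of `s` has an extension in `A`, then extending
step by step inside `A` builds a branch with infinitely many initial segments in `A`; hence
`W₂ ⊆ W₁ ⊆ NWD`. Being nowhere dense is a countable Boolean combination of closed conditions, and a
set and its complement cannot both be nowhere dense. -/

section PrefixChain

variable {α : Type*}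

theorem prefix_of_le_of_prefix_succ {L : ℕ → List α} (hL : ∀ n, L n <+: L (n + 1))
    {m n : ℕ} (hmn : m ≤ n) : L m <+: L n := by
  induction n, hmn using Nat.le_induction with
  | base => exact List.prefix_refl _
  | succ n _ ih => exact ih.trans (hL n)

theorem exists_ofFn_eq_of_prefix_succ [Inhabited α] {L : ℕ → List α}
    (hL : ∀ n, L n <+: L (n + 1)) (hlen : ∀ n, n ≤ (L n).length) :
    ∃ f : ℕ → α, ∀ n, List.ofFn (fun i : Fin (L n).length => f i) = L n := by
  refine ⟨fun i => (L (i + 1)).getD i default,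
    fun n => List.ext_getElem (by simp) fun i _ hi => ?_⟩
  have hi' : i < (L (i + 1)).length := hlen (i + 1)
  simp only [List.getElem_ofFn, List.getD_eq_getElem _ _ hi']
  rcases le_total (i + 1) n with h | h
  · exact (prefix_of_le_of_prefix_succ hL h).getElem hi'
  · exact ((prefix_of_le_of_prefix_succ hL h).getElem hi).symm

theorem exists_infinite_setOf_ofFn_of_dense [Inhabited α] {P : List α → Prop} {s : List α}
    (hP : ∀ t, s <+: t → ∃ r, t <+: r ∧ P r) :
    ∃ f : ℕ → α, {n | P (List.ofFn fun i : Fin n => f i)}.Infinite := by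
  have hP' : ∀ t, ∃ r, s <+: t → t <+: r ∧ P r := fun t => by
    by_cases ht : s <+: t
    · exact (hP t ht).imp fun _ hr _ => hr
    · exact ⟨t, fun h => absurd h ht⟩
  choose g hg using hP'
  -- appending `default` before each extension makes the lengths grow strictly
  set L : ℕ → List α := fun n => (fun t => g (t ++ [default]))^[n] s with hL
  have hstep : ∀ n, s <+: L n → L n ++ [default] <+: L (n + 1) ∧ P (L (n + 1)) := fun n hn => by
    simpa only [hL, Function.iterate_succ_apply'] using
      hg _ (hn.trans (List.prefix_append _ _))
  have hs : ∀ n, s <+: L n := fun n => by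
    induction n with
    | zero => exact List.prefix_refl s
    | succ n ih => exact (ih.trans (List.prefix_append _ _)).trans (hstep n ih).1
  have hchain : ∀ n, L n <+: L (n + 1) := fun n =>
    (List.prefix_append _ _).trans (hstep n (hs n)).1
  have hmono : StrictMono fun n => (L n).length := strictMono_nat_of_lt_succ fun n => by
    simpa using (hstep n (hs n)).1.length_le
  obtain ⟨f, hf⟩ := exists_ofFn_eq_of_prefix_succ hchain hmono.id_le
  refine ⟨f, Set.infinite_of_injective_forall_mem (f := fun n => (L (n + 1)).length)
    (hmono.injective.comp Nat.succ_injective) fun n => ?_⟩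
  change P (List.ofFn fun i : Fin (L (n + 1)).length => f i)
  rw [hf]
  exact (hstep n (hs n)).2

end PrefixChain

theorem isClosed_setOf_forall_eq_false {α : Type*} (p : α → Prop) :
    IsClosed {A : α → Bool | ∀ r, p r → A r = false} := by
  simp only [Set.ofPred_forall]
  exact isClosed_iInter fun r => isClosed_iInter fun _ =>
    isClosed_eq (continuous_apply r) continuous_const

theorem wtwo_subset_wone : Wtwo ⊆ Wone := fun _ hA ⟨f, hf⟩ =>
  hA ⟨f, hf.mono fun _ hn => ⟨_, List.prefix_refl _, hn⟩⟩

theorem wone_subset_nwd : Wone ⊆ NWD := by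
  intro A hA
  by_contra hA'
  simp only [NWD, Set.mem_ofPred_eq, not_forall, not_exists, not_and,
    Bool.not_eq_false, exists_prop] at hA'
  obtain ⟨s, hs⟩ := hA'
  exact hA (exists_infinite_setOf_ofFn_of_dense hs)

theorem measurableSet_nwd : @MeasurableSet (List ℕ → Bool) (borel (List ℕ → Bool)) NWD := by
  borelize (List ℕ → Bool)
  have hNWD : NWD = ⋂ s, ⋃ t, ⋃ (_ : s <+: t),
      {A : List ℕ → Bool | ∀ r, t <+: r → A r = false} := by
    ext A
    simp [NWD]
  rw [hNWD]
  exact .iInter fun s => .iUnion fun t => .iUnion fun _ =>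
    (isClosed_setOf_forall_eq_false _).measurableSet

theorem bnot_notMem_nwd {A : List ℕ → Bool} (hA : A ∈ NWD) : (fun s => !A s) ∉ NWD := by
  intro hA'
  obtain ⟨t, -, ht⟩ := hA []
  obtain ⟨r, htr, hr⟩ := hA' t
  simpa [ht r htr] using hr r (List.prefix_refl r)

theorem stmt14 :
    Wone ⊆ NWD ∧ Wtwo ⊆ NWD ∧
    @MeasurableSet (List ℕ → Bool) (borel (List ℕ → Bool)) NWD ∧
    (¬ ∃ A : List ℕ → Bool, A ∈ NWD ∧ (fun s => ! A s) ∈ NWD) ∧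
    (NWD ∩ {A | (fun s => ! A s) ∈ Wone} = ∅) ∧
    (NWD ∩ {A | (fun s => ! A s) ∈ Wtwo} = ∅) := by
  have hW₁ : Wone ⊆ NWD := wone_subset_nwd
  have hW₂ : Wtwo ⊆ NWD := wtwo_subset_wone.trans hW₁
  refine ⟨hW₁, hW₂, measurableSet_nwd, fun ⟨_, hA, hA'⟩ => bnot_notMem_nwd hA hA', ?_, ?_⟩
  · exact Set.eq_empty_of_forall_notMem fun _ ⟨hA, hA'⟩ => bnot_notMem_nwd hA (hW₁ hA')
  · exact Set.eq_empty_of_forall_notMem fun _ ⟨hA, hA'⟩ => bnot_notMem_nwd hA (hW₂ hA')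
end
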